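/- arXiv:math/0606075 — 4 statements merged into one kernel-verified Lean document; each statement's English description precedes it below -/
import Mathlib

section
/- Let a = (a_0, …, a_{2m}) be a distinguished type-C u-symbol with isolated points k_0, …, k_{2f}, numbered so that the corresponding entries of i(a) are increasing, and let t be odd with 1 ≤ t ≤ 2f. Suppose k_{t−1} and k_t are both nondisplaced, i.e. k_{t−1} is even and k_t is odd. Then k_{t−1} < k_t; a_i = a_{i+1} for every odd i with k_{t−1} < i < k_t; a_i ≤ a_{i+1} − 2 for every even i with k_{t−1} ≤ i ≤ k_t; and, defining the sequence a′ = (a′_0, …, a′_{2m}) by a′_i = a_i for i ∉ [k_{t−1}, k_t], a′_i = a_{i+1} − 1 for even i ∈ [k_{t−1}, k_t], and a′_i = a_{i−1} + 1 for odd i ∈ [k_{t−1}, k_t], and setting σ_j(c) = c_j + c_{j+1} + ⋯ + c_{2m}, one has σ_j(a′) < σ_j(a) for every odd j ∈ [k_{t−1}, k_t] and σ_j(a′) = σ_j(a) for all other j ∈ {0, …, 2m}. -/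
open scoped Classical

/-- The map `i` from type-C u-symbols to type-C symbols: the `j`-th entry is
`a j - ⌈j/2⌉`. -/
def mapC (a : ℕ → ℕ) : ℕ → ℕ := fun j => a j - (j + 1) / 2

/-- A type-C u-symbol of rank `n` (with `2m+1` entries, indexed `0,…,2m`). -/
def IsUSymC (n m : ℕ) (a : ℕ → ℕ) : Prop :=
  1 ≤ a 1 ∧ (∀ i, i + 2 ≤ 2 * m → a i + 2 ≤ a (i + 2)) ∧
    (∑ j ∈ Finset.range (2 * m + 1), a j) = n + 2 * m ^ 2 + m

/-- The u-symbol `a` is distinguished: its entries are nondecreasing. -/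
def DistC (m : ℕ) (a : ℕ → ℕ) : Prop := ∀ i, i + 1 ≤ 2 * m → a i ≤ a (i + 1)

/-- `k` is an isolated point of the u-symbol `a`: the `k`-th entry of `i(a)` differs
from every other entry of `i(a)`. -/
def IsIsolC (m : ℕ) (a : ℕ → ℕ) (k : ℕ) : Prop :=
  k ≤ 2 * m ∧ ∀ l ≤ 2 * m, l ≠ k → mapC a l ≠ mapC a k

/-- `[k,l]` is a ladder of `a`: the entries `a k, …, a l` are `c, c+1, …, c+l-k`,
with `a (k-1) < c - 1` if `k > 0` and `a (l+1) > c + (l-k) + 1` if `l < 2m`. -/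
def IsLadderC (m : ℕ) (a : ℕ → ℕ) (k l : ℕ) : Prop :=
  k ≤ l ∧ l ≤ 2 * m ∧ (∀ j, k ≤ j → j ≤ l → a j = a k + (j - k)) ∧
    (0 < k → a (k - 1) + 1 < a k) ∧ (l < 2 * m → a l + 1 < a (l + 1))

/-- `[k,l]` is a staircase of `a`: `l-k+1` is even and the entries `a k, …, a l` are
`c, c, c+2, c+2, …, c+l-k-1, c+l-k-1`, with `a (k-2) < c - 2` if `k > 1` and
`a (l+2) > c + (l-k) + 1` if `l < 2m - 1`. -/
def IsStairC (m : ℕ) (a : ℕ → ℕ) (k l : ℕ) : Prop :=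
  k ≤ l ∧ l ≤ 2 * m ∧ (l - k) % 2 = 1 ∧
    (∀ j, k ≤ j → j ≤ l → a j = a k + 2 * ((j - k) / 2)) ∧
    (1 < k → a (k - 2) + 2 < a k) ∧ (l + 2 ≤ 2 * m → a l + 2 < a (l + 2))

/-- A part is a ladder or a staircase. -/
def IsPartC (m : ℕ) (a : ℕ → ℕ) (k l : ℕ) : Prop :=
  IsLadderC m a k l ∨ IsStairC m a k l

/-- `K 0, …, K (N-1)` enumerates the isolated points of `a`, ordered so that the
corresponding entries of `i(a)` are strictly increasing. -/
def EnumC (m : ℕ) (a : ℕ → ℕ) (N : ℕ) (K : ℕ → ℕ) : Prop :=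
  (∀ t, t < N → IsIsolC m a (K t)) ∧
  (∀ j, IsIsolC m a j → ∃ t, t < N ∧ K t = j) ∧
  (∀ s t, s < t → t < N → mapC a (K s) < mapC a (K t))

/-- Let `a` be a distinguished type-C u-symbol with isolated points `K 0, …, K (N-1)`
(ordered by the entries of `i(a)`), and let `t` be odd with `t < N`, with
`K (t-1)` and `K t` both nondisplaced, i.e. `K (t-1)` even and `K t` odd.  Then
`K (t-1) < K t`; `a i = a (i+1)` for odd `i` strictly between them;
`a i + 2 ≤ a (i+1)` for even `i` in `[K (t-1), K t]`; and for the sequence `a'`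
obtained by replacing `a i` by `a (i+1) - 1` (even `i ∈ [K (t-1), K t]`) and by
`a (i-1) + 1` (odd `i ∈ [K (t-1), K t]`), the tail sums `σ_j(c) = c_j + ⋯ + c_{2m}`
satisfy `σ_j(a') < σ_j(a)` for odd `j ∈ [K (t-1), K t]` and `σ_j(a') = σ_j(a)`
for all other `j ≤ 2m`. -/
theorem stmt11 (n m : ℕ) (hn : 1 ≤ n) (hm : 1 ≤ m) (a : ℕ → ℕ)
    (ha : IsUSymC n m a) (hdist : DistC m a)
    (N : ℕ) (K : ℕ → ℕ) (hE : EnumC m a N K)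
    (t : ℕ) (htodd : Odd t) (htN : t < N)
    (hK1 : Even (K (t - 1))) (hK2 : Odd (K t)) :
    K (t - 1) < K t ∧
    (∀ i, Odd i → K (t - 1) < i → i < K t → a i = a (i + 1)) ∧
    (∀ i, Even i → K (t - 1) ≤ i → i ≤ K t → a i + 2 ≤ a (i + 1)) ∧
    (∀ a' : ℕ → ℕ,
      (∀ i, (i < K (t - 1) ∨ K t < i) → a' i = a i) →
      (∀ i, K (t - 1) ≤ i → i ≤ K t → Even i → a' i = a (i + 1) - 1) →
      (∀ i, K (t - 1) ≤ i → i ≤ K t → Odd i → a' i = a (i - 1) + 1) →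
      ∀ j, j ≤ 2 * m →
        ((Odd j ∧ K (t - 1) ≤ j ∧ j ≤ K t) →
          (∑ i ∈ Finset.Icc j (2 * m), a' i) < ∑ i ∈ Finset.Icc j (2 * m), a i) ∧
        (¬ (Odd j ∧ K (t - 1) ≤ j ∧ j ≤ K t) →
          (∑ i ∈ Finset.Icc j (2 * m), a' i) = ∑ i ∈ Finset.Icc j (2 * m), a i)) := by
  obtain ⟨ha1, ha2, -⟩ := ha
  obtain ⟨hE1, hE2, hE3⟩ := hE
  rw [Nat.even_iff] at hK1
  rw [Nat.odd_iff] at hK2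
  have ht2 : t % 2 = 1 := Nat.odd_iff.mp htodd
  -- basic facts
  have haj : ∀ j, j ≤ 2 * m → j ≤ a j := by
    intro j
    induction j using Nat.strong_induction_on with
    | _ j ih =>
      intro hj
      match j with
      | 0 => omega
      | 1 => exact ha1
      | (j+2) =>
        have h1 := ih j (by omega) (by omega)
        have h2 := ha2 j (by omega)
        omega
  have Hb : ∀ j, j ≤ 2 * m → a j = mapC a j + (j + 1) / 2 := by
    intro j hj
    have := haj j hj
    have h : mapC a j = a j - (j + 1) / 2 := rfl
    omega
  have F1 : ∀ i, i + 2 ≤ 2 * m → mapC a i + 1 ≤ mapC a (i + 2) := by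
    intro i hi
    have h1 := Hb i (by omega)
    have h2 := Hb (i + 2) hi
    have h3 := ha2 i hi
    omega
  have CH : ∀ d i, i + 2 * d ≤ 2 * m → mapC a i + d ≤ mapC a (i + 2 * d) := by
    intro d
    induction d with
    | zero => intro i _; simp
    | succ d ihd =>
      intro i hi
      have h1 := ihd i (by omega)
      have h2 := F1 (i + 2 * d) (by omega)
      have h3 : i + 2 * (d + 1) = i + 2 * d + 2 := by ring
      rw [h3]
      omega
  have CH' : ∀ i j, i ≤ j → j ≤ 2 * m → i % 2 = j % 2 →
      mapC a i + (j - i) / 2 ≤ mapC a j := by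
    intro i j h1 h2 h3
    have h4 := CH ((j - i) / 2) i (by omega)
    rw [show i + 2 * ((j - i) / 2) = j from by omega] at h4
    omega
  have G1 : ∀ i, i + 1 ≤ 2 * m → mapC a i ≤ mapC a (i + 1) + 1 := by
    intro i hi
    have h1 := Hb i (by omega)
    have h2 := Hb (i + 1) hi
    have h3 := hdist i hi
    omega
  have G2 : ∀ i, i % 2 = 1 → i + 1 ≤ 2 * m → mapC a i ≤ mapC a (i + 1) := by
    intro i h h2
    have h1 := Hb i (by omega)
    have h2' := Hb (i + 1) h2
    have h3 := hdist i h2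
    omega
  set p := K (t - 1) with hpdef
  set q := K t with hqdef
  have hpiso : IsIsolC m a p := hE1 (t - 1) (by omega)
  have hqiso : IsIsolC m a q := hE1 t htN
  have hp2m : p ≤ 2 * m := hpiso.1
  have hq2m : q ≤ 2 * m := hqiso.1
  have hpq : mapC a p < mapC a q := hE3 (t - 1) t (by omega) htN
  have hpne := hpiso.2
  have hqne := hqiso.2
  -- Claim A
  have hApq : p < q := by
    rcases Nat.lt_or_ge p q with h | h
    · exact h
    exfalso
    have hqp : q + 1 ≤ p := by omega
    have h1 := CH' q (p - 1) (by omega) (by omega) (by omega)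
    have h2 := G2 (p - 1) (by omega) (by omega)
    rw [show p - 1 + 1 = p from by omega] at h2
    omega
  have hord : ∀ s u, s < N → u < N → mapC a (K s) < mapC a (K u) → s < u := by
    intro s u hs hu hlt
    rcases Nat.lt_trichotomy s u with h | h | h
    · exact h
    · subst h; omega
    · have := hE3 u s h hs; omega
  have hni : ∀ l, l ≤ 2 * m → mapC a p < mapC a l → mapC a l < mapC a q →
      ¬ IsIsolC m a l := by
    intro l hl h1 h2 hiso
    obtain ⟨s, hs, rfl⟩ := hE2 l hiso
    have hx : mapC a (K (t - 1)) < mapC a (K s) := by rw [← hpdef]; exact h1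
    have hy : mapC a (K s) < mapC a (K t) := by rw [← hqdef]; exact h2
    have h3 := hord (t - 1) s (by omega) hs hx
    have h4 := hord s t hs htN hy
    omega
  have hNE : ∀ i j, i < j → j ≤ 2 * m → i % 2 = j % 2 → mapC a i < mapC a j := by
    intro i j h1 h2 h3
    have := CH' i j (by omega) h2 h3
    omega
  have PA : ∀ l l', l ≤ 2 * m → l' ≤ 2 * m → l' ≠ l → mapC a l' = mapC a l →
      (l' + 3 = l ∨ l' + 1 = l ∨ l' = l + 1 ∨ l' = l + 3) := by
    intro l l' hl hl' hne heq
    by_contra hcon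
    push_neg at hcon
    rcases Nat.lt_or_ge l' l with h | h
    · rcases eq_or_ne (l' % 2) (l % 2) with hpar | hpar
      · have := hNE l' l h hl hpar; omega
      · have h5 : l' + 5 ≤ l := by omega
        have hA := CH' l' (l - 1) (by omega) (by omega) (by omega)
        have hB := G1 (l - 1) (by omega)
        rw [show l - 1 + 1 = l from by omega] at hB
        omega
    · rcases eq_or_ne (l' % 2) (l % 2) with hpar | hpar
      · have := hNE l l' (by omega) hl' hpar.symm; omega
      · have h5 : l + 5 ≤ l' := by omega
        have hA := CH' (l + 1) l' (by omega) (by omega) (by omega)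
        have hB := G1 l (by omega)
        omega
  have UQ : ∀ l l₁ l₂, l ≤ 2 * m → l₁ ≤ 2 * m → l₂ ≤ 2 * m → l₁ ≠ l → l₂ ≠ l →
      mapC a l₁ = mapC a l → mapC a l₂ = mapC a l → l₁ = l₂ := by
    intro l l₁ l₂ hl h1 h2 hn1 hn2 he1 he2
    by_contra hne
    rcases eq_or_ne (l₁ % 2) (l % 2) with hp | hp
    · rcases Nat.lt_or_ge l₁ l with h | h
      · have := hNE l₁ l h hl hp; omega
      · have := hNE l l₁ (by omega) h1 (by omega); omega
    · rcases eq_or_ne (l₂ % 2) (l % 2) with hp2 | hp2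
      · rcases Nat.lt_or_ge l₂ l with h | h
        · have := hNE l₂ l h hl hp2; omega
        · have := hNE l l₂ (by omega) h2 (by omega); omega
      · rcases Nat.lt_or_ge l₁ l₂ with h | h
        · have := hNE l₁ l₂ h h2 (by omega); omega
        · have := hNE l₂ l₁ (by omega) h1 (by omega); omega
  set ptn : ℕ → ℕ := fun l =>
    if mapC a (l + 1) = mapC a l ∧ l + 1 ≤ 2 * m then l + 1
    else if mapC a (l - 1) = mapC a l ∧ 1 ≤ l then l - 1
    else if mapC a (l + 3) = mapC a l ∧ l + 3 ≤ 2 * m then l + 3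
    else l - 3 with hptn
  have PT : ∀ l, l ≤ 2 * m → ¬ IsIsolC m a l →
      ptn l ≤ 2 * m ∧ ptn l ≠ l ∧ mapC a (ptn l) = mapC a l := by
    intro l hl hiso
    have hex : ∃ l', l' ≤ 2 * m ∧ l' ≠ l ∧ mapC a l' = mapC a l := by
      unfold IsIsolC at hiso
      push_neg at hiso
      obtain ⟨l', hx1, hx2, hx3⟩ := hiso hl
      exact ⟨l', hx1, hx2, hx3⟩
    obtain ⟨l', h1, h2, h3⟩ := hex
    have hca := PA l l' hl h1 h2 h3
    simp only [hptn]
    split_ifs with c1 c2 c3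
    · exact ⟨c1.2, by omega, c1.1⟩
    · exact ⟨by omega, by omega, c2.1⟩
    · exact ⟨c3.2, by omega, c3.1⟩
    · have hl3 : l' + 3 = l := by
        rcases hca with h | h | h | h
        · exact h
        · exfalso
          exact c2 ⟨by rw [show l - 1 = l' from by omega]; exact h3, by omega⟩
        · exfalso; rw [h] at h3; exact c1 ⟨h3, by omega⟩
        · exfalso; rw [h] at h3; exact c3 ⟨h3, by omega⟩
      refine ⟨by omega, by omega, ?_⟩
      rw [show l - 3 = l' from by omega]
      exact h3
  have PTiso : ∀ l, l ≤ 2 * m → ¬ IsIsolC m a l → ¬ IsIsolC m a (ptn l) := by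
    intro l hl hiso hiso2
    obtain ⟨h1, h2, h3⟩ := PT l hl hiso
    exact hiso2.2 l hl (Ne.symm h2) h3.symm
  have PINV : ∀ l, l ≤ 2 * m → ¬ IsIsolC m a l → ptn (ptn l) = l := by
    intro l hl hiso
    obtain ⟨h1, h2, h3⟩ := PT l hl hiso
    have hiso2 := PTiso l hl hiso
    obtain ⟨g1, g2, g3⟩ := PT (ptn l) h1 hiso2
    exact UQ (ptn l) (ptn (ptn l)) l h1 g1 hl g2 (Ne.symm h2) g3 h3.symm
  -- counting lemma
  have hcnt : ∀ s, s < N →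
      ((Finset.range (2 * m + 1)).filter (fun l => mapC a l < mapC a (K s))).card % 2
        = s % 2 := by
    intro s hs
    set S := (Finset.range (2 * m + 1)).filter (fun l => mapC a l < mapC a (K s)) with hS
    have hsplit := Finset.card_filter_add_card_filter_not
      (s := S) (p := fun l => IsIsolC m a l)
    have hIcard : (S.filter (fun l => IsIsolC m a l)).card = s := by
      have hbij := Finset.card_bij (s := Finset.range s)
        (t := S.filter (fun l => IsIsolC m a l)) (i := fun u _ => K u) ?_ ?_ ?_
      · rw [← hbij, Finset.card_range]
      · intro u hu
        simp only [Finset.mem_range] at hu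
        have hiso := hE1 u (by omega)
        simp only [hS, Finset.mem_filter, Finset.mem_range]
        have h2m := hiso.1
        exact ⟨⟨by omega, hE3 u s hu hs⟩, hiso⟩
      · intro u1 h1 u2 h2 heq
        simp only [Finset.mem_range] at h1 h2
        replace heq : K u1 = K u2 := heq
        by_contra hne
        rcases Nat.lt_trichotomy u1 u2 with h | h | h
        · have := hE3 u1 u2 h (by omega); rw [heq] at this; omega
        · exact hne h
        · have := hE3 u2 u1 h (by omega); rw [heq] at this; omega
      · intro l hlmem
        simp only [hS, Finset.mem_filter, Finset.mem_range] at hlmem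
        obtain ⟨⟨hl1, hl2⟩, hliso⟩ := hlmem
        obtain ⟨u, hu, hKu⟩ := hE2 l hliso
        have husmall : u < s := by
          apply hord u s hu hs
          rw [hKu]; exact hl2
        exact ⟨u, Finset.mem_range.mpr husmall, hKu⟩
    have hPcard : (S.filter (fun l => ¬ IsIsolC m a l)).card % 2 = 0 := by
      set P := S.filter (fun l => ¬ IsIsolC m a l) with hP
      have hmem : ∀ l ∈ P, l ≤ 2 * m ∧ ¬ IsIsolC m a l ∧ mapC a l < mapC a (K s) := by
        intro l hl
        simp only [hP, hS, Finset.mem_filter, Finset.mem_range] at hl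
        exact ⟨by omega, hl.2, hl.1.2⟩
      have hptnP : ∀ l ∈ P, ptn l ∈ P := by
        intro l hl
        obtain ⟨h1, h2, h3⟩ := hmem l hl
        obtain ⟨g1, g2, g3⟩ := PT l h1 h2
        simp only [hP, hS, Finset.mem_filter, Finset.mem_range]
        exact ⟨⟨by omega, by rw [g3]; exact h3⟩, PTiso l h1 h2⟩
      have hsplit2 := Finset.card_filter_add_card_filter_not
        (s := P) (p := fun l => l < ptn l)
      have hneg : P.filter (fun l => ¬ l < ptn l) = P.filter (fun l => ptn l < l) := by
        apply Finset.filter_congr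
        intro l hl
        obtain ⟨h1, h2, _⟩ := hmem l hl
        obtain ⟨g1, g2, g3⟩ := PT l h1 h2
        constructor
        · intro h; omega
        · intro h; omega
      have hbij : (P.filter (fun l => l < ptn l)).card
          = (P.filter (fun l => ptn l < l)).card := by
        apply Finset.card_nbij' (i := ptn) (j := ptn)
        · intro l hl
          simp only [Finset.mem_coe, Finset.mem_filter] at hl ⊢
          obtain ⟨hlP, hlt⟩ := hl
          obtain ⟨h1, h2, h3⟩ := hmem l hlP
          refine ⟨hptnP l hlP, ?_⟩
          rw [PINV l h1 h2]; exact hlt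
        · intro l hl
          simp only [Finset.mem_coe, Finset.mem_filter] at hl ⊢
          obtain ⟨hlP, hlt⟩ := hl
          obtain ⟨h1, h2, h3⟩ := hmem l hlP
          refine ⟨hptnP l hlP, ?_⟩
          rw [PINV l h1 h2]; exact hlt
        · intro l hl
          simp only [Finset.mem_coe, Finset.mem_filter] at hl
          obtain ⟨h1, h2, _⟩ := hmem l hl.1
          exact PINV l h1 h2
        · intro l hl
          simp only [Finset.mem_coe, Finset.mem_filter] at hl
          obtain ⟨h1, h2, _⟩ := hmem l hl.1
          exact PINV l h1 h2
      rw [hneg] at hsplit2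
      omega
    omega
  -- application 1 : mapC a p < mapC a (p+1)
  have hCp : mapC a p < mapC a (p + 1) := by
    by_contra hcon
    push_neg at hcon
    have hne1 : mapC a (p + 1) ≠ mapC a p := hpne (p + 1) (by omega) (by omega)
    have hg1 := G1 p (by omega)
    have hSet : (Finset.range (2 * m + 1)).filter (fun l => mapC a l < mapC a p)
        = insert (p + 1) (Finset.range p) := by
      ext l
      simp only [Finset.mem_filter, Finset.mem_range, Finset.mem_insert]
      constructor
      · rintro ⟨hl, hlt⟩
        by_contra hc
        push_neg at hc
        obtain ⟨hc1, hc2⟩ := hc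
        have hl2m : l ≤ 2 * m := by omega
        rcases eq_or_ne l p with rfl | hlp
        · omega
        rcases eq_or_ne (l % 2) 0 with hpar | hpar
        · have := CH' p l (by omega) hl2m (by omega)
          omega
        · have := CH' (p + 1) l (by omega) hl2m (by omega)
          omega
      · rintro (rfl | hlt)
        · exact ⟨by omega, by omega⟩
        · refine ⟨by omega, ?_⟩
          rcases eq_or_ne (l % 2) 0 with hpar | hpar
          · have := CH' l p (by omega) hp2m (by omega)
            omega
          · have hA := CH' l (p - 1) (by omega) (by omega) (by omega)
            have hB := G2 (p - 1) (by omega) (by omega)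
            rw [show p - 1 + 1 = p from by omega] at hB
            have hCne := hpne (p - 1) (by omega) (by omega)
            omega
    have hcard := hcnt (t - 1) (by omega)
    rw [← hpdef] at hcard
    rw [hSet, Finset.card_insert_of_notMem (by simp only [Finset.mem_range]; omega),
      Finset.card_range] at hcard
    omega
  -- application 2 : mapC a (q-1) < mapC a q
  have hCq : mapC a (q - 1) < mapC a q := by
    by_contra hcon
    push_neg at hcon
    have hne1 : mapC a (q - 1) ≠ mapC a q := hqne (q - 1) (by omega) (by omega)
    have hg1 := G1 (q - 1) (by omega)
    rw [show q - 1 + 1 = q from by omega] at hg1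
    have hSet : (Finset.range (2 * m + 1)).filter (fun l => mapC a l < mapC a q)
        = Finset.range (q - 1) := by
      ext l
      simp only [Finset.mem_filter, Finset.mem_range]
      constructor
      · rintro ⟨hl, hlt⟩
        by_contra hc
        push_neg at hc
        have hl2m : l ≤ 2 * m := by omega
        rcases eq_or_ne l (q - 1) with rfl | h1
        · omega
        rcases eq_or_ne l q with rfl | h2
        · omega
        rcases eq_or_ne (l % 2) 1 with hpar | hpar
        · have := CH' q l (by omega) hl2m (by omega)
          omega
        · have hg2 := G2 q (by omega) (by omega)
          have := CH' (q + 1) l (by omega) hl2m (by omega)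
          omega
      · intro hlt
        refine ⟨by omega, ?_⟩
        rcases eq_or_ne (l % 2) 1 with hpar | hpar
        · have := CH' l q (by omega) hq2m (by omega)
          omega
        · have hA := CH' l (q - 1) (by omega) (by omega) (by omega)
          have hCne := hqne l (by omega) (by omega)
          omega
    have hcard := hcnt t htN
    rw [← hqdef] at hcard
    rw [hSet, Finset.card_range] at hcard
    omega
  -- the pairing inside (p, q)
  have hpair : ∀ j, j % 2 = 1 → p < j → j < q → mapC a (j + 1) = mapC a j := by
    intro j
    induction j using Nat.strong_induction_on with
    | _ j ih =>
      intro hj2 hpj hjq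
      have hj2m : j ≤ 2 * m := by omega
      have hblo : mapC a p < mapC a j := by
        have := CH' (p + 1) j (by omega) hj2m (by omega)
        omega
      have hbhi : mapC a j < mapC a q := by
        have := CH' j q (by omega) hq2m (by omega)
        omega
      have hniso := hni j hj2m hblo hbhi
      have hex : ∃ l', l' ≤ 2 * m ∧ l' ≠ j ∧ mapC a l' = mapC a j := by
        unfold IsIsolC at hniso
        push_neg at hniso
        obtain ⟨l', hx1, hx2, hx3⟩ := hniso hj2m
        exact ⟨l', hx1, hx2, hx3⟩
      obtain ⟨l', h1, h2, h3⟩ := hex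
      rcases PA j l' hj2m h1 h2 h3 with hc | hc | hc | hc
      · rcases Nat.lt_trichotomy l' p with h4 | h4 | h4
        · have := CH' l' p (by omega) hp2m (by omega)
          omega
        · rw [h4] at h3; omega
        · have hih := ih (j - 4) (by omega) (by omega) (by omega) (by omega)
          rw [show j - 4 + 1 = j - 3 from by omega] at hih
          have := CH' (j - 4) j (by omega) hj2m (by omega)
          rw [show l' = j - 3 from by omega] at h3
          omega
      · rcases Nat.lt_trichotomy l' p with h4 | h4 | h4
        · have := CH' l' p (by omega) hp2m (by omega)
          omega
        · rw [h4] at h3; omega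
        · have hih := ih (j - 2) (by omega) (by omega) (by omega) (by omega)
          rw [show j - 2 + 1 = j - 1 from by omega] at hih
          have := CH' (j - 2) j (by omega) hj2m (by omega)
          rw [show l' = j - 1 from by omega] at h3
          omega
      · rw [hc] at h3; exact h3
      · have hg2 := G2 j (by omega) (by omega)
        have := CH' (j + 1) (j + 3) (by omega) (by omega) (by omega)
        rw [hc] at h3
        omega
  -- claims B and C in a-form
  have hB : ∀ i, i % 2 = 1 → p < i → i < q → a i = a (i + 1) := by
    intro i h1 h2 h3
    have hp' := hpair i h1 h2 h3
    have e1 := Hb i (by omega)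
    have e2 := Hb (i + 1) (by omega)
    omega
  have hC : ∀ i, i % 2 = 0 → p ≤ i → i ≤ q → a i + 2 ≤ a (i + 1) := by
    intro i h1 h2 h3
    have hiq : i < q := by omega
    have e1 := Hb i (by omega)
    have e2 := Hb (i + 1) (by omega)
    rcases eq_or_ne i p with rfl | hne
    · omega
    · have h4 := hpair (i - 1) (by omega) (by omega) (by omega)
      rw [show i - 1 + 1 = i from by omega] at h4
      have h5 := CH' (i - 1) (i + 1) (by omega) (by omega) (by omega)
      omega
  refine ⟨hApq, ?_, ?_, ?_⟩
  · intro i hodd h2 h3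
    exact hB i (Nat.odd_iff.mp hodd) h2 h3
  · intro i heven h2 h3
    exact hC i (Nat.even_iff.mp heven) h2 h3
  · intro a' h1 h2 h3
    have hins : ∀ j, j ≤ 2 * m → ∀ f : ℕ → ℕ,
        (∑ i ∈ Finset.Icc j (2 * m), f i) = f j + ∑ i ∈ Finset.Icc (j + 1) (2 * m), f i := by
      intro j hj f
      rw [← Finset.Ioc_insert_left hj, Finset.sum_insert (by simp), Finset.Icc_add_one_left_eq_Ioc]
    have He : ∀ nn j, j + 2 * nn = q + 1 → p ≤ j →
        (∑ i ∈ Finset.Icc j (2 * m), a' i) = ∑ i ∈ Finset.Icc j (2 * m), a i := by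
      intro nn
      induction nn with
      | zero =>
        intro j hj hpj
        apply Finset.sum_congr rfl
        intro i hi
        simp only [Finset.mem_Icc] at hi
        exact h1 i (by omega)
      | succ nn ihn =>
        intro j hj hpj
        have hj2m : j + 1 ≤ 2 * m := by omega
        have hje : j % 2 = 0 := by omega
        rw [hins j (by omega) a', hins (j + 1) (by omega) a',
          hins j (by omega) a, hins (j + 1) (by omega) a]
        have e2 := h2 j hpj (by omega) (Nat.even_iff.mpr hje)
        have e3 := h3 (j + 1) (by omega) (by omega) (by rw [Nat.odd_iff]; omega)
        rw [show j + 1 - 1 = j from rfl] at e3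
        have hC1 := hC j hje hpj (by omega)
        have hrec := ihn (j + 2) (by omega) (by omega)
        rw [show j + 1 + 1 = j + 2 from rfl, hrec, e2, e3]
        omega
    intro j hj
    refine ⟨fun hcond => ?_, fun hncond => ?_⟩
    · obtain ⟨hodd, hpj, hjq⟩ := hcond
      have hjo : j % 2 = 1 := Nat.odd_iff.mp hodd
      rw [hins j (by omega) a', hins j (by omega) a]
      have e3 := h3 j hpj hjq hodd
      have hrec := He ((q - j) / 2) (j + 1) (by omega) (by omega)
      rw [hrec, e3]
      have hC1 := hC (j - 1) (by omega) (by omega) (by omega)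
      rw [show j - 1 + 1 = j from by omega] at hC1
      omega
    · by_cases hq1 : q < j
      · apply Finset.sum_congr rfl
        intro i hi
        simp only [Finset.mem_Icc] at hi
        exact h1 i (by omega)
      by_cases hp1 : j < p
      · have hsplit : ∀ f : ℕ → ℕ, (∑ i ∈ Finset.Icc j (2 * m), f i)
            = (∑ i ∈ Finset.Ico j p, f i) + ∑ i ∈ Finset.Icc p (2 * m), f i := by
          intro f
          rw [show Finset.Icc j (2 * m) = Finset.Ico j (2 * m + 1) from
              (Finset.Ico_add_one_right_eq_Icc _ _).symm,
            show Finset.Icc p (2 * m) = Finset.Ico p (2 * m + 1) from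
              (Finset.Ico_add_one_right_eq_Icc _ _).symm]
          exact (Finset.sum_Ico_consecutive f (by omega) (by omega)).symm
        rw [hsplit a', hsplit a]
        have hfst : (∑ i ∈ Finset.Ico j p, a' i) = ∑ i ∈ Finset.Ico j p, a i := by
          apply Finset.sum_congr rfl
          intro i hi
          simp only [Finset.mem_Ico] at hi
          exact h1 i (by omega)
        rw [hfst, He ((q + 1 - p) / 2) p (by omega) (by omega)]
      · have hje : j % 2 = 0 := by
          rcases Nat.even_or_odd j with h | h
          · exact Nat.even_iff.mp h
          · exact absurd ⟨h, by omega, by omega⟩ hncond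
        exact He ((q + 1 - j) / 2) j (by omega) (by omega)
end

section
/- Let a = (a_0, …, a_{2m}) be a distinguished type-C u-symbol and let b = [k,l] be a block of a that has a bottom (so k is odd and l is even). Then the twist a^b of a by b is defined and is given by (a^b)_i = a_i for i ∉ [k,l], (a^b)_i = a_{i−1} for even i ∈ [k,l], and (a^b)_i = a_{i+1} for odd i ∈ [k,l]; moreover the twist of the symbol i(a) by λ_b is defined and i(a^b) = (i(a))^{λ_b}. -/
open scoped Classical

/-- `[k,l]` is a block of `a` with a bottom: a union of consecutive parts
`P 0, …, P (r-1)`, where `P 0` and `P (r-1)` are ladders, `P (r-1)` is the unique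
part with even top, and `P 0` is the unique part with odd bottom. -/
def IsBlockBotC (m : ℕ) (a : ℕ → ℕ) (k l : ℕ) : Prop :=
  ∃ (r : ℕ) (P : ℕ → ℕ × ℕ), 0 < r ∧ (P 0).1 = k ∧ (P (r - 1)).2 = l ∧
    (∀ s, s < r → IsPartC m a (P s).1 (P s).2) ∧
    (∀ s, s + 1 < r → (P (s + 1)).1 = (P s).2 + 1) ∧
    IsLadderC m a (P 0).1 (P 0).2 ∧
    IsLadderC m a (P (r - 1)).1 (P (r - 1)).2 ∧
    (∀ s, s < r → (Even ((P s).2) ↔ s = r - 1)) ∧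
    (∀ s, s < r → (Odd ((P s).1) ↔ s = 0))

/-- `[0,l]` is the bottomless block of `a`: a union of consecutive parts
starting at `0`, all with even bottom, the last one being a ladder and the
unique part with even top. -/
def IsBlockTopC (m : ℕ) (a : ℕ → ℕ) (l : ℕ) : Prop :=
  ∃ (r : ℕ) (P : ℕ → ℕ × ℕ), 0 < r ∧ (P 0).1 = 0 ∧ (P (r - 1)).2 = l ∧
    (∀ s, s < r → IsPartC m a (P s).1 (P s).2) ∧
    (∀ s, s + 1 < r → (P (s + 1)).1 = (P s).2 + 1) ∧
    IsLadderC m a (P (r - 1)).1 (P (r - 1)).2 ∧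
    (∀ s, s < r → (Even ((P s).2) ↔ s = r - 1)) ∧
    (∀ s, s < r → Even ((P s).1))

/-- `[k,l]` is a block of `a` (either with a bottom, or the bottomless block). -/
def IsBlockC (m : ℕ) (a : ℕ → ℕ) (k l : ℕ) : Prop :=
  IsBlockBotC m a k l ∨ (k = 0 ∧ IsBlockTopC m a l)

/-- The multiset of entries of `c` in even positions (the "upper row"). -/
def rowEC (m : ℕ) (c : ℕ → ℕ) : Multiset ℕ :=
  (Multiset.range (m + 1)).map fun t => c (2 * t)

/-- The multiset of entries of `c` in odd positions (the "lower row"). -/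
def rowOC (m : ℕ) (c : ℕ → ℕ) : Multiset ℕ :=
  (Multiset.range m).map fun t => c (2 * t + 1)

/-- `c'` is the twist of `c` (a sequence with index set `{0,…,2m}`) by the subset
`μ`: each entry of `c` at an index of `μ` is distinct from all other entries;
the rows of `c'` are arranged in increasing order; the new upper row consists of
the old upper-row entries not moved together with the moved lower-row entries,
and symmetrically for the new lower row. -/
def IsTwistC (m : ℕ) (c : ℕ → ℕ) (μ : Finset ℕ) (c' : ℕ → ℕ) : Prop :=
  (∀ i ∈ μ, i ≤ 2 * m) ∧
  (∀ i ∈ μ, ∀ j ≤ 2 * m, j ≠ i → c j ≠ c i) ∧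
  (∀ j, j + 2 ≤ 2 * m → c' j < c' (j + 2)) ∧
  rowEC m c' = (rowEC m c).filter (fun v => v ∉ μ.image c) +
    (rowOC m c).filter (fun v => v ∈ μ.image c) ∧
  rowOC m c' = (rowOC m c).filter (fun v => v ∉ μ.image c) +
    (rowEC m c).filter (fun v => v ∈ μ.image c)

/-- The set of indices lying in a ladder of `a` contained in `[k,l]`
(twisting by a block means twisting by the union of its ladders). -/
noncomputable def laddersIdxC (m : ℕ) (a : ℕ → ℕ) (k l : ℕ) : Finset ℕ :=
  (Finset.range (2 * m + 1)).filter fun j =>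
    ∃ k' l', IsLadderC m a k' l' ∧ k ≤ k' ∧ l' ≤ l ∧ k' ≤ j ∧ j ≤ l'

/-- The set of isolated points of `a` lying in `[k,l]`. -/
noncomputable def isolInC (m : ℕ) (a : ℕ → ℕ) (k l : ℕ) : Finset ℕ :=
  (Finset.range (2 * m + 1)).filter fun j => IsIsolC m a j ∧ k ≤ j ∧ j ≤ l

/-- `λ_b` for the block `b = [k,l]`: the set of isolated points of `a` in `b` if
that set has even cardinality, and the set of isolated points not in `b`
otherwise. -/
noncomputable def lambC (m : ℕ) (a : ℕ → ℕ) (k l : ℕ) : Finset ℕ :=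
  if Even (isolInC m a k l).card then isolInC m a k l
  else ((Finset.range (2 * m + 1)).filter fun j => IsIsolC m a j) \ isolInC m a k l

/-- The sequence obtained from `a` by the block twist formula on `[k,l]`. -/
def twistBlockC (a : ℕ → ℕ) (k l : ℕ) : ℕ → ℕ := fun i =>
  if i < k ∨ l < i then a i else if Even i then a (i - 1) else a (i + 1)


section AuxStmt12

/-- Two-step chain lemma: strict increase along steps of 2. -/
lemma chain2C {m : ℕ} {f : ℕ → ℕ} (h : ∀ j, j + 2 ≤ 2 * m → f j < f (j + 2)) :
    ∀ (d i : ℕ), i + 2 * d ≤ 2 * m → f i + d ≤ f (i + 2 * d) := by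
  intro d
  induction d with
  | zero => intro i _; simp
  | succ d ih =>
    intro i hi
    have h1 := h (i + 2 * d) (by omega)
    have h2 := ih i (by omega)
    have h3 : i + 2 * (d + 1) = i + 2 * d + 2 := by ring
    rw [h3]
    omega

/-- Two-step chain lemma for `a`: increase by 2 along steps of 2. -/
lemma chain2C' {m : ℕ} {f : ℕ → ℕ} (h : ∀ j, j + 2 ≤ 2 * m → f j + 2 ≤ f (j + 2)) :
    ∀ (d i : ℕ), i + 2 * d ≤ 2 * m → f i + 2 * d ≤ f (i + 2 * d) := by
  intro d
  induction d with
  | zero => intro i _; simp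
  | succ d ih =>
    intro i hi
    have h1 := h (i + 2 * d) (by omega)
    have h2 := ih i (by omega)
    have h3 : i + 2 * (d + 1) = i + 2 * d + 2 := by ring
    rw [h3]
    omega

/-- Indices in the block with globally unique `f`-value. -/
noncomputable def uniqIdxC (m : ℕ) (f : ℕ → ℕ) (k l : ℕ) : Finset ℕ :=
  (Finset.range (2 * m + 1)).filter fun j =>
    k ≤ j ∧ j ≤ l ∧ ∀ j' ≤ 2 * m, j' ≠ j → f j' ≠ f j

lemma mem_uniqIdxC {m : ℕ} {f : ℕ → ℕ} {k l j : ℕ} :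
    j ∈ uniqIdxC m f k l ↔
      j ≤ 2 * m ∧ k ≤ j ∧ j ≤ l ∧ ∀ j' ≤ 2 * m, j' ≠ j → f j' ≠ f j := by
  simp [uniqIdxC, Finset.mem_filter, Nat.lt_succ_iff, and_assoc]

lemma map_range_splitC (s b : ℕ) (h : s ≤ b) (g : ℕ → ℕ) :
    (Multiset.range b).map g
      = (Multiset.range s).map g + (Multiset.range (b - s)).map (fun u => g (s + u)) := by
  conv_lhs => rw [show b = s + (b - s) by omega]
  rw [Multiset.range_add, Multiset.map_add, Multiset.map_map]
  rfl

lemma map_congrC (N : ℕ) (g g' : ℕ → ℕ) (h : ∀ u, u < N → g u = g' u) :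
    (Multiset.range N).map g = (Multiset.range N).map g' :=
  Multiset.map_congr rfl (fun x hx => h x (Multiset.mem_range.mp hx))

lemma mainTwistC (m k l : ℕ) (f : ℕ → ℕ)
    (hk : k % 2 = 1) (hl : l % 2 = 0) (hkl : k ≤ l) (hlm : l ≤ 2 * m)
    (H1 : ∀ j, j + 2 ≤ 2 * m → f j < f (j + 2))
    (H2 : ∀ i, k ≤ i → i ≤ l → f k ≤ f i)
    (H3 : ∀ i, k ≤ i → i ≤ l → f i ≤ f l)
    (H4 : ∀ j, j < k → f j < f k)
    (H5 : ∀ j, l < j → j ≤ 2 * m → f l < f j) :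
    IsTwistC m f (uniqIdxC m f k l) (twistBlockC f k l) ∧
      Even (uniqIdxC m f k l).card := by
  have hkl' : k < l := by omega
  set κ := k / 2 with hκ
  set ρ := l / 2 with hρ
  have hkk : k = 2 * κ + 1 := by omega
  have hll : l = 2 * ρ := by omega
  have hκρ : κ + 1 ≤ ρ := by omega
  have hρm : ρ ≤ m := by omega
  set U := uniqIdxC m f k l with hU
  set Z := U.image f with hZ
  -- separation of block values from outside values
  have hsep : ∀ i, k ≤ i → i ≤ l → ∀ j, j ≤ 2 * m → (j < k ∨ l < j) → f j ≠ f i := by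
    intro i hik hil j hj hout
    rcases hout with h | h
    · have h1 := H4 j h
      have h2 := H2 i hik hil
      omega
    · have h1 := H5 j h hj
      have h2 := H3 i hik hil
      omega
  have houtZ : ∀ j, j ≤ 2 * m → (j < k ∨ l < j) → f j ∉ Z := by
    intro j hj hout hmem
    obtain ⟨u, hu, hfu⟩ := Finset.mem_image.mp hmem
    rw [hU, mem_uniqIdxC] at hu
    exact hu.2.2.2 j hj (by omega) hfu.symm
  have hstrictE : ∀ i j, i ≤ j → j ≤ 2 * m → (j - i) % 2 = 0 → i ≠ j → f i < f j := by
    intro i j hij hj hpar hne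
    have h1 := chain2C H1 ((j - i) / 2) i (by omega)
    rw [show i + 2 * ((j - i) / 2) = j by omega] at h1
    omega
  -- twistBlockC pointwise
  have hc'_out : ∀ i, (i < k ∨ l < i) → twistBlockC f k l i = f i := by
    intro i h; simp only [twistBlockC]; rw [if_pos h]
  have hc'_even : ∀ i, k ≤ i → i ≤ l → i % 2 = 0 → twistBlockC f k l i = f (i - 1) := by
    intro i h1 h2 h3
    simp only [twistBlockC]
    rw [if_neg (by omega), if_pos (Nat.even_iff.mpr h3)]
  have hc'_odd : ∀ i, k ≤ i → i ≤ l → i % 2 = 1 → twistBlockC f k l i = f (i + 1) := by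
    intro i h1 h2 h3
    simp only [twistBlockC]
    rw [if_neg (by omega), if_neg (by rw [Nat.even_iff]; omega)]
  -- the six pieces
  set AE := (Multiset.range (κ + 1)).map (fun t => f (2 * t)) with hAE
  set EB := (Multiset.range (ρ - κ)).map (fun u => f (2 * κ + 2 + 2 * u)) with hEB
  set CE := (Multiset.range (m - ρ)).map (fun u => f (2 * ρ + 2 + 2 * u)) with hCE
  set AO := (Multiset.range κ).map (fun t => f (2 * t + 1)) with hAO
  set OB := (Multiset.range (ρ - κ)).map (fun u => f (2 * κ + 1 + 2 * u)) with hOB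
  set CO := (Multiset.range (m - ρ)).map (fun u => f (2 * ρ + 1 + 2 * u)) with hCO
  have hrowEf : rowEC m f = AE + (EB + CE) := by
    rw [rowEC, map_range_splitC (κ + 1) (m + 1) (by omega)]
    congr 1
    rw [map_range_splitC (ρ - κ) (m + 1 - (κ + 1)) (by omega)]
    congr 1
    · exact map_congrC _ _ _ (fun u hu => by congr 1; omega)
    · rw [show m + 1 - (κ + 1) - (ρ - κ) = m - ρ by omega]
      exact map_congrC _ _ _ (fun u hu => by congr 1; omega)
  have hrowOf : rowOC m f = AO + (OB + CO) := by
    rw [rowOC, map_range_splitC κ m (by omega)]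
    congr 1
    rw [map_range_splitC (ρ - κ) (m - κ) (by omega)]
    congr 1
    · exact map_congrC _ _ _ (fun u hu => by congr 1; omega)
    · rw [show m - κ - (ρ - κ) = m - ρ by omega]
      exact map_congrC _ _ _ (fun u hu => by congr 1; omega)
  have hrowEc : rowEC m (twistBlockC f k l) = AE + (OB + CE) := by
    rw [rowEC, map_range_splitC (κ + 1) (m + 1) (by omega)]
    congr 1
    · exact map_congrC _ _ _ (fun t ht => hc'_out (2 * t) (by omega))
    rw [map_range_splitC (ρ - κ) (m + 1 - (κ + 1)) (by omega)]
    congr 1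
    · refine map_congrC _ _ _ (fun u hu => ?_)
      rw [show 2 * (κ + 1 + u) = 2 * κ + 2 + 2 * u by ring,
        hc'_even (2 * κ + 2 + 2 * u) (by omega) (by omega) (by omega)]
      congr 1
      omega
    · rw [show m + 1 - (κ + 1) - (ρ - κ) = m - ρ by omega]
      refine map_congrC _ _ _ (fun u hu => ?_)
      rw [show 2 * (κ + 1 + (ρ - κ + u)) = 2 * ρ + 2 + 2 * u by omega,
        hc'_out (2 * ρ + 2 + 2 * u) (by omega)]
  have hrowOc : rowOC m (twistBlockC f k l) = AO + (EB + CO) := by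
    rw [rowOC, map_range_splitC κ m (by omega)]
    congr 1
    · exact map_congrC _ _ _ (fun t ht => hc'_out (2 * t + 1) (by omega))
    rw [map_range_splitC (ρ - κ) (m - κ) (by omega)]
    congr 1
    · refine map_congrC _ _ _ (fun u hu => ?_)
      rw [show 2 * (κ + u) + 1 = 2 * κ + 1 + 2 * u by ring,
        hc'_odd (2 * κ + 1 + 2 * u) (by omega) (by omega) (by omega)]
      congr 1
      omega
    · rw [show m - κ - (ρ - κ) = m - ρ by omega]
      refine map_congrC _ _ _ (fun u hu => ?_)
      rw [show 2 * (κ + (ρ - κ + u)) + 1 = 2 * ρ + 1 + 2 * u by omega,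
        hc'_out (2 * ρ + 1 + 2 * u) (by omega)]
  -- outside pieces interact trivially with Z
  have houtPiece : ∀ (S : Multiset ℕ),
      (∀ v ∈ S, ∃ j, j ≤ 2 * m ∧ (j < k ∨ l < j) ∧ f j = v) →
      S.filter (fun v => v ∉ Z) = S ∧ S.filter (fun v => v ∈ Z) = 0 := by
    intro S hS
    constructor
    · refine Multiset.filter_eq_self.mpr (fun v hv => ?_)
      obtain ⟨j, h1, h2, h3⟩ := hS v hv
      exact h3 ▸ houtZ j h1 h2
    · refine Multiset.filter_eq_nil.mpr (fun v hv hvZ => ?_)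
      obtain ⟨j, h1, h2, h3⟩ := hS v hv
      exact (houtZ j h1 h2) (h3 ▸ hvZ)
  have hAEmem : ∀ v ∈ AE, ∃ j, j ≤ 2 * m ∧ (j < k ∨ l < j) ∧ f j = v := by
    intro v hv
    obtain ⟨t, ht, rfl⟩ := Multiset.mem_map.mp hv
    have ht' := Multiset.mem_range.mp ht
    exact ⟨2 * t, by omega, Or.inl (by omega), rfl⟩
  have hCEmem : ∀ v ∈ CE, ∃ j, j ≤ 2 * m ∧ (j < k ∨ l < j) ∧ f j = v := by
    intro v hv
    obtain ⟨u, hu, rfl⟩ := Multiset.mem_map.mp hv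
    have hu' := Multiset.mem_range.mp hu
    exact ⟨2 * ρ + 2 + 2 * u, by omega, Or.inr (by omega), rfl⟩
  have hAOmem : ∀ v ∈ AO, ∃ j, j ≤ 2 * m ∧ (j < k ∨ l < j) ∧ f j = v := by
    intro v hv
    obtain ⟨t, ht, rfl⟩ := Multiset.mem_map.mp hv
    have ht' := Multiset.mem_range.mp ht
    exact ⟨2 * t + 1, by omega, Or.inl (by omega), rfl⟩
  have hCOmem : ∀ v ∈ CO, ∃ j, j ≤ 2 * m ∧ (j < k ∨ l < j) ∧ f j = v := by
    intro v hv
    obtain ⟨u, hu, rfl⟩ := Multiset.mem_map.mp hv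
    have hu' := Multiset.mem_range.mp hu
    exact ⟨2 * ρ + 1 + 2 * u, by omega, Or.inr (by omega), rfl⟩
  -- nodup of block pieces
  have hEBnd : EB.Nodup := by
    refine Multiset.Nodup.map_on ?_ (Multiset.nodup_range _)
    intro x hx y hy hxy
    have hx' := Multiset.mem_range.mp hx
    have hy' := Multiset.mem_range.mp hy
    by_contra hne
    rcases Nat.lt_or_ge x y with h | h
    · have := hstrictE (2 * κ + 2 + 2 * x) (2 * κ + 2 + 2 * y) (by omega) (by omega)
        (by omega) (by omega)
      omega
    · have := hstrictE (2 * κ + 2 + 2 * y) (2 * κ + 2 + 2 * x) (by omega) (by omega)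
        (by omega) (by omega)
      omega
  have hOBnd : OB.Nodup := by
    refine Multiset.Nodup.map_on ?_ (Multiset.nodup_range _)
    intro x hx y hy hxy
    have hx' := Multiset.mem_range.mp hx
    have hy' := Multiset.mem_range.mp hy
    by_contra hne
    rcases Nat.lt_or_ge x y with h | h
    · have := hstrictE (2 * κ + 1 + 2 * x) (2 * κ + 1 + 2 * y) (by omega) (by omega)
        (by omega) (by omega)
      omega
    · have := hstrictE (2 * κ + 1 + 2 * y) (2 * κ + 1 + 2 * x) (by omega) (by omega)
        (by omega) (by omega)
      omega
  -- an even block index with non-unique value has its partner at an odd block index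
  have hpartnerE : ∀ i, k ≤ i → i ≤ l → i % 2 = 0 → f i ∉ Z →
      ∃ j, k ≤ j ∧ j ≤ l ∧ j % 2 = 1 ∧ f j = f i := by
    intro i h1 h2 h3 hvZ
    have hiU : i ∉ U := fun hiU => hvZ (Finset.mem_image_of_mem f hiU)
    rw [hU, mem_uniqIdxC] at hiU
    push_neg at hiU
    obtain ⟨j, hj2m, hji, hfji⟩ := hiU (by omega) h1 h2
    have hjin : k ≤ j ∧ j ≤ l := by
      have hnot : ¬(j < k ∨ l < j) := fun ho => hsep i h1 h2 j hj2m ho hfji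
      omega
    have hjodd : j % 2 = 1 := by
      by_contra hpar
      rcases Nat.lt_or_ge j i with h | h
      · have := hstrictE j i (by omega) (by omega) (by omega) (by omega)
        omega
      · have := hstrictE i j (by omega) (by omega) (by omega) (by omega)
        omega
    exact ⟨j, hjin.1, hjin.2, hjodd, hfji⟩
  have hpartnerO : ∀ i, k ≤ i → i ≤ l → i % 2 = 1 → f i ∉ Z →
      ∃ j, k ≤ j ∧ j ≤ l ∧ j % 2 = 0 ∧ f j = f i := by
    intro i h1 h2 h3 hvZ
    have hiU : i ∉ U := fun hiU => hvZ (Finset.mem_image_of_mem f hiU)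
    rw [hU, mem_uniqIdxC] at hiU
    push_neg at hiU
    obtain ⟨j, hj2m, hji, hfji⟩ := hiU (by omega) h1 h2
    have hjin : k ≤ j ∧ j ≤ l := by
      have hnot : ¬(j < k ∨ l < j) := fun ho => hsep i h1 h2 j hj2m ho hfji
      omega
    have hjev : j % 2 = 0 := by
      by_contra hpar
      rcases Nat.lt_or_ge j i with h | h
      · have := hstrictE j i (by omega) (by omega) (by omega) (by omega)
        omega
      · have := hstrictE i j (by omega) (by omega) (by omega) (by omega)
        omega
    exact ⟨j, hjin.1, hjin.2, hjev, hfji⟩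
  have hKEY : EB.filter (fun v => v ∉ Z) = OB.filter (fun v => v ∉ Z) := by
    rw [Multiset.Nodup.ext (Multiset.Nodup.filter _ hEBnd) (Multiset.Nodup.filter _ hOBnd)]
    intro v
    simp only [Multiset.mem_filter, hEB, hOB, Multiset.mem_map, Multiset.mem_range]
    constructor
    · rintro ⟨⟨u, hu, rfl⟩, hvZ⟩
      obtain ⟨j, hj1, hj2, hj3, hj4⟩ :=
        hpartnerE (2 * κ + 2 + 2 * u) (by omega) (by omega) (by omega) hvZ
      refine ⟨⟨(j - 1) / 2 - κ, by omega, ?_⟩, hvZ⟩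
      rw [show 2 * κ + 1 + 2 * ((j - 1) / 2 - κ) = j by omega]
      exact hj4
    · rintro ⟨⟨u, hu, rfl⟩, hvZ⟩
      obtain ⟨j, hj1, hj2, hj3, hj4⟩ :=
        hpartnerO (2 * κ + 1 + 2 * u) (by omega) (by omega) (by omega) hvZ
      refine ⟨⟨j / 2 - (κ + 1), by omega, ?_⟩, hvZ⟩
      rw [show 2 * κ + 2 + 2 * (j / 2 - (κ + 1)) = j by omega]
      exact hj4
  have hEBsplit : EB.filter (fun v => v ∈ Z) + EB.filter (fun v => v ∉ Z) = EB :=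
    Multiset.filter_add_not _ _
  have hOBsplit : OB.filter (fun v => v ∈ Z) + OB.filter (fun v => v ∉ Z) = OB :=
    Multiset.filter_add_not _ _
  -- cardinality facts
  have hUEeq : EB.filter (fun v => v ∈ Z) = (U.filter (fun j => j % 2 = 0)).val.map f := by
    rw [Multiset.Nodup.ext (Multiset.Nodup.filter _ hEBnd) ?nd]
    case nd =>
      refine Multiset.Nodup.map_on ?_ (U.filter (fun j => j % 2 = 0)).nodup
      intro x hx y hy hxy
      rw [Finset.mem_val, Finset.mem_filter, hU, mem_uniqIdxC] at hx hy
      by_contra hne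
      exact hy.1.2.2.2 x (by omega) hne hxy
    intro v
    simp only [Multiset.mem_filter, hEB, Multiset.mem_map, Multiset.mem_range,
      Finset.mem_val, Finset.mem_filter]
    constructor
    · rintro ⟨⟨u, hu, rfl⟩, hvZ⟩
      obtain ⟨w, hw, hfw⟩ := Finset.mem_image.mp hvZ
      have hwU := hw
      rw [hU, mem_uniqIdxC] at hwU
      have hwi : w = 2 * κ + 2 + 2 * u := by
        by_contra hne
        exact hwU.2.2.2 (2 * κ + 2 + 2 * u) (by omega) (fun h => hne h.symm) hfw.symm
      refine ⟨w, ⟨hw, by omega⟩, hfw⟩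
    · rintro ⟨w, ⟨hw, hwev⟩, rfl⟩
      have hwU := hw
      rw [hU, mem_uniqIdxC] at hwU
      refine ⟨⟨w / 2 - (κ + 1), by omega, ?_⟩, Finset.mem_image_of_mem f hw⟩
      rw [show 2 * κ + 2 + 2 * (w / 2 - (κ + 1)) = w by omega]
  have hUOeq : OB.filter (fun v => v ∈ Z) = (U.filter (fun j => j % 2 = 1)).val.map f := by
    rw [Multiset.Nodup.ext (Multiset.Nodup.filter _ hOBnd) ?nd]
    case nd =>
      refine Multiset.Nodup.map_on ?_ (U.filter (fun j => j % 2 = 1)).nodup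
      intro x hx y hy hxy
      rw [Finset.mem_val, Finset.mem_filter, hU, mem_uniqIdxC] at hx hy
      by_contra hne
      exact hy.1.2.2.2 x (by omega) hne hxy
    intro v
    simp only [Multiset.mem_filter, hOB, Multiset.mem_map, Multiset.mem_range,
      Finset.mem_val, Finset.mem_filter]
    constructor
    · rintro ⟨⟨u, hu, rfl⟩, hvZ⟩
      obtain ⟨w, hw, hfw⟩ := Finset.mem_image.mp hvZ
      have hwU := hw
      rw [hU, mem_uniqIdxC] at hwU
      have hwi : w = 2 * κ + 1 + 2 * u := by
        by_contra hne
        exact hwU.2.2.2 (2 * κ + 1 + 2 * u) (by omega) (fun h => hne h.symm) hfw.symm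
      refine ⟨w, ⟨hw, by omega⟩, hfw⟩
    · rintro ⟨w, ⟨hw, hwodd⟩, rfl⟩
      have hwU := hw
      rw [hU, mem_uniqIdxC] at hwU
      refine ⟨⟨(w - 1) / 2 - κ, by omega, ?_⟩, Finset.mem_image_of_mem f hw⟩
      rw [show 2 * κ + 1 + 2 * ((w - 1) / 2 - κ) = w by omega]
  have hcardEB : Multiset.card EB = ρ - κ := by rw [hEB]; simp
  have hcardOB : Multiset.card OB = ρ - κ := by rw [hOB]; simp
  have hcardEven : Even U.card := by
    have h1 := congrArg Multiset.card hEBsplit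
    have h2 := congrArg Multiset.card hOBsplit
    rw [Multiset.card_add] at h1 h2
    have h3 := congrArg Multiset.card hKEY
    have h4 := congrArg Multiset.card hUEeq
    have h5 := congrArg Multiset.card hUOeq
    rw [Multiset.card_map] at h4 h5
    have h6 : (U.filter (fun j => j % 2 = 0)).val.card = (U.filter (fun j => j % 2 = 0)).card := rfl
    have h7 : (U.filter (fun j => j % 2 = 1)).val.card = (U.filter (fun j => j % 2 = 1)).card := rfl
    have h8 : (U.filter (fun j => j % 2 = 0)).card + (U.filter (fun j => j % 2 = 1)).card
        = U.card := by
      have h9 : U.filter (fun j => ¬ (j % 2 = 0)) = U.filter (fun j => j % 2 = 1) := by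
        refine Finset.filter_congr (fun x _ => ?_)
        constructor <;> (intro hx; omega)
      rw [← h9]
      exact Finset.card_filter_add_card_filter_not _
    rw [Nat.even_iff]
    omega
  -- strictness of the twisted sequence
  have cond3 : ∀ j, j + 2 ≤ 2 * m →
      twistBlockC f k l j < twistBlockC f k l (j + 2) := by
    intro j hj
    by_cases hA : j + 2 < k
    · rw [hc'_out j (by omega), hc'_out (j + 2) (by omega)]; exact H1 j hj
    by_cases hB : l < j
    · rw [hc'_out j (by omega), hc'_out (j + 2) (by omega)]; exact H1 j hj
    by_cases hC : j < k
    · rcases (by omega : j = k - 1 ∨ (2 ≤ k ∧ j = k - 2)) with h | h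
      · rw [hc'_out j (by omega), hc'_even (j + 2) (by omega) (by omega) (by omega),
          show j + 2 - 1 = k by omega]
        exact H4 j (by omega)
      · rw [hc'_out j (by omega), hc'_odd (j + 2) (by omega) (by omega) (by omega)]
        have h3 := H2 (j + 2 + 1) (by omega) (by omega)
        have h4 := H4 j (by omega)
        omega
    by_cases hD : l < j + 2
    · rcases (by omega : j = l ∨ j = l - 1) with h | h
      · rw [hc'_even j (by omega) (by omega) (by omega), hc'_out (j + 2) (by omega)]
        have h3 := H3 (j - 1) (by omega) (by omega)
        have h4 := H5 (j + 2) (by omega) (by omega)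
        omega
      · rw [hc'_odd j (by omega) (by omega) (by omega), hc'_out (j + 2) (by omega),
          show j + 1 = l by omega]
        exact H5 (j + 2) (by omega) (by omega)
    · by_cases hp : j % 2 = 0
      · rw [hc'_even j (by omega) (by omega) (by omega),
          hc'_even (j + 2) (by omega) (by omega) (by omega)]
        have h1 := H1 (j - 1) (by omega)
        rw [show j - 1 + 2 = j + 2 - 1 by omega] at h1
        exact h1
      · rw [hc'_odd j (by omega) (by omega) (by omega),
          hc'_odd (j + 2) (by omega) (by omega) (by omega)]
        have hne : j + 2 ≠ l := by omega
        have h1 := H1 (j + 1) (by omega)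
        rw [show j + 1 + 2 = j + 2 + 1 by omega] at h1
        exact h1
  refine ⟨⟨?_, ?_, cond3, ?_, ?_⟩, hcardEven⟩
  · intro i hi
    rw [hU, mem_uniqIdxC] at hi
    exact hi.1
  · intro i hi
    rw [hU, mem_uniqIdxC] at hi
    exact hi.2.2.2
  · rw [← hZ, hrowEc, hrowEf, hrowOf, Multiset.filter_add, Multiset.filter_add,
      Multiset.filter_add, Multiset.filter_add,
      (houtPiece AE hAEmem).1, (houtPiece CE hCEmem).1,
      (houtPiece AO hAOmem).2, (houtPiece CO hCOmem).2, hKEY]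
    conv_lhs => rw [← hOBsplit]
    abel
  · rw [← hZ, hrowOc, hrowOf, hrowEf, Multiset.filter_add, Multiset.filter_add,
      Multiset.filter_add, Multiset.filter_add,
      (houtPiece AO hAOmem).1, (houtPiece CO hCOmem).1,
      (houtPiece AE hAEmem).2, (houtPiece CE hCEmem).2, ← hKEY]
    conv_lhs => rw [← hEBsplit]
    abel

end AuxStmt12

/-- Let `a` be a distinguished type-C u-symbol and `b = [k,l]` a block of `a`
with a bottom.  Then the twist `a^b` of `a` by `b` is defined and given by
`(a^b)_i = a_i` for `i ∉ [k,l]`, `(a^b)_i = a_{i-1}` for even `i ∈ [k,l]`,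
`(a^b)_i = a_{i+1}` for odd `i ∈ [k,l]`; moreover the twist of `i(a)` by `λ_b`
is defined and `i(a^b) = (i(a))^{λ_b}`. -/
theorem stmt12 (n m : ℕ) (hn : 1 ≤ n) (hm : 1 ≤ m) (a : ℕ → ℕ)
    (ha : IsUSymC n m a) (hdist : DistC m a)
    (k l : ℕ) (hb : IsBlockBotC m a k l) :
    IsTwistC m a (laddersIdxC m a k l) (twistBlockC a k l) ∧
    IsTwistC m (mapC a) (lambC m a k l) (mapC (twistBlockC a k l)) := by
  obtain ⟨r, P, hr, hP0, hPr, hpart, hchain, hlad0, hladr, htop, hbot⟩ := hb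
  have step2 := ha.2.1
  have mono : ∀ i j, i ≤ j → j ≤ 2 * m → a i ≤ a j := by
    intro i j
    induction j with
    | zero => intro h1 _; exact le_of_eq (congrArg a (by omega))
    | succ j ih =>
      intro h1 h2
      by_cases h : i = j + 1
      · exact le_of_eq (congrArg a h)
      · have h3 := ih (by omega) (by omega)
        have h4 := hdist j (by omega)
        omega
  have partle : ∀ s, s < r → (P s).1 ≤ (P s).2 := by
    intro s hs
    rcases hpart s hs with h | h
    · exact h.1
    · exact h.1
  have botge : ∀ s, s < r → k ≤ (P s).1 := by
    intro s
    induction s with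
    | zero => intro _; exact hP0.ge
    | succ s ih =>
      intro hs
      have h1 := ih (by omega)
      have h2 := hchain s hs
      have h3 := partle s (by omega)
      omega
  have tople : ∀ t, t < r → ∀ s, s ≤ t → (P s).2 ≤ (P t).2 := by
    intro t
    induction t with
    | zero =>
      intro _ s hs
      have : s = 0 := by omega
      subst this
      exact le_rfl
    | succ t ih =>
      intro htr s hs
      by_cases h : s = t + 1
      · exact h ▸ le_rfl
      · have h1 := ih (by omega) s (by omega)
        have h2 := hchain t htr
        have h3 := partle (t + 1) htr
        omega
  have htople : ∀ s, s < r → (P s).2 ≤ l := by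
    intro s hs
    have h := tople (r - 1) (by omega) s (by omega)
    rw [hPr] at h
    exact h
  have hkodd : k % 2 = 1 := by
    have h := (hbot 0 hr).mpr rfl
    rw [hP0, Nat.odd_iff] at h
    exact h
  have hleven : l % 2 = 0 := by
    have h := (htop (r - 1) (by omega)).mpr rfl
    rw [hPr, Nat.even_iff] at h
    exact h
  have hkl : k ≤ l := by
    have h0 := hP0
    have h1 := partle 0 hr
    have h2 := htople 0 hr
    omega
  have hlm : l ≤ 2 * m := by
    have h := hladr.2.1
    rw [hPr] at h
    exact h
  have gapB : a (k - 1) + 2 ≤ a k := by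
    have h := hlad0.2.2.2.1
    rw [hP0] at h
    have := h (by omega)
    omega
  have gapT : l < 2 * m → a l + 2 ≤ a (l + 1) := by
    intro hl2
    have h := hladr.2.2.2.2
    rw [hPr] at h
    have := h hl2
    omega
  have tiling : ∀ j, k ≤ j → j ≤ l → ∃ s, s < r ∧ (P s).1 ≤ j ∧ j ≤ (P s).2 := by
    have key : ∀ s, s < r → ∀ j, k ≤ j → j ≤ (P s).2 →
        ∃ s', s' < r ∧ (P s').1 ≤ j ∧ j ≤ (P s').2 := by
      intro s
      induction s with
      | zero => intro hs j h1 h2; exact ⟨0, hs, by rw [hP0]; exact h1, h2⟩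
      | succ s ih =>
        intro hs j h1 h2
        by_cases hle : j ≤ (P s).2
        · exact ih (by omega) j h1 hle
        · refine ⟨s + 1, hs, ?_, h2⟩
          have := hchain s hs
          omega
    intro j h1 h2
    exact key (r - 1) (by omega) j h1 (by rw [hPr]; exact h2)
  have laduniq : ∀ k' l', IsLadderC m a k' l' → ∀ j, k' ≤ j → j ≤ l' →
      ∀ j', j' ≤ 2 * m → j' ≠ j → a j' ≠ a j := by
    intro k' l' hL j hkj hjl j' hj' hne
    obtain ⟨hk'l', hl'm, hlin, hbot', htop'⟩ := hL
    have haj : a j = a k' + (j - k') := hlin j hkj hjl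
    by_cases h1 : j' < k'
    · have h2 : a j' ≤ a (k' - 1) := mono j' (k' - 1) (by omega) (by omega)
      have h3 := hbot' (by omega)
      omega
    by_cases h2 : l' < j'
    · have h3 := htop' (by omega)
      have h4 : a (l' + 1) ≤ a j' := mono (l' + 1) j' (by omega) hj'
      have h5 : a l' = a k' + (l' - k') := hlin l' hk'l' le_rfl
      omega
    · have h6 := hlin j' (by omega) (by omega)
      omega
  have stairdup : ∀ k' l', IsStairC m a k' l' → ∀ j, k' ≤ j → j ≤ l' →
      ∃ j', j' ≤ 2 * m ∧ j' ≠ j ∧ a j' = a j := by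
    intro k' l' hS j h1 h2
    obtain ⟨hk'l', hl'm, hpar, hlin, h5, h6⟩ := hS
    by_cases h : (j - k') % 2 = 0
    · refine ⟨j + 1, by omega, by omega, ?_⟩
      rw [hlin (j + 1) (by omega) (by omega), hlin j h1 h2]
      omega
    · refine ⟨j - 1, by omega, by omega, ?_⟩
      rw [hlin (j - 1) (by omega) (by omega), hlin j h1 h2]
      omega
  have hAeq : laddersIdxC m a k l = uniqIdxC m a k l := by
    ext j
    simp only [laddersIdxC, uniqIdxC, Finset.mem_filter, Finset.mem_range]
    constructor
    · rintro ⟨hjr, k', l', hL, hkk', hl'l, hk'j, hjl'⟩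
      exact ⟨hjr, by omega, by omega,
        fun j' hj' hne => laduniq k' l' hL j hk'j hjl' j' hj' hne⟩
    · rintro ⟨hjr, hkj, hjl, huniq⟩
      refine ⟨hjr, ?_⟩
      obtain ⟨s, hs, hs1, hs2⟩ := tiling j hkj hjl
      rcases hpart s hs with hL | hS
      · exact ⟨(P s).1, (P s).2, hL, botge s hs, htople s hs, hs1, hs2⟩
      · obtain ⟨j', h1, h2, h3⟩ := stairdup _ _ hS j hs1 hs2
        exact absurd h3 (huniq j' h1 h2)
  have aH1 : ∀ j, j + 2 ≤ 2 * m → a j < a (j + 2) := by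
    intro j hj
    have := step2 j hj
    omega
  have aH2 : ∀ i, k ≤ i → i ≤ l → a k ≤ a i := fun i h1 h2 => mono k i h1 (by omega)
  have aH3 : ∀ i, k ≤ i → i ≤ l → a i ≤ a l := fun i h1 h2 => mono i l h2 hlm
  have aH4 : ∀ j, j < k → a j < a k := by
    intro j hj
    have h1 : a j ≤ a (k - 1) := mono j (k - 1) (by omega) (by omega)
    omega
  have aH5 : ∀ j, l < j → j ≤ 2 * m → a l < a j := by
    intro j h1 h2
    have h3 := gapT (by omega)
    have h4 : a (l + 1) ≤ a j := mono (l + 1) j (by omega) h2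
    omega
  have main1 := mainTwistC m k l a hkodd hleven hkl hlm aH1 aH2 aH3 aH4 aH5
  have ha1 := ha.1
  have chainA := chain2C' (m := m) (f := a) step2
  have alow : ∀ j, j ≤ 2 * m → (j + 1) / 2 ≤ a j := by
    intro j hj
    by_cases h : j % 2 = 0
    · have := chainA (j / 2) 0 (by omega)
      rw [show 0 + 2 * (j / 2) = j by omega] at this
      omega
    · have := chainA ((j - 1) / 2) 1 (by omega)
      rw [show 1 + 2 * ((j - 1) / 2) = j by omega] at this
      omega
  have bH1 : ∀ j, j + 2 ≤ 2 * m → mapC a j < mapC a (j + 2) := by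
    intro j hj
    have h1 := step2 j hj
    have h2 := alow j (by omega)
    have h3 := alow (j + 2) hj
    simp only [mapC]
    omega
  have bchain := chain2C (m := m) bH1
  have bstep : ∀ i j, i ≤ j → j ≤ 2 * m → (j - i) % 2 = 0 →
      mapC a i + (j - i) / 2 ≤ mapC a j := by
    intro i j h1 h2 h3
    have := bchain ((j - i) / 2) i (by omega)
    rw [show i + 2 * ((j - i) / 2) = j by omega] at this
    exact this
  have bH2 : ∀ i, k ≤ i → i ≤ l → mapC a k ≤ mapC a i := by
    intro i h1 h2
    by_cases hp : i % 2 = 1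
    · have := bstep k i h1 (by omega) (by omega)
      omega
    · have hk1 : mapC a k ≤ mapC a (k + 1) := by
        have h3 := mono k (k + 1) (by omega) (by omega)
        have h4 := alow k (by omega)
        have h5 := alow (k + 1) (by omega)
        simp only [mapC]
        omega
      have := bstep (k + 1) i (by omega) (by omega) (by omega)
      omega
  have bH3 : ∀ i, k ≤ i → i ≤ l → mapC a i ≤ mapC a l := by
    intro i h1 h2
    by_cases hp : i % 2 = 0
    · have := bstep i l h2 hlm (by omega)
      omega
    · have hl1 : mapC a (l - 1) ≤ mapC a l := by
        have h3 := mono (l - 1) l (by omega) hlm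
        have h4 := alow (l - 1) (by omega)
        have h5 := alow l hlm
        simp only [mapC]
        omega
      have := bstep i (l - 1) (by omega) (by omega) (by omega)
      omega
  have bH4 : ∀ j, j < k → mapC a j < mapC a k := by
    intro j hj
    by_cases hp : j % 2 = 1
    · have := bstep j k (by omega) (by omega) (by omega)
      omega
    · have hk1 : mapC a (k - 1) + 1 ≤ mapC a k := by
        have h4 := alow (k - 1) (by omega)
        have h5 := alow k (by omega)
        simp only [mapC]
        omega
      have := bstep j (k - 1) (by omega) (by omega) (by omega)
      omega
  have bH5 : ∀ j, l < j → j ≤ 2 * m → mapC a l < mapC a j := by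
    intro j h1 h2
    by_cases hp : j % 2 = 0
    · have := bstep l j (by omega) h2 (by omega)
      omega
    · have hl1 : mapC a l + 1 ≤ mapC a (l + 1) := by
        have hg := gapT (by omega)
        have h4 := alow l hlm
        have h5 := alow (l + 1) (by omega)
        simp only [mapC]
        omega
      have := bstep (l + 1) j (by omega) h2 (by omega)
      omega
  have main2 := mainTwistC m k l (mapC a) hkodd hleven hkl hlm bH1 bH2 bH3 bH4 bH5
  have hcomm : mapC (twistBlockC a k l) = twistBlockC (mapC a) k l := by
    funext i
    simp only [mapC, twistBlockC]
    by_cases h : i < k ∨ l < i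
    · rw [if_pos h, if_pos h]
    · rw [if_neg h, if_neg h]
      by_cases he : Even i
      · rw [if_pos he, if_pos he]
        rw [Nat.even_iff] at he
        congr 1
        omega
      · rw [if_neg he, if_neg he]
        rw [Nat.not_even_iff] at he
        congr 1
        omega
  have hisol : isolInC m a k l = uniqIdxC m (mapC a) k l := by
    ext j
    simp only [isolInC, uniqIdxC, Finset.mem_filter, Finset.mem_range]
    simp only [IsIsolC]
    constructor
    · rintro ⟨h1, ⟨h2, h3⟩, h4, h5⟩
      exact ⟨h1, h4, h5, h3⟩
    · rintro ⟨h1, h2, h3, h4⟩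
      exact ⟨h1, ⟨by omega, h4⟩, h2, h3⟩
  have hev : Even (isolInC m a k l).card := by
    rw [hisol]
    exact main2.2
  have hlamb : lambC m a k l = isolInC m a k l := by
    unfold lambC
    rw [if_pos hev]
  refine ⟨?_, ?_⟩
  · rw [hAeq]
    exact main1.1
  · rw [hlamb, hisol, hcomm]
    exact main2.1
end

section
/- Let a be a distinguished type-C u-symbol. Then a has exactly one bottomless block b_0, and the set T(a) of subsets S of the set B(a) of blocks of a for which the twist a^S is defined is exactly the collection of subsets S ⊆ B(a) with b_0 ∉ S. Moreover, for every such S, i(a^S) = (i(a))^{λ_S}, where λ_S is the symmetric difference of the sets λ_b over the blocks b ∈ S. -/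
open scoped Classical

/-- The set `B(a)` of blocks of `a`, as a finite set of pairs `(k,l)`. -/
noncomputable def blocksC (m : ℕ) (a : ℕ → ℕ) : Finset (ℕ × ℕ) :=
  ((Finset.range (2 * m + 1)) ×ˢ (Finset.range (2 * m + 1))).filter fun p =>
    IsBlockC m a p.1 p.2

/-- The set of indices lying in a ladder contained in some block of `S`
(twisting by a set of blocks means twisting by the union of their ladders). -/
noncomputable def ladderIdxSetC (m : ℕ) (a : ℕ → ℕ) (S : Finset (ℕ × ℕ)) : Finset ℕ :=
  (Finset.range (2 * m + 1)).filter fun j =>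
    ∃ p ∈ S, ∃ k' l', IsLadderC m a k' l' ∧ p.1 ≤ k' ∧ l' ≤ p.2 ∧ k' ≤ j ∧ j ≤ l'

instance : Std.Commutative (α := Finset ℕ) (fun x y => symmDiff x y) := ⟨symmDiff_comm⟩
instance : Std.Associative (α := Finset ℕ) (fun x y => symmDiff x y) := ⟨symmDiff_assoc⟩

/-- `λ_S`: the symmetric difference of the sets `λ_b` over the blocks `b ∈ S`. -/
noncomputable def lamSetC (m : ℕ) (a : ℕ → ℕ) (S : Finset (ℕ × ℕ)) : Finset ℕ :=
  S.fold (fun x y => symmDiff x y) ∅ fun p => lambC m a p.1 p.2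



namespace St13

/-- transfer a multiset map along an explicit bijection -/
lemma map_of_image {A B : Finset ℕ} {f g h : ℕ → ℕ}
    (hinj : ∀ x ∈ A, ∀ y ∈ A, f x = f y → x = y)
    (him : A.image f = B) (hval : ∀ x ∈ A, g (f x) = h x) :
    Multiset.map g B.val = Multiset.map h A.val := by
  have hnodup : (A.val.map f).Nodup := Multiset.Nodup.map_on hinj A.nodup
  have : B.val = A.val.map f := by
    rw [← him, Finset.image_val, Multiset.dedup_eq_self.2 hnodup]
  rw [this, Multiset.map_map]
  exact Multiset.map_congr rfl hval

lemma mono_of_adj {n : ℕ} {f : ℕ → ℕ} (h : ∀ t, t + 1 < n → f t < f (t+1)) :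
    ∀ i j, i ≤ j → j < n → f i ≤ f j := by
  intro i j hij hjn
  induction j with
  | zero =>
    have : i = 0 := by omega
    simp [this]
  | succ k ih =>
    rcases Nat.eq_or_lt_of_le hij with rfl | hlt
    · exact le_rfl
    · exact le_trans (ih (by omega) (by omega)) (le_of_lt (h k (by omega)))

lemma strict_of_adj {n : ℕ} {f : ℕ → ℕ} (h : ∀ t, t + 1 < n → f t < f (t+1)) :
    ∀ i j, i < j → j < n → f i < f j := by
  intro i j hij hjn
  calc f i < f (i+1) := h i (by omega)
    _ ≤ f j := mono_of_adj h (i+1) j (by omega) hjn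

/-- two increasing enumerations of the same multiset agree -/
lemma sorted_unique : ∀ (n : ℕ) (f g : ℕ → ℕ),
    (∀ t, t + 1 < n → f t < f (t+1)) → (∀ t, t + 1 < n → g t < g (t+1)) →
    (Multiset.range n).map f = (Multiset.range n).map g → ∀ t < n, f t = g t := by
  intro n
  induction n with
  | zero => intro f g _ _ _ t ht; omega
  | succ k ih =>
    intro f g hf hg heq t ht
    have hmapf : (Multiset.range (k+1)).map f = f k ::ₘ (Multiset.range k).map f := by
      rw [Multiset.range_succ, Multiset.map_cons]
    have hmapg : (Multiset.range (k+1)).map g = g k ::ₘ (Multiset.range k).map g := by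
      rw [Multiset.range_succ, Multiset.map_cons]
    have hfk : f k = g k := by
      have h1 : f k ∈ (Multiset.range (k+1)).map g := by rw [← heq, hmapf]; exact Multiset.mem_cons_self _ _
      have h2 : g k ∈ (Multiset.range (k+1)).map f := by rw [heq, hmapg]; exact Multiset.mem_cons_self _ _
      obtain ⟨t1, ht1, he1⟩ := Multiset.mem_map.1 h1
      obtain ⟨t2, ht2, he2⟩ := Multiset.mem_map.1 h2
      rw [Multiset.mem_range] at ht1 ht2
      have l1 : f k ≤ g k := he1 ▸ mono_of_adj hg t1 k (by omega) (by omega)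
      have l2 : g k ≤ f k := he2 ▸ mono_of_adj hf t2 k (by omega) (by omega)
      omega
    rcases Nat.lt_succ_iff_lt_or_eq.1 ht with h | rfl
    · have heq' : (Multiset.range k).map f = (Multiset.range k).map g := by
        have := heq
        rw [hmapf, hmapg, hfk] at this
        exact (Multiset.cons_inj_right _).1 this
      exact ih f g (fun t ht => hf t (by omega)) (fun t ht => hg t (by omega)) heq' t h
    · exact hfk

end St13

namespace St13

section Basics
variable {m : ℕ} {a : ℕ → ℕ}

/-- context bundle: adjacent monotone, 2-step growth, a 1 ≥ 1 -/
def Ctx (m : ℕ) (a : ℕ → ℕ) : Prop :=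
  (∀ i, i + 1 ≤ 2*m → a i ≤ a (i+1)) ∧ (∀ i, i + 2 ≤ 2*m → a i + 2 ≤ a (i+2)) ∧ 1 ≤ a 1

lemma Ctx.mk' (ha : IsUSymC n m a) (hd : DistC m a) : Ctx m a := ⟨hd, ha.2.1, ha.1⟩

lemma Ctx.mono (hc : Ctx m a) : ∀ i j, i ≤ j → j ≤ 2*m → a i ≤ a j := by
  intro i j hij hj
  induction j with
  | zero =>
    have h0 : i = 0 := by omega
    simp [h0]
  | succ k ih =>
    rcases Nat.eq_or_lt_of_le hij with rfl | hlt
    · exact le_rfl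
    · exact le_trans (ih (by omega) (by omega)) (hc.1 k (by omega))

/-- two-step growth along same parity -/
lemma Ctx.grow (hc : Ctx m a) : ∀ i u, i + 2*u ≤ 2*m → a i + 2*u ≤ a (i + 2*u) := by
  intro i u
  induction u with
  | zero => simp
  | succ v ih =>
    intro h
    have h1 := ih (by omega)
    have h2 := hc.2.1 (i + 2*v) (by omega)
    have : i + 2*(v+1) = (i + 2*v) + 2 := by ring
    rw [this]
    omega

lemma Ctx.lb (hc : Ctx m a) : ∀ j, j ≤ 2*m → 1 ≤ j → j ≤ a j := by
  intro j hj h1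
  rcases Nat.even_or_odd j with ⟨t, rfl⟩ | ⟨t, rfl⟩
  · have h2' : a 0 + 2 ≤ a 2 := by simpa using hc.2.1 0 (by omega)
    have h2 : 2 ≤ a 2 := by omega
    have : 1 ≤ t := by omega
    have := hc.grow 2 (t-1) (by omega)
    have e : 2 + 2*(t-1) = t + t := by omega
    rw [e] at this; omega
  · have := hc.grow 1 t (by omega)
    have e : 1 + 2*t = 2*t+1 := by omega
    rw [e] at this
    have := hc.2.2; omega

lemma Ctx.mapC_add (hc : Ctx m a) : ∀ j, j ≤ 2*m → mapC a j + (j+1)/2 = a j := by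
  intro j hj
  rcases Nat.eq_zero_or_pos j with rfl | h
  · simp [mapC]
  · have := hc.lb j hj h
    have : (j+1)/2 ≤ a j := by omega
    simp only [mapC]
    omega

end Basics

section LadderStair
variable {m : ℕ} {a : ℕ → ℕ}

/-- position adjacent to an equal-step (stair positions) -/
def StairP (m : ℕ) (a : ℕ → ℕ) (j : ℕ) : Prop :=
  (0 < j ∧ a j = a (j-1)) ∨ (j < 2*m ∧ a (j+1) = a j)

lemma ladder_not_stairP (hc : Ctx m a) {x y j : ℕ} (hl : IsLadderC m a x y)
    (hx : x ≤ j) (hy : j ≤ y) : ¬ StairP m a j := by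
  obtain ⟨hxy, hy2m, hent, hbot, htop⟩ := hl
  rintro (⟨hj0, he⟩ | ⟨hj2m, he⟩)
  · -- a j = a (j-1)
    rcases Nat.lt_or_ge x j with h | h
    · have e1 := hent j hx hy
      have e2 := hent (j-1) (by omega) (by omega)
      omega
    · have hxj : x = j := by omega
      subst hxj
      exact absurd he (by have := hbot hj0; omega)
  · rcases Nat.lt_or_ge j y with h | h
    · have e1 := hent j hx hy
      have e2 := hent (j+1) (by omega) (by omega)
      omega
    · have hjy : j = y := by omega
      subst hjy
      have := htop (by omega); omega

/-- values on a ladder are distinct from all other entries -/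
lemma ladder_sep (hc : Ctx m a) {x y i : ℕ} (hl : IsLadderC m a x y)
    (hx : x ≤ i) (hy : i ≤ y) : ∀ p, p ≤ 2*m → p ≠ i → a p ≠ a i := by
  obtain ⟨hxy, hy2m, hent, hbot, htop⟩ := hl
  intro p hp hpi
  have hi := hent i hx hy
  rcases Nat.lt_or_ge p x with h | h
  · -- p < x so x > 0
    have h0 : 0 < x := by omega
    have hb := hbot h0
    have := hc.mono p (x-1) (by omega) (by omega)
    omega
  · rcases le_or_gt p y with h2 | h2
    · have := hent p h h2
      omega
    · have ht := htop (by omega)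
      have := hc.mono (y+1) p (by omega) hp
      have hyv := hent y hxy le_rfl
      omega

end LadderStair
end St13

namespace St13
section Blocks
variable {m : ℕ} {a : ℕ → ℕ}

lemma not_ladder_and_stair {x y : ℕ} (hl : IsLadderC m a x y) (hs : IsStairC m a x y) : False := by
  obtain ⟨hxy, -, hent, -, -⟩ := hl
  obtain ⟨-, -, hpar, hent', -, -⟩ := hs
  have hxlt : x < y := by omega
  have e1 := hent (x+1) (by omega) (by omega)
  have e2 := hent' (x+1) (by omega) (by omega)
  have : (x+1-x) = 1 := by omega
  rw [this] at e1 e2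
  norm_num at e1 e2
  omega

/-- core consequences of a block witness -/
lemma blk_core {k l r : ℕ} {P : ℕ → ℕ × ℕ} (hc : Ctx m a)
    (hr : 0 < r) (h0 : (P 0).1 = k) (hlast : (P (r-1)).2 = l)
    (hparts : ∀ s, s < r → IsPartC m a (P s).1 (P s).2)
    (hchain : ∀ s, s + 1 < r → (P (s+1)).1 = (P s).2 + 1)
    (hlastlad : IsLadderC m a (P (r-1)).1 (P (r-1)).2)
    (htops : ∀ s, s < r → (Even ((P s).2) ↔ s = r - 1))
    (hsb : ∀ s, s < r → IsStairC m a (P s).1 (P s).2 → Even (P s).1)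
    (hob : ∀ s, s < r → Odd (P s).1 → (P s).1 = k) :
    k ≤ l ∧ l ≤ 2*m ∧ Even l ∧
    (l < 2*m → a l + 2 ≤ a (l+1)) ∧
    (∀ j, k ≤ j → j ≤ l → ¬ StairP m a j →
       ∃ x y, IsLadderC m a x y ∧ k ≤ x ∧ y ≤ l ∧ x ≤ j ∧ j ≤ y ∧
         (Odd x → x = k) ∧ (Even y → y = l)) ∧
    (∀ j, k ≤ j → j ≤ l → StairP m a j →
       (Even j → a (j+1) = a j ∧ j + 1 ≤ l) ∧ (Odd j → a j = a (j-1) ∧ k + 1 ≤ j)) := by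
  have hne : ∀ s, s < r → (P s).1 ≤ (P s).2 := by
    intro s hs
    rcases hparts s hs with h | h
    · exact h.1
    · exact h.1
  have htle : ∀ i s, s < r → r - 1 - s = i → (P s).2 ≤ l := by
    intro i
    induction i with
    | zero =>
      intro s hs hi
      have : s = r - 1 := by omega
      rw [this, hlast]
    | succ v ih =>
      intro s hs hi
      have h1 : s + 1 < r := by omega
      have := hchain s h1
      have := ih (s+1) (by omega) (by omega)
      have := hne (s+1) (by omega)
      omega
  have htle' : ∀ s, s < r → (P s).2 ≤ l := fun s hs => htle (r-1-s) s hs rfl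
  have hbge : ∀ s, s < r → k ≤ (P s).1 := by
    intro s
    induction s with
    | zero => intro _; omega
    | succ v ih =>
      intro hs
      have := hchain v (by omega)
      have := ih (by omega)
      have := hne v (by omega)
      omega
  have hkl : k ≤ l := by
    have := hne 0 hr
    have := htle' 0 hr
    omega
  have hl2m : l ≤ 2*m := hlast ▸ hlastlad.2.1
  have hcover : ∀ j, k ≤ j → j ≤ l → ∃ s, s < r ∧ (P s).1 ≤ j ∧ j ≤ (P s).2 := by
    intro j hkj
    induction j, hkj using Nat.le_induction with
    | base =>
      exact fun _ => ⟨0, hr, by omega, by have := hne 0 hr; omega⟩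
    | succ j hkj ih =>
      intro hjl
      obtain ⟨s, hs, hs1, hs2⟩ := ih (by omega)
      rcases le_or_gt (j+1) ((P s).2) with h | h
      · exact ⟨s, hs, by omega, h⟩
      · -- j = (P s).2, move to next part
        have hsr : s + 1 < r := by
          by_contra hcon
          have : s = r - 1 := by omega
          rw [this, hlast] at hs2 h
          omega
        have := hchain s hsr
        exact ⟨s+1, hsr, by omega, by have := hne (s+1) hsr; omega⟩
  refine ⟨hkl, hl2m, ?_, ?_, ?_, ?_⟩
  · have := (htops (r-1) (by omega)).2 rfl
    rwa [hlast] at this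
  · intro hllt
    have := hlastlad.2.2.2.2
    rw [hlast] at this
    have := this hllt
    omega
  · -- ladder clause
    intro j hkj hjl hnst
    obtain ⟨s, hs, hs1, hs2⟩ := hcover j hkj hjl
    rcases hparts s hs with hlad | hst
    · refine ⟨(P s).1, (P s).2, hlad, hbge s hs, htle' s hs, hs1, hs2, ?_, ?_⟩
      · exact fun h => hob s hs h
      · intro h
        have := (htops s hs).1 h
        rw [this, hlast]
    · -- stair part: j is a stair position, contradiction
      exfalso
      apply hnst
      have hxe : Even (P s).1 := hsb s hs hst
      obtain ⟨hxy, hy2m, hpar, hent, -, -⟩ := hst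
      set x := (P s).1 with hx
      set y := (P s).2 with hyy
      rcases Nat.even_or_odd j with hj | hj
      · -- Even j : j - x even, j < y
        have hjx : (j - x) % 2 = 0 := by
          obtain ⟨u, hu⟩ := hj; obtain ⟨v, hv⟩ := hxe; omega
        have hjy : j < y := by
          rcases Nat.eq_or_lt_of_le hs2 with rfl | h
          · omega
          · exact h
        right
        constructor
        · omega
        · have e1 := hent (j+1) (by omega) (by omega)
          have e2 := hent j hs1 hs2
          omega
      · have hjx : (j - x) % 2 = 1 := by
          obtain ⟨u, hu⟩ := hj; obtain ⟨v, hv⟩ := hxe; omega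
        have hjgt : x < j := by omega
        left
        constructor
        · omega
        · have e1 := hent (j-1) (by omega) (by omega)
          have e2 := hent j hs1 hs2
          omega
  · -- stair clause
    intro j hkj hjl hstp
    obtain ⟨s, hs, hs1, hs2⟩ := hcover j hkj hjl
    rcases hparts s hs with hlad | hst
    · exact absurd hstp (ladder_not_stairP hc hlad hs1 hs2)
    · have hxe : Even (P s).1 := hsb s hs hst
      have hble := hbge s hs
      have htle2 := htle' s hs
      obtain ⟨hxy, hy2m, hpar, hent, -, -⟩ := hst
      set x := (P s).1 with hx
      set y := (P s).2 with hyy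
      constructor
      · intro hj
        have hjx : (j - x) % 2 = 0 := by
          obtain ⟨u, hu⟩ := hj; obtain ⟨v, hv⟩ := hxe; omega
        have hjy : j < y := by
          rcases Nat.eq_or_lt_of_le hs2 with rfl | h
          · omega
          · exact h
        have e1 := hent (j+1) (by omega) (by omega)
        have e2 := hent j hs1 hs2
        constructor
        · omega
        · omega
      · intro hj
        have hjx : (j - x) % 2 = 1 := by
          obtain ⟨u, hu⟩ := hj; obtain ⟨v, hv⟩ := hxe; omega
        have hjgt : x < j := by omega
        have e1 := hent (j-1) (by omega) (by omega)
        have e2 := hent j hs1 hs2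
        exact ⟨by omega, by omega⟩

/-- all structural facts for a block -/
lemma blk_struct (hc : Ctx m a) {k l : ℕ} (hb : IsBlockC m a k l) :
    k ≤ l ∧ l ≤ 2*m ∧ Even l ∧ (k = 0 ∨ Odd k) ∧
    (0 < k → a (k-1) + 2 ≤ a k) ∧ (l < 2*m → a l + 2 ≤ a (l+1)) ∧
    (∀ j, k ≤ j → j ≤ l → ¬ StairP m a j →
       ∃ x y, IsLadderC m a x y ∧ k ≤ x ∧ y ≤ l ∧ x ≤ j ∧ j ≤ y ∧
         (Odd x → x = k) ∧ (Even y → y = l)) ∧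
    (∀ j, k ≤ j → j ≤ l → StairP m a j →
       (Even j → a (j+1) = a j ∧ j + 1 ≤ l) ∧ (Odd j → a j = a (j-1) ∧ k + 1 ≤ j)) := by
  rcases hb with hbot | ⟨rfl, htop⟩
  · obtain ⟨r, P, hr, h0, hlast, hparts, hchain, hfirstlad, hlastlad, htops, hbots⟩ := hbot
    have hsb : ∀ s, s < r → IsStairC m a (P s).1 (P s).2 → Even (P s).1 := by
      intro s hs hst
      have hs0 : s ≠ 0 := by
        rintro rfl
        exact not_ladder_and_stair hfirstlad hst
      have := (hbots s hs)
      rcases Nat.even_or_odd ((P s).1) with h | h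
      · exact h
      · exact absurd (this.1 h) hs0
    have hob : ∀ s, s < r → Odd (P s).1 → (P s).1 = k := by
      intro s hs h
      have := (hbots s hs).1 h
      rw [this, h0]
    have hcore := blk_core hc hr h0 hlast hparts hchain hlastlad htops hsb hob
    have hkodd : Odd k := h0 ▸ (hbots 0 hr).2 rfl
    refine ⟨hcore.1, hcore.2.1, hcore.2.2.1, Or.inr hkodd, ?_, hcore.2.2.2.1, hcore.2.2.2.2.1, hcore.2.2.2.2.2⟩
    intro hk0
    have := hfirstlad.2.2.2.1
    rw [h0] at this
    have := this hk0
    omega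
  · obtain ⟨r, P, hr, h0, hlast, hparts, hchain, hlastlad, htops, hbots⟩ := htop
    have hsb : ∀ s, s < r → IsStairC m a (P s).1 (P s).2 → Even (P s).1 :=
      fun s hs _ => hbots s hs
    have hob : ∀ s, s < r → Odd (P s).1 → (P s).1 = 0 := by
      intro s hs h
      exact absurd (hbots s hs) (Nat.not_even_iff_odd.2 h)
    have hcore := blk_core hc hr h0 hlast hparts hchain hlastlad htops hsb hob
    exact ⟨hcore.1, hcore.2.1, hcore.2.2.1, Or.inl rfl, by omega, hcore.2.2.2.1,
      hcore.2.2.2.2.1, hcore.2.2.2.2.2⟩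

end Blocks
end St13

namespace St13
section Disj
variable {m : ℕ} {a : ℕ → ℕ}

lemma blk_bot_eq (hc : Ctx m a) {k l k' l' j : ℕ} (hb : IsBlockC m a k l)
    (hb' : IsBlockC m a k' l') (hkk : k ≤ k') (h1 : k ≤ j) (h2 : j ≤ l)
    (h3 : k' ≤ j) (h4 : j ≤ l') : k = k' := by
  by_contra hne
  have hlt : k < k' := by omega
  obtain ⟨hkl, hl2m, hleven, hkpar, hgapb, hgapt, hladc, hstc⟩ := blk_struct hc hb
  obtain ⟨hkl', hl2m', hleven', hkpar', hgapb', hgapt', hladc', hstc'⟩ := blk_struct hc hb'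
  have hk'0 : 0 < k' := by omega
  have hodd : Odd k' := by
    rcases hkpar' with h | h
    · omega
    · exact h
  have hgap : a (k'-1) + 2 ≤ a k' := hgapb' hk'0
  have hnst : ¬ StairP m a k' := by
    intro hst
    have := ((hstc' k' le_rfl (by omega) hst).2 hodd).2
    omega
  obtain ⟨x, y, hlad, hkx, hyl, hxj, hjy, hoddx, -⟩ := hladc k' (by omega) (by omega) hnst
  rcases Nat.eq_or_lt_of_le hxj with rfl | hxlt
  · have := hoddx hodd
    omega
  · obtain ⟨-, -, hent, -, -⟩ := hlad
    have e1 := hent k' (by omega) hjy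
    have e2 := hent (k'-1) (by omega) (by omega)
    omega

lemma blk_top_eq (hc : Ctx m a) {k l l' j : ℕ} (hb : IsBlockC m a k l)
    (hb' : IsBlockC m a k l') (hll : l ≤ l') (h2 : j ≤ l) (h1 : k ≤ j) : l = l' := by
  by_contra hne
  have hlt : l < l' := by omega
  obtain ⟨hkl, hl2m, hleven, hkpar, hgapb, hgapt, hladc, hstc⟩ := blk_struct hc hb
  obtain ⟨hkl', hl2m', hleven', hkpar', hgapb', hgapt', hladc', hstc'⟩ := blk_struct hc hb'
  have hgap : a l + 2 ≤ a (l+1) := hgapt (by omega)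
  have hnst : ¬ StairP m a l := by
    intro hst
    have := (hstc' l (by omega) (by omega) hst).1 hleven
    omega
  obtain ⟨x, y, hlad, hkx, hyl, hxj, hjy, -, heveny⟩ := hladc' l (by omega) (by omega) hnst
  rcases Nat.eq_or_lt_of_le hjy with hyeq | hylt
  · have := heveny (hyeq ▸ hleven)
    omega
  · obtain ⟨-, -, hent, -, -⟩ := hlad
    have e1 := hent l hxj (by omega)
    have e2 := hent (l+1) (by omega) (by omega)
    omega

/-- overlapping blocks coincide -/
lemma blk_disj (hc : Ctx m a) {k l k' l' j : ℕ} (hb : IsBlockC m a k l)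
    (hb' : IsBlockC m a k' l') (h1 : k ≤ j) (h2 : j ≤ l) (h3 : k' ≤ j) (h4 : j ≤ l') :
    k = k' ∧ l = l' := by
  have hk : k = k' := by
    rcases le_or_gt k k' with h | h
    · exact blk_bot_eq hc hb hb' h h1 h2 h3 h4
    · exact (blk_bot_eq hc hb' hb (by omega) h3 h4 h1 h2).symm
  subst hk
  constructor
  · rfl
  · rcases le_or_gt l l' with h | h
    · exact blk_top_eq hc hb hb' h h2 h1
    · exact (blk_top_eq hc hb' hb (by omega) h4 h3).symm

lemma blocktop_unique (hc : Ctx m a) {l l' : ℕ} (h : IsBlockTopC m a l)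
    (h' : IsBlockTopC m a l') : l = l' := by
  have hb : IsBlockC m a 0 l := Or.inr ⟨rfl, h⟩
  have hb' : IsBlockC m a 0 l' := Or.inr ⟨rfl, h'⟩
  have := blk_struct hc hb
  have := blk_struct hc hb'
  exact (blk_disj (j := 0) hc hb hb' le_rfl (by omega) le_rfl (by omega)).2

end Disj
end St13

namespace St13
section Exist
variable {m : ℕ} {a : ℕ → ℕ}

/-- a block-top-like structure starting at `x` -/
def ExFrom (m : ℕ) (a : ℕ → ℕ) (x l : ℕ) : Prop :=
  ∃ (r : ℕ) (P : ℕ → ℕ × ℕ), 0 < r ∧ (P 0).1 = x ∧ (P (r - 1)).2 = l ∧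
    (∀ s, s < r → IsPartC m a (P s).1 (P s).2) ∧
    (∀ s, s + 1 < r → (P (s + 1)).1 = (P s).2 + 1) ∧
    IsLadderC m a (P (r - 1)).1 (P (r - 1)).2 ∧
    (∀ s, s < r → (Even ((P s).2) ↔ s = r - 1)) ∧
    (∀ s, s < r → Even ((P s).1))

lemma exfrom_single {x y : ℕ} (hx : Even x) (hy : Even y)
    (hl : IsLadderC m a x y) : ExFrom m a x y := by
  refine ⟨1, fun _ => (x, y), one_pos, rfl, rfl, ?_, ?_, hl, ?_, ?_⟩
  · intro s hs; exact Or.inl hl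
  · intro s hs; omega
  · intro s hs
    simp only []
    constructor
    · intro _; omega
    · intro _; exact hy
  · intro s hs; exact hx

lemma exfrom_prepend {x y l : ℕ} (hx : Even x) (hy : ¬ Even y)
    (hp : IsPartC m a x y) (h : ExFrom m a (y+1) l) : ExFrom m a x l := by
  obtain ⟨r, P, hr, h0, hlast, hparts, hchain, hlastlad, htops, hbots⟩ := h
  refine ⟨r + 1, fun s => if s = 0 then (x, y) else P (s - 1), by omega, by simp, ?_, ?_, ?_, ?_, ?_, ?_⟩
  · have : r + 1 - 1 ≠ 0 := by omega
    simp only [this, if_false]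
    simpa using hlast
  · intro s hs
    rcases Nat.eq_zero_or_pos s with rfl | hspos
    · simpa using hp
    · have : s ≠ 0 := by omega
      simp only [this, if_false]
      exact hparts (s-1) (by omega)
  · intro s hs
    rcases Nat.eq_zero_or_pos s with rfl | hspos
    · simp [h0]
    · have h1 : s ≠ 0 := by omega
      have h2 : s + 1 ≠ 0 := by omega
      simp only [h1, h2, if_false]
      have : s - 1 + 1 = s := by omega
      have hc := hchain (s-1) (by omega)
      rw [this] at hc
      exact hc
  · have : r + 1 - 1 ≠ 0 := by omega
    simp only [this, if_false]
    simpa using hlastlad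
  · intro s hs
    rcases Nat.eq_zero_or_pos s with rfl | hspos
    · simp only [if_pos rfl]
      constructor
      · intro h; exact absurd h hy
      · intro h; omega
    · have h1 : s ≠ 0 := by omega
      simp only [h1, if_false]
      have := htops (s-1) (by omega)
      constructor
      · intro he; have := this.1 he; omega
      · intro he; apply this.2; omega
  · intro s hs
    rcases Nat.eq_zero_or_pos s with rfl | hspos
    · simpa using hx
    · have h1 : s ≠ 0 := by omega
      simp only [h1, if_false]
      exact hbots (s-1) (by omega)

/-- invariant at a fresh even bottom -/
def Inv (m : ℕ) (a : ℕ → ℕ) (x : ℕ) : Prop :=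
  x = 0 ∨ (0 < x ∧ a (x-1) + 2 ≤ a x ∧
    (x + 1 ≤ 2*m → a (x+1) = a x → a (x-2) + 3 ≤ a x))

lemma ex_main (hc : Ctx m a) (hm : 1 ≤ m) :
    ∀ N x, 2*m - x ≤ N → x ≤ 2*m → Even x → Inv m a x → ∃ l, ExFrom m a x l := by
  intro N
  induction N with
  | zero =>
    intro x hN hx2m hxe hinv
    have hx : x = 2*m := by omega
    subst hx
    refine ⟨2*m, exfrom_single hxe hxe ⟨le_rfl, le_rfl, ?_, ?_, ?_⟩⟩
    · intro j h1 h2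
      have : j = 2*m := by omega
      rw [this]; omega
    · intro h
      rcases hinv with h0 | ⟨-, hgap, -⟩
      · omega
      · omega
    · intro h; omega
  | succ N ih =>
    intro x hN hx2m hxe hinv
    have hbot : 0 < x → a (x-1) + 1 < a x := by
      intro h
      rcases hinv with h0 | ⟨-, hgap, -⟩
      · omega
      · omega
    rcases Nat.eq_or_lt_of_le hx2m with hx | hxlt
    · -- x = 2m : single ladder
      subst hx
      refine ⟨2*m, exfrom_single hxe hxe ⟨le_rfl, le_rfl, ?_, hbot, ?_⟩⟩
      · intro j h1 h2
        have : j = 2*m := by omega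
        rw [this]; omega
      · intro h; omega
    · by_cases hB : a (x+1) = a x
      · -- stair case
        set G : ℕ → Prop := fun i => x + 1 + 2*i ≤ 2*m ∧
          ∀ t, t < i → (a (x+2*t+2) = a (x+2*t+1) + 2 ∧ a (x+2*t+3) = a (x+2*t+2) ∧ x+2*t+3 ≤ 2*m)
          with hG
        have hG0 : G 0 := ⟨by omega, by intro t ht; omega⟩
        set i0 := Nat.findGreatest G m with hi0
        have hGi : G i0 := Nat.findGreatest_spec (Nat.zero_le m) hG0
        set y := x + 1 + 2*i0 with hy
        have hy2m : y ≤ 2*m := hGi.1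
        have hyodd : ¬ Even y := by
          obtain ⟨u, hu⟩ := hxe
          intro ⟨v, hv⟩
          omega
        have hylt : y < 2*m := by
          rcases Nat.eq_or_lt_of_le hy2m with h | h
          · exact absurd (h ▸ (even_two_mul m : Even (2*m))) hyodd
          · exact h
        -- entries
        have hpp : ∀ t, t ≤ i0 → a (x+2*t) = a x + 2*t ∧ a (x+2*t+1) = a x + 2*t := by
          intro t
          induction t with
          | zero => intro _; constructor <;> simp <;> omega
          | succ v ihv =>
            intro hv
            have hprev := ihv (by omega)
            have := hGi.2 v (by omega)
            constructor
            · have e : x + 2*(v+1) = x+2*v+2 := by ring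
              rw [e]; omega
            · have e : x + 2*(v+1) + 1 = x+2*v+3 := by ring
              rw [e]; omega
        have hstep : a y = a (y-1) := by
          have := hpp i0 le_rfl
          have e1 : x + 2*i0 + 1 = y := by omega
          have e2 : x + 2*i0 = y - 1 := by omega
          rw [e1, e2] at this
          omega
        have hgrow : a y + 2 ≤ a (y+1) := by
          have := hc.2.1 (y-1) (by omega)
          have e : y - 1 + 2 = y + 1 := by omega
          rw [e] at this
          omega
        -- maximality
        have hmax : y + 2 ≤ 2*m → a y + 3 ≤ a (y+2) ∨ (a (y+1) = a y + 2 ∧ a (y+2) ≠ a (y+1)) := by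
          intro hyy
          have hi0m : i0 + 1 ≤ m := by omega
          have hnG : ¬ G (i0 + 1) :=
            Nat.findGreatest_is_greatest (by omega) hi0m
          have hnG2 : ¬ (x + 1 + 2*(i0+1) ≤ 2*m ∧
              ∀ t, t < i0+1 → (a (x+2*t+2) = a (x+2*t+1) + 2 ∧ a (x+2*t+3) = a (x+2*t+2) ∧ x+2*t+3 ≤ 2*m)) := hnG
          push_neg at hnG2
          have h2m : x + 1 + 2*(i0+1) ≤ 2*m := by omega
          obtain ⟨t, ht, hfail⟩ := hnG2 h2m
          have ht' : t = i0 := by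
            by_contra hne
            have htlt : t < i0 := by omega
            have h1 := hfail (hGi.2 t htlt).1 (hGi.2 t htlt).2.1
            have h2 := (hGi.2 t htlt).2.2
            omega
          subst ht'
          have e1 : x + 2*i0 + 2 = y + 1 := by omega
          have e2 : x + 2*i0 + 1 = y := by omega
          have e3 : x + 2*i0 + 3 = y + 2 := by omega
          rw [e1, e2, e3] at hfail
          by_cases hc1 : a (y+1) = a y + 2
          · right
            refine ⟨hc1, ?_⟩
            intro hc2
            have := hfail hc1 hc2
            omega
          · left
            have := hc.mono (y+1) (y+2) (by omega) (by omega)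
            omega
        have hstair : IsStairC m a x y := by
          refine ⟨by omega, hy2m, by omega, ?_, ?_, ?_⟩
          · intro j h1 h2
            rcases Nat.even_or_odd (j - x) with ⟨u, hu⟩ | ⟨u, hu⟩
            · have hu' : u ≤ i0 := by omega
              have := (hpp u hu').1
              have e : j = x + 2*u := by omega
              rw [e]
              have e2 : (x + 2*u - x)/2 = u := by omega
              rw [e2]
              omega
            · have hu' : u ≤ i0 := by omega
              have := (hpp u hu').2
              have e : j = x + 2*u + 1 := by omega
              rw [e]
              have e2 : (x + 2*u + 1 - x)/2 = u := by omega
              rw [e2]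
              omega
          · intro hx1
            rcases hinv with h0 | ⟨-, -, hst⟩
            · omega
            · have := hst (by omega) hB
              omega
          · intro hyy
            rcases hmax hyy with h | ⟨h1, h2⟩
            · omega
            · have := hc.mono (y+1) (y+2) (by omega) (by omega)
              omega
        -- recurse
        have hrec : ∃ l, ExFrom m a (y+1) l := by
          have hpar : Even (y+1) := by
            obtain ⟨u, hu⟩ := hxe
            exact ⟨u + i0 + 1, by omega⟩
          have hinv' : Inv m a (y+1) := by
            right
            refine ⟨by omega, by simpa using hgrow, ?_⟩
            intro h2m heq
            have e2 : y + 1 + 1 = y + 2 := by omega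
            rw [e2] at heq
            have := hmax (by omega)
            rcases this with h | ⟨h1, h2⟩
            · have e : y + 1 - 2 = y - 1 := by omega
              rw [e]
              omega
            · exact absurd heq h2
          exact ih (y+1) (by omega) (by omega) hpar hinv'
        obtain ⟨l, hl⟩ := hrec
        exact ⟨l, exfrom_prepend hxe hyodd (Or.inr hstair) hl⟩
      · -- ladder case
        set Q : ℕ → Prop := fun yy => yy ≤ 2*m ∧ ∀ j, x ≤ j → j < yy → a (j+1) = a j + 1 with hQ
        have hQx : Q x := ⟨hx2m, by intro j h1 h2; omega⟩
        set y := Nat.findGreatest Q (2*m) with hy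
        have hyx : x ≤ y := Nat.le_findGreatest hx2m hQx
        have hQy : Q y := Nat.findGreatest_spec hx2m hQx
        have hy2m : y ≤ 2*m := hQy.1
        have hent : ∀ j, x ≤ j → j ≤ y → a j = a x + (j - x) := by
          intro j h1 h2
          induction j with
          | zero =>
            have : x = 0 := by omega
            simp [this]
          | succ v ihv =>
            rcases Nat.eq_or_lt_of_le h1 with h | h
            · rw [← h]; omega
            · have := ihv (by omega) (by omega)
              have := hQy.2 v (by omega) (by omega)
              omega
        have htopgap : y < 2*m → a y + 1 < a (y+1) := by
          intro hylt
          have hnQ : ¬ Q (y+1) := Nat.findGreatest_is_greatest (n := 2*m) (by omega) (by omega)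
          have hnQ2 : ¬ ((y+1) ≤ 2*m ∧ ∀ j, x ≤ j → j < y+1 → a (j+1) = a j + 1) := hnQ
          push_neg at hnQ2
          obtain ⟨j, hj1, hj2, hj3⟩ := hnQ2 (by omega)
          have hjy : j = y := by
            by_contra hne
            exact hj3 (hQy.2 j hj1 (by omega))
          subst hjy
          have hmono := hc.1 y (by omega)
          -- a (y+1) ≠ a y + 1 and a(y+1) ≥ a y; exclude a (y+1) = a y
          rcases Nat.eq_or_lt_of_le hmono with he | hlt2
          · exfalso
            rcases Nat.eq_or_lt_of_le hyx with heq | hxy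
            · apply hB
              rw [heq]
              omega
            · have := hc.2.1 (y-1) (by omega)
              have e1 := hent (y-1) (by omega) (by omega)
              have e2 := hent y hyx le_rfl
              have e : y - 1 + 2 = y + 1 := by omega
              rw [e] at this
              omega
          · omega
        have hlad : IsLadderC m a x y := ⟨hyx, hy2m, hent, hbot, htopgap⟩
        by_cases hye : Even y
        · exact ⟨y, exfrom_single hxe hye hlad⟩
        · -- recurse
          have hylt : y < 2*m := by
            rcases Nat.eq_or_lt_of_le hy2m with h | h
            · exact absurd (h ▸ (even_two_mul m : Even (2*m))) hye
            · exact h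
          have hxy : x < y := by
            rcases Nat.eq_or_lt_of_le hyx with heq | h
            · exact absurd (heq ▸ hxe) hye
            · exact h
          have hrec : ∃ l, ExFrom m a (y+1) l := by
            have hpar : Even (y+1) := by
              rcases Nat.even_or_odd (y+1) with h | h
              · exact h
              · exfalso
                obtain ⟨u, hu⟩ := h
                exact hye ⟨u, by omega⟩
            have hinv' : Inv m a (y+1) := by
              right
              have hgap := htopgap hylt
              refine ⟨by omega, by simpa using (show a y + 2 ≤ a (y+1) by omega), ?_⟩
              intro h2m heq
              have e0 : y + 1 + 1 = y + 2 := by omega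
              rw [e0] at heq
              have e1 := hent (y-1) (by omega) (by omega)
              have e2 := hent y hyx le_rfl
              have e : y + 1 - 2 = y - 1 := by omega
              rw [e]
              have := hc.2.1 y (by omega)
              omega
            exact ih (y+1) (by omega) (by omega) hpar hinv'
          obtain ⟨l, hl⟩ := hrec
          exact ⟨l, exfrom_prepend hxe hye (Or.inl hlad) hl⟩

lemma exists_blocktop (hc : Ctx m a) (hm : 1 ≤ m) : ∃ l, IsBlockTopC m a l := by
  obtain ⟨l, hl⟩ := ex_main hc hm (2*m) 0 (by omega) (by omega) (Even.zero) (Or.inl rfl)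
  exact ⟨l, hl⟩

end Exist
end St13

namespace St13
section Pairs
variable {m : ℕ} {a : ℕ → ℕ}

lemma einj_par (hc : Ctx m a) {p q : ℕ} (hpar : p % 2 = q % 2) (hp : p ≤ 2*m)
    (hq : q ≤ 2*m) (heq : mapC a p = mapC a q) : p = q := by
  have h1 := hc.mapC_add p hp
  have h2 := hc.mapC_add q hq
  rcases lt_trichotomy p q with h | h | h
  · exfalso
    have hg := hc.grow p ((q - p)/2) (by omega)
    have e : p + 2*((q-p)/2) = q := by omega
    rw [e] at hg
    omega
  · exact h
  · exfalso
    have hg := hc.grow q ((p - q)/2) (by omega)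
    have e : q + 2*((p-q)/2) = p := by omega
    rw [e] at hg
    omega

lemma pair_classify (hc : Ctx m a) {p q : ℕ} (hp : p % 2 = 0) (hq : q % 2 = 1)
    (hp2 : p ≤ 2*m) (hq2 : q ≤ 2*m) (heq : mapC a p = mapC a q) :
    (q = p+1 ∧ a (p+1) = a p + 1) ∨ (p = q+1 ∧ a p = a q) ∨
    (q = p+3 ∧ a (p+1) = a p ∧ a (p+2) = a p + 2 ∧ a (p+3) = a (p+2)) := by
  have h1 := hc.mapC_add p hp2
  have h2 := hc.mapC_add q hq2
  rcases lt_trichotomy p q with h | h | h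
  · -- q > p, q odd
    have hg : a (p+1) + 2*((q-p-1)/2) ≤ a q := by
      have hg := hc.grow (p+1) ((q-p-1)/2) (by omega)
      have e : p + 1 + 2*((q-p-1)/2) = q := by omega
      rwa [e] at hg
    have hmono := hc.1 p (by omega)
    have hu : q = p + 1 ∨ q = p + 3 := by omega
    rcases hu with hu | hu
    · left
      subst hu
      constructor
      · rfl
      · omega
    · right; right
      subst hu
      have hg2 := hc.2.1 p (by omega)
      have hg3 := hc.2.1 (p+1) (by omega)
      have e3 : p + 1 + 2 = p + 3 := by omega
      rw [e3] at hg3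
      have hm1 := hc.1 (p+1) (by omega)
      have e1 : p + 1 + 1 = p + 2 := by omega
      rw [e1] at hm1
      have hm2 := hc.1 (p+2) (by omega)
      have e2 : p + 2 + 1 = p + 3 := by omega
      rw [e2] at hm2
      refine ⟨rfl, by omega, by omega, by omega⟩
  · omega
  · -- p > q
    have hg : a (q+1) + 2*((p-q-1)/2) ≤ a p := by
      have hg := hc.grow (q+1) ((p-q-1)/2) (by omega)
      have e : q + 1 + 2*((p-q-1)/2) = p := by omega
      rwa [e] at hg
    have hmono := hc.1 q (by omega)
    have hu : p = q + 1 := by omega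
    right; left
    subst hu
    exact ⟨rfl, by omega⟩

/-- a matched pair never straddles a block boundary -/
lemma blk_pair (hc : Ctx m a) {k l p q : ℕ} (hb : IsBlockC m a k l)
    (hp : p % 2 = 0) (hq : q % 2 = 1) (hp2 : p ≤ 2*m) (hq2 : q ≤ 2*m)
    (heq : mapC a p = mapC a q) :
    (k ≤ p ∧ p ≤ l) ↔ (k ≤ q ∧ q ≤ l) := by
  obtain ⟨hkl, hl2m, hleven, hkpar, hgapb, hgapt, -, -⟩ := blk_struct hc hb
  have hlev : l % 2 = 0 := Nat.even_iff.1 hleven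
  have hkpar' : k = 0 ∨ k % 2 = 1 := by
    rcases hkpar with h | h
    · exact Or.inl h
    · exact Or.inr (Nat.odd_iff.1 h)
  rcases pair_classify hc hp hq hp2 hq2 heq with ⟨rfl, hstep⟩ | ⟨hpq, hstep⟩ | ⟨rfl, hs1, hs2, hs3⟩
  · constructor
    · rintro ⟨ha1, ha2⟩
      refine ⟨by omega, ?_⟩
      by_contra hcon
      have hlp : l = p := by omega
      subst hlp
      have := hgapt (by omega)
      omega
    · rintro ⟨ha1, ha2⟩
      refine ⟨?_, by omega⟩
      by_contra hcon
      have hkq : k = p + 1 := by omega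
      subst hkq
      have := hgapb (by omega)
      have e : p + 1 - 1 = p := by omega
      rw [e] at this
      omega
  · constructor
    · rintro ⟨ha1, ha2⟩
      refine ⟨?_, by omega⟩
      by_contra hcon
      have hkp : k = p := by omega
      omega
    · rintro ⟨ha1, ha2⟩
      refine ⟨by omega, ?_⟩
      by_contra hcon
      have : l = q := by omega
      omega
  · constructor
    · rintro ⟨ha1, ha2⟩
      refine ⟨by omega, ?_⟩
      by_contra hcon
      have hl : l = p ∨ l = p + 2 := by omega
      have hgt := hgapt (by omega)
      rcases hl with rfl | rfl
      · omega
      · have e : p + 2 + 1 = p + 3 := by omega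
        rw [e] at hgt
        omega
    · rintro ⟨ha1, ha2⟩
      refine ⟨?_, by omega⟩
      by_contra hcon
      have hk : k = p + 1 ∨ k = p + 3 := by omega
      have hgb := hgapb (by omega)
      rcases hk with rfl | rfl
      · have e : p + 1 - 1 = p := by omega
        rw [e] at hgb
        omega
      · have e : p + 3 - 1 = p + 2 := by omega
        rw [e] at hgb
        omega

lemma partner_of_not_isol (hc : Ctx m a) {p : ℕ} (hp2 : p ≤ 2*m)
    (h : ¬ IsIsolC m a p) : ∃ q, q ≤ 2*m ∧ q ≠ p ∧ mapC a q = mapC a p := by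
  rw [IsIsolC] at h
  push_neg at h
  obtain ⟨q, hq1, hq2, hq3⟩ := h hp2
  exact ⟨q, hq1, hq2, hq3⟩

end Pairs
end St13

namespace St13
section Main
variable {m : ℕ} {a : ℕ → ℕ} {S : Finset (ℕ × ℕ)}

/-- membership in the union of the block intervals of S -/
def InU (S : Finset (ℕ × ℕ)) (j : ℕ) : Prop := ∃ p ∈ S, p.1 ≤ j ∧ j ≤ p.2

noncomputable def sigC (S : Finset (ℕ × ℕ)) : ℕ → ℕ := fun j =>
  if InU S j then (if j % 2 = 0 then j - 1 else j + 1) else j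

lemma inU_le2m (hc : Ctx m a) (hS : ∀ p ∈ S, IsBlockC m a p.1 p.2) {j : ℕ}
    (h : InU S j) : j ≤ 2*m := by
  obtain ⟨p, hp, h1, h2⟩ := h
  have := (blk_struct hc (hS p hp)).2.1
  omega

lemma mu_eq (hc : Ctx m a) (hS : ∀ p ∈ S, IsBlockC m a p.1 p.2) :
    ladderIdxSetC m a S =
      (Finset.range (2*m+1)).filter (fun j => InU S j ∧ ¬ StairP m a j) := by
  ext j
  simp only [ladderIdxSetC, Finset.mem_filter, Finset.mem_range]
  constructor
  · rintro ⟨hj, p, hp, x, y, hlad, h1, h2, h3, h4⟩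
    refine ⟨hj, ⟨p, hp, by omega, by omega⟩, ladder_not_stairP hc hlad h3 h4⟩
  · rintro ⟨hj, ⟨p, hp, h1, h2⟩, hnst⟩
    refine ⟨hj, p, hp, ?_⟩
    obtain ⟨-, -, -, -, -, -, hladc, -⟩ := blk_struct hc (hS p hp)
    obtain ⟨x, y, hlad, hx, hy, hxj, hjy, -, -⟩ := hladc j h1 h2 hnst
    exact ⟨x, y, hlad, hx, hy, hxj, hjy⟩

lemma mu_sep (hc : Ctx m a) {i : ℕ} (hi : i ∈ ladderIdxSetC m a S) :
    ∀ p, p ≤ 2*m → p ≠ i → a p ≠ a i := by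
  simp only [ladderIdxSetC, Finset.mem_filter, Finset.mem_range] at hi
  obtain ⟨hj, p, hp, x, y, hlad, h1, h2, h3, h4⟩ := hi
  exact ladder_sep hc hlad h3 h4

lemma mu_val_mem (hc : Ctx m a) {j : ℕ} (hj : j ≤ 2*m) :
    a j ∈ (ladderIdxSetC m a S).image a ↔ j ∈ ladderIdxSetC m a S := by
  constructor
  · intro h
    obtain ⟨i, hi, hie⟩ := Finset.mem_image.1 h
    by_cases hij : j = i
    · rwa [hij]
    · exact absurd hie.symm (mu_sep hc hi j hj hij)
  · intro h
    exact Finset.mem_image_of_mem a h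

lemma stair_pair_even (hc : Ctx m a) (hS : ∀ p ∈ S, IsBlockC m a p.1 p.2) {j : ℕ}
    (hpar : j % 2 = 0) (hu : InU S j) (hst : StairP m a j) :
    a (j+1) = a j ∧ InU S (j+1) ∧ StairP m a (j+1) ∧ (j+1) % 2 = 1 := by
  obtain ⟨p, hp, h1, h2⟩ := hu
  obtain ⟨-, hl2m, -, -, -, -, -, hstc⟩ := blk_struct hc (hS p hp)
  have he : Even j := Nat.even_iff.2 hpar
  obtain ⟨hv, hle⟩ := (hstc j h1 h2 hst).1 he
  refine ⟨hv, ⟨p, hp, by omega, hle⟩, ?_, by omega⟩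
  left
  refine ⟨by omega, ?_⟩
  have e : j + 1 - 1 = j := by omega
  rw [e]
  exact hv

lemma stair_pair_odd (hc : Ctx m a) (hS : ∀ p ∈ S, IsBlockC m a p.1 p.2) {j : ℕ}
    (hpar : j % 2 = 1) (hu : InU S j) (hst : StairP m a j) :
    a j = a (j-1) ∧ InU S (j-1) ∧ StairP m a (j-1) ∧ (j-1) % 2 = 0 ∧ 1 ≤ j := by
  obtain ⟨p, hp, h1, h2⟩ := hu
  obtain ⟨-, hl2m, -, -, -, -, -, hstc⟩ := blk_struct hc (hS p hp)
  have ho : Odd j := Nat.odd_iff.2 hpar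
  obtain ⟨hv, hge⟩ := (hstc j h1 h2 hst).2 ho
  refine ⟨hv, ⟨p, hp, by omega, by omega⟩, ?_, by omega, by omega⟩
  right
  refine ⟨by omega, ?_⟩
  have e : j - 1 + 1 = j := by omega
  rw [e]
  exact hv

lemma u_even_shift (hc : Ctx m a) (hS : ∀ p ∈ S, IsBlockC m a p.1 p.2) {j : ℕ}
    (hpar : j % 2 = 0) (hj : 0 < j) (hu : InU S j) : InU S (j-1) := by
  obtain ⟨p, hp, h1, h2⟩ := hu
  obtain ⟨-, -, -, hkpar, -, -, -, -⟩ := blk_struct hc (hS p hp)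
  have : p.1 ≠ j := by
    rintro rfl
    rcases hkpar with h | h
    · omega
    · rw [Nat.odd_iff] at h; omega
  exact ⟨p, hp, by omega, by omega⟩

lemma u_odd_shift (hc : Ctx m a) (hS : ∀ p ∈ S, IsBlockC m a p.1 p.2) {j : ℕ}
    (hpar : j % 2 = 1) (hu : InU S j) : InU S (j+1) := by
  obtain ⟨p, hp, h1, h2⟩ := hu
  obtain ⟨-, -, hlev, -, -, -, -, -⟩ := blk_struct hc (hS p hp)
  rw [Nat.even_iff] at hlev
  have : p.2 ≠ j := by omega
  exact ⟨p, hp, by omega, by omega⟩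

lemma u_even_pos (hc : Ctx m a) (hS : ∀ p ∈ S, IsBlockC m a p.1 p.2)
    (hS' : ∀ p ∈ S, 0 < p.1) {j : ℕ} (hpar : j % 2 = 0) (hu : InU S j) : 0 < j := by
  obtain ⟨p, hp, h1, h2⟩ := hu
  have := hS' p hp
  omega

end Main
end St13

namespace St13
section Lam
variable {m : ℕ} {a : ℕ → ℕ}

noncomputable def pf (m : ℕ) (a : ℕ → ℕ) : ℕ → ℕ := fun p =>
  if h : ∃ q, q ≤ 2*m ∧ q ≠ p ∧ mapC a q = mapC a p then h.choose else 0

lemma pf_spec (hc : Ctx m a) {p : ℕ} (hp : p ≤ 2*m) (h : ¬ IsIsolC m a p) :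
    pf m a p ≤ 2*m ∧ pf m a p ≠ p ∧ mapC a (pf m a p) = mapC a p ∧
      (pf m a p) % 2 ≠ p % 2 ∧ ¬ IsIsolC m a (pf m a p) := by
  obtain ⟨q, hq1, hq2, hq3⟩ := partner_of_not_isol hc hp h
  have hex : ∃ q, q ≤ 2*m ∧ q ≠ p ∧ mapC a q = mapC a p := ⟨q, hq1, hq2, hq3⟩
  rw [pf, dif_pos hex]
  obtain ⟨h1, h2, h3⟩ := hex.choose_spec
  refine ⟨h1, h2, h3, ?_, ?_⟩
  · intro hpar
    exact h2 (einj_par hc hpar h1 hp h3)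
  · intro hisol
    exact hisol.2 p hp (fun hh => h2 hh.symm) h3.symm

lemma pf_invol (hc : Ctx m a) {p : ℕ} (hp : p ≤ 2*m) (h : ¬ IsIsolC m a p) :
    pf m a (pf m a p) = p := by
  obtain ⟨h1, h2, h3, h4, h5⟩ := pf_spec hc hp h
  obtain ⟨g1, g2, g3, g4, g5⟩ := pf_spec hc h1 h5
  have : (pf m a (pf m a p)) % 2 = p % 2 := by omega
  exact einj_par hc this g1 hp (by rw [g3, h3])

lemma isolIn_eq_filter {k l : ℕ} :
    isolInC m a k l = ((Finset.range (2*m+1)).filter (fun j => k ≤ j ∧ j ≤ l)).filter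
      (fun j => IsIsolC m a j) := by
  ext j
  simp only [isolInC, Finset.mem_filter, Finset.mem_range]
  tauto

lemma isolIn_even (hc : Ctx m a) {k l : ℕ} (hb : IsBlockC m a k l) (hk : 0 < k) :
    Even (isolInC m a k l).card := by
  obtain ⟨hkl, hl2m, hleven, hkpar, -, -, -, -⟩ := blk_struct hc hb
  have hkodd : k % 2 = 1 := by
    rcases hkpar with h | h
    · omega
    · exact Nat.odd_iff.1 h
  have hlev : l % 2 = 0 := Nat.even_iff.1 hleven
  set Ib := (Finset.range (2*m+1)).filter (fun j => k ≤ j ∧ j ≤ l) with hIb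
  have hIbcard : Ib.card = l + 1 - k := by
    have : Ib = Finset.Icc k l := by
      ext j
      simp only [hIb, Finset.mem_filter, Finset.mem_range, Finset.mem_Icc]
      omega
    rw [this, Nat.card_Icc]
  set Pb := Ib.filter (fun j => ¬ IsIsolC m a j) with hPb
  have hsplit : (Ib.filter (fun j => IsIsolC m a j)).card + Pb.card = Ib.card :=
    Finset.card_filter_add_card_filter_not _
  have hPbsplit : (Pb.filter (fun j => j % 2 = 0)).card + (Pb.filter (fun j => ¬ (j % 2 = 0))).card = Pb.card :=
    Finset.card_filter_add_card_filter_not _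
  have hmem : ∀ j ∈ Pb, j ≤ 2*m ∧ ¬ IsIsolC m a j ∧ k ≤ j ∧ j ≤ l := by
    intro j hj
    simp only [hPb, hIb, Finset.mem_filter, Finset.mem_range] at hj
    obtain ⟨⟨h1, h2, h3⟩, h4⟩ := hj
    exact ⟨by omega, h4, h2, h3⟩
  have hbij : (Pb.filter (fun j => j % 2 = 0)).card = (Pb.filter (fun j => ¬ (j % 2 = 0))).card := by
    apply Finset.card_bij' (fun j _ => pf m a j) (fun j _ => pf m a j)
    · intro j hj
      simp only [Finset.mem_filter] at hj
      obtain ⟨hj1, hj2⟩ := hj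
      obtain ⟨m1, m2, m3, m4⟩ := hmem j hj1
      obtain ⟨s1, s2, s3, s4, s5⟩ := pf_spec hc m1 m2
      have hin : k ≤ pf m a j ∧ pf m a j ≤ l := by
        have := blk_pair hc hb hj2 (by omega) m1 s1 s3.symm
        exact this.1 ⟨m3, m4⟩
      simp only [Finset.mem_filter, hPb, hIb, Finset.mem_range]
      refine ⟨⟨⟨by omega, hin⟩, s5⟩, by omega⟩
    · intro j hj
      simp only [Finset.mem_filter] at hj
      obtain ⟨hj1, hj2⟩ := hj
      obtain ⟨m1, m2, m3, m4⟩ := hmem j hj1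
      obtain ⟨s1, s2, s3, s4, s5⟩ := pf_spec hc m1 m2
      have hin : k ≤ pf m a j ∧ pf m a j ≤ l := by
        have := blk_pair hc hb (by omega) (by omega) s1 m1 s3
        exact this.2 ⟨m3, m4⟩
      simp only [Finset.mem_filter, hPb, hIb, Finset.mem_range]
      refine ⟨⟨⟨by omega, hin⟩, s5⟩, by omega⟩
    · intro j hj
      simp only [Finset.mem_filter] at hj
      obtain ⟨m1, m2, -, -⟩ := hmem j hj.1
      exact pf_invol hc m1 m2
    · intro j hj
      simp only [Finset.mem_filter] at hj
      obtain ⟨m1, m2, -, -⟩ := hmem j hj.1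
      exact pf_invol hc m1 m2
  rw [isolIn_eq_filter, ← hIb]
  have h1 : Ib.card % 2 = 0 := by omega
  rw [Nat.even_iff]
  omega

lemma lam_eq (hc : Ctx m a) {S : Finset (ℕ × ℕ)}
    (hS : ∀ p ∈ S, IsBlockC m a p.1 p.2) (hS' : ∀ p ∈ S, 0 < p.1) :
    lamSetC m a S = (Finset.range (2*m+1)).filter
      (fun j => IsIsolC m a j ∧ InU S j) := by
  induction S using Finset.induction_on with
  | empty =>
    simp only [lamSetC, Finset.fold_empty]
    ext j
    simp only [Finset.mem_filter, InU, Finset.notMem_empty]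
    simp
  | @insert p s hp ih =>
    have hSs : ∀ q ∈ s, IsBlockC m a q.1 q.2 := fun q hq => hS q (Finset.mem_insert_of_mem hq)
    have hSs' : ∀ q ∈ s, 0 < q.1 := fun q hq => hS' q (Finset.mem_insert_of_mem hq)
    have hbp : IsBlockC m a p.1 p.2 := hS p (Finset.mem_insert_self p s)
    have hlamb : lambC m a p.1 p.2 = isolInC m a p.1 p.2 := by
      rw [lambC, if_pos (isolIn_even hc hbp (hS' p (Finset.mem_insert_self p s)))]
    have hfold : lamSetC m a (insert p s) = symmDiff (lambC m a p.1 p.2) (lamSetC m a s) := by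
      rw [lamSetC, Finset.fold_insert hp]
      rfl
    rw [hfold, hlamb, ih hSs hSs']
    have hdisj : Disjoint (isolInC m a p.1 p.2)
        ((Finset.range (2*m+1)).filter (fun j => IsIsolC m a j ∧ InU s j)) := by
      rw [Finset.disjoint_left]
      intro j hj1 hj2
      simp only [isolIn_eq_filter, Finset.mem_filter, Finset.mem_range] at hj1
      simp only [Finset.mem_filter, Finset.mem_range] at hj2
      obtain ⟨⟨-, hj3, hj4⟩, -⟩ := hj1
      obtain ⟨-, -, q, hq, hq1, hq2⟩ := hj2
      have := blk_disj hc hbp (hSs q hq) hj3 hj4 hq1 hq2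
      apply hp
      have : p = q := Prod.ext this.1 this.2
      rwa [this]
    rw [hdisj.symmDiff_eq_sup]
    ext j
    simp only [Finset.sup_eq_union, Finset.mem_union, Finset.mem_filter, Finset.mem_range]
    simp only [Finset.sup_eq_union, Finset.mem_union, Finset.mem_filter, Finset.mem_range,
      isolInC, InU, Finset.mem_insert]
    constructor
    · rintro (⟨h1, h2, h3, h4⟩ | ⟨h1, h2, q, hq, hq1, hq2⟩)
      · exact ⟨h1, h2, p, Or.inl rfl, h3, h4⟩
      · exact ⟨h1, h2, q, Or.inr hq, hq1, hq2⟩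
    · rintro ⟨h1, h2, q, hq | hq, hq1, hq2⟩
      · left
        subst hq
        exact ⟨h1, h2, hq1, hq2⟩
      · right
        exact ⟨h1, h2, q, hq, hq1, hq2⟩

end Lam
end St13

namespace St13
section Rows
variable {m : ℕ} {a : ℕ → ℕ} {S : Finset (ℕ × ℕ)}

/-- even positions -/
noncomputable def EvS (m : ℕ) : Finset ℕ := (Finset.range (2*m+1)).filter (fun j => j % 2 = 0)
/-- odd positions -/
noncomputable def OdS (m : ℕ) : Finset ℕ := (Finset.range (2*m+1)).filter (fun j => j % 2 = 1)

lemma evs_image : EvS m = (Finset.range (m+1)).image (fun t => 2*t) := by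
  ext j
  simp only [EvS, Finset.mem_filter, Finset.mem_range, Finset.mem_image]
  constructor
  · rintro ⟨h1, h2⟩
    exact ⟨j/2, by omega, by omega⟩
  · rintro ⟨t, ht, rfl⟩
    omega

lemma ods_image : OdS m = (Finset.range m).image (fun t => 2*t+1) := by
  ext j
  simp only [OdS, Finset.mem_filter, Finset.mem_range, Finset.mem_image]
  constructor
  · rintro ⟨h1, h2⟩
    exact ⟨j/2, by omega, by omega⟩
  · rintro ⟨t, ht, rfl⟩
    omega

lemma evs_val : (EvS m).val = (Multiset.range (m+1)).map (fun t => 2*t) := by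
  rw [evs_image, Finset.image_val, Multiset.dedup_eq_self.2]
  · rfl
  · exact Multiset.Nodup.map_on (by intro x _ y _ h; omega) (Finset.range (m+1)).nodup

lemma ods_val : (OdS m).val = (Multiset.range m).map (fun t => 2*t+1) := by
  rw [ods_image, Finset.image_val, Multiset.dedup_eq_self.2]
  · rfl
  · exact Multiset.Nodup.map_on (by intro x _ y _ h; omega) (Finset.range m).nodup

lemma rowE_eq (c : ℕ → ℕ) : rowEC m c = (EvS m).val.map c := by
  rw [rowEC, evs_val, Multiset.map_map]
  rfl

lemma rowO_eq (c : ℕ → ℕ) : rowOC m c = (OdS m).val.map c := by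
  rw [rowOC, ods_val, Multiset.map_map]
  rfl

lemma evs_mem {j : ℕ} : j ∈ EvS m ↔ j ≤ 2*m ∧ j % 2 = 0 := by
  simp only [EvS, Finset.mem_filter, Finset.mem_range]
  omega

lemma ods_mem {j : ℕ} : j ∈ OdS m ↔ j ≤ 2*m ∧ j % 2 = 1 := by
  simp only [OdS, Finset.mem_filter, Finset.mem_range]
  omega

/-- split a mapped multiset along a predicate -/
lemma map_split (A : Finset ℕ) (P : ℕ → Prop) [DecidablePred P] (g : ℕ → ℕ) :
    A.val.map g = (A.filter P).val.map g + (A.filter (fun j => ¬ P j)).val.map g := by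
  rw [Finset.filter_val, Finset.filter_val, ← Multiset.map_add, Multiset.filter_add_not]

/-- filter a row by values versus filter positions -/
lemma row_filter_eq (A : Finset ℕ) (g : ℕ → ℕ) (P : ℕ → Prop) (Q : ℕ → Prop)
    [DecidablePred P] [DecidablePred Q] (h : ∀ j ∈ A, (P (g j) ↔ Q j)) :
    (A.val.map g).filter P = (A.filter Q).val.map g := by
  rw [Multiset.filter_map, Finset.filter_val]
  congr 1
  apply Multiset.filter_congr
  intro j hj
  exact h j (Finset.mem_val.mp hj)

/-- the staircase swap at the level of `a`-values -/
lemma stair_swap (hc : Ctx m a) (hS : ∀ p ∈ S, IsBlockC m a p.1 p.2) :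
    ((OdS m).filter (fun j => InU S j ∧ StairP m a j)).val.map a =
    ((EvS m).filter (fun j => InU S j ∧ StairP m a j)).val.map a := by
  apply map_of_image (f := fun j => j + 1)
  · intro x _ y _ h; omega
  · ext q
    simp only [Finset.mem_image, Finset.mem_filter, evs_mem, ods_mem]
    constructor
    · rintro ⟨j, ⟨⟨hj1, hj2⟩, hu, hst⟩, rfl⟩
      obtain ⟨hv, hu', hst', hp'⟩ := stair_pair_even hc hS hj2 hu hst
      exact ⟨⟨inU_le2m hc hS hu', hp'⟩, hu', hst'⟩
    · rintro ⟨⟨hq1, hq2⟩, hu, hst⟩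
      obtain ⟨hv, hu', hst', hp', hge⟩ := stair_pair_odd hc hS hq2 hu hst
      refine ⟨q - 1, ⟨⟨by omega, hp'⟩, hu', hst'⟩, by omega⟩
  · intro x hx
    simp only [Finset.mem_filter, evs_mem] at hx
    exact (stair_pair_even hc hS hx.1.2 hx.2.1 hx.2.2).1

/-- the partner swap at the level of `mapC a`-values -/
lemma partner_swap (hc : Ctx m a) (hS : ∀ p ∈ S, IsBlockC m a p.1 p.2) :
    ((OdS m).filter (fun j => InU S j ∧ ¬ IsIsolC m a j)).val.map (mapC a) =
    ((EvS m).filter (fun j => InU S j ∧ ¬ IsIsolC m a j)).val.map (mapC a) := by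
  apply map_of_image (f := pf m a)
  · intro x hx y hy h
    simp only [Finset.mem_filter, evs_mem] at hx hy
    have := pf_invol hc hx.1.1 hx.2.2
    have := pf_invol hc hy.1.1 hy.2.2
    rw [← pf_invol hc hx.1.1 hx.2.2, h, pf_invol hc hy.1.1 hy.2.2]
  · ext q
    simp only [Finset.mem_image, Finset.mem_filter, evs_mem, ods_mem]
    constructor
    · rintro ⟨j, ⟨⟨hj1, hj2⟩, hu, hni⟩, rfl⟩
      obtain ⟨s1, s2, s3, s4, s5⟩ := pf_spec hc hj1 hni
      obtain ⟨p, hp, hp1, hp2⟩ := hu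
      have hblk := blk_pair hc (hS p hp) hj2 (by omega) hj1 s1 s3.symm
      exact ⟨⟨s1, by omega⟩, ⟨p, hp, hblk.1 ⟨hp1, hp2⟩⟩, s5⟩
    · rintro ⟨⟨hq1, hq2⟩, hu, hni⟩
      obtain ⟨s1, s2, s3, s4, s5⟩ := pf_spec hc hq1 hni
      refine ⟨pf m a q, ⟨⟨s1, by omega⟩, ?_, s5⟩, pf_invol hc hq1 hni⟩
      obtain ⟨p, hp, hp1, hp2⟩ := hu
      have hblk := blk_pair hc (hS p hp) (by omega) hq2 s1 hq1 s3
      exact ⟨p, hp, hblk.2 ⟨hp1, hp2⟩⟩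
  · intro x hx
    simp only [Finset.mem_filter, evs_mem] at hx
    exact (pf_spec hc hx.1.1 hx.2.2).2.2.1

/-- the sigma swap: evens in U to odds in U -/
lemma sig_swap (hc : Ctx m a) (hS : ∀ p ∈ S, IsBlockC m a p.1 p.2)
    (hS' : ∀ p ∈ S, 0 < p.1) (g : ℕ → ℕ) :
    ((EvS m).filter (fun j => InU S j)).val.map (fun j => g (j-1)) =
    ((OdS m).filter (fun j => InU S j)).val.map g := by
  symm
  apply map_of_image (f := fun j => j - 1)
  · intro x hx y hy h
    simp only [Finset.mem_filter, evs_mem] at hx hy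
    have h1 : 0 < x := u_even_pos hc hS hS' hx.1.2 hx.2
    have h2 : 0 < y := u_even_pos hc hS hS' hy.1.2 hy.2
    omega
  · ext q
    simp only [Finset.mem_image, Finset.mem_filter, evs_mem, ods_mem]
    constructor
    · rintro ⟨j, ⟨⟨hj1, hj2⟩, hu⟩, rfl⟩
      have h0 : 0 < j := u_even_pos hc hS hS' hj2 hu
      have hu' := u_even_shift hc hS hj2 h0 hu
      exact ⟨⟨by omega, by omega⟩, hu'⟩
    · rintro ⟨⟨hq1, hq2⟩, hu⟩
      have hu' := u_odd_shift hc hS hq2 hu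
      refine ⟨q + 1, ⟨⟨inU_le2m hc hS hu', by omega⟩, hu'⟩, by omega⟩
  · intro x _; rfl

/-- odd version of the sigma swap -/
lemma sig_swap' (hc : Ctx m a) (hS : ∀ p ∈ S, IsBlockC m a p.1 p.2)
    (hS' : ∀ p ∈ S, 0 < p.1) (g : ℕ → ℕ) :
    ((OdS m).filter (fun j => InU S j)).val.map (fun j => g (j+1)) =
    ((EvS m).filter (fun j => InU S j)).val.map g := by
  symm
  apply map_of_image (f := fun j => j + 1)
  · intro x _ y _ h; omega
  · ext q
    simp only [Finset.mem_image, Finset.mem_filter, evs_mem, ods_mem]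
    constructor
    · rintro ⟨j, ⟨⟨hj1, hj2⟩, hu⟩, rfl⟩
      have hu' := u_odd_shift hc hS hj2 hu
      exact ⟨⟨inU_le2m hc hS hu', by omega⟩, hu'⟩
    · rintro ⟨⟨hq1, hq2⟩, hu⟩
      have h0 : 0 < q := u_even_pos hc hS hS' hq2 hu
      have hu' := u_even_shift hc hS hq2 h0 hu
      refine ⟨q - 1, ⟨⟨by omega, by omega⟩, hu'⟩, by omega⟩
  · intro x _; rfl

end Rows
end St13

namespace St13
section C0
variable {m : ℕ} {a : ℕ → ℕ} {S : Finset (ℕ × ℕ)}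

lemma sig_notin {j : ℕ} (h : ¬ InU S j) : sigC S j = j := if_neg h

lemma sig_even {j : ℕ} (h : InU S j) (hp : j % 2 = 0) : sigC S j = j - 1 := by
  rw [sigC, if_pos h, if_pos hp]

lemma sig_odd {j : ℕ} (h : InU S j) (hp : j % 2 = 1) : sigC S j = j + 1 := by
  rw [sigC, if_pos h]
  simp only [hp]
  norm_num

lemma map_split3 (A : Finset ℕ) (P Q : ℕ → Prop) [DecidablePred P] [DecidablePred Q]
    (g : ℕ → ℕ) :
    A.val.map g = ((A.filter (fun j => P j ∧ Q j)).val.map g +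
      (A.filter (fun j => P j ∧ ¬ Q j)).val.map g) + (A.filter (fun j => ¬ P j)).val.map g := by
  rw [map_split A P g]
  congr 1
  rw [map_split (A.filter P) Q g, Finset.filter_filter, Finset.filter_filter]

lemma hmu_iff (hc : Ctx m a) (hS : ∀ p ∈ S, IsBlockC m a p.1 p.2) {j : ℕ} (hj : j ≤ 2*m) :
    j ∈ ladderIdxSetC m a S ↔ InU S j ∧ ¬ StairP m a j := by
  rw [mu_eq hc hS]
  simp only [Finset.mem_filter, Finset.mem_range]
  constructor
  · rintro ⟨-, h⟩
    exact h
  · intro h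
    exact ⟨by omega, h⟩

/-- row E of the twisted symbol, u-level -/
lemma rows_c0_E (hc : Ctx m a) (hS : ∀ p ∈ S, IsBlockC m a p.1 p.2)
    (hS' : ∀ p ∈ S, 0 < p.1) :
    rowEC m (fun j => a (sigC S j)) =
      (rowEC m a).filter (fun v => v ∉ (ladderIdxSetC m a S).image a) +
      (rowOC m a).filter (fun v => v ∈ (ladderIdxSetC m a S).image a) := by
  have hR1 : (rowEC m a).filter (fun v => v ∉ (ladderIdxSetC m a S).image a) =
      ((EvS m).filter (fun j => ¬ (InU S j ∧ ¬ StairP m a j))).val.map a := by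
    rw [rowE_eq]
    apply row_filter_eq
    intro j hj
    have hj2 := (evs_mem.1 hj).1
    rw [mu_val_mem hc hj2, hmu_iff hc hS hj2]
  have hR2 : (rowOC m a).filter (fun v => v ∈ (ladderIdxSetC m a S).image a) =
      ((OdS m).filter (fun j => InU S j ∧ ¬ StairP m a j)).val.map a := by
    rw [rowO_eq]
    apply row_filter_eq
    intro j hj
    have hj2 := (ods_mem.1 hj).1
    rw [mu_val_mem hc hj2, hmu_iff hc hS hj2]
  rw [hR1, hR2]
  -- LHS
  have hL : rowEC m (fun j => a (sigC S j)) =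
      ((OdS m).filter (fun j => InU S j)).val.map a +
      ((EvS m).filter (fun j => ¬ InU S j)).val.map a := by
    rw [rowE_eq, map_split (EvS m) (InU S)]
    congr 1
    · rw [← sig_swap hc hS hS' a]
      apply Multiset.map_congr rfl
      intro j hj
      rw [Finset.filter_val, Multiset.mem_filter] at hj
      rw [sig_even hj.2 ((evs_mem.1 (Finset.mem_val.mp hj.1)).2)]
    · apply Multiset.map_congr rfl
      intro j hj
      rw [Finset.filter_val, Multiset.mem_filter] at hj
      rw [sig_notin hj.2]
  rw [hL]
  -- split odd side by StairP
  rw [map_split ((OdS m).filter (fun j => InU S j)) (StairP m a) a,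
    Finset.filter_filter, Finset.filter_filter]
  -- split RHS even-not-mu part
  have hsplitE : ((EvS m).filter (fun j => ¬ (InU S j ∧ ¬ StairP m a j))).val.map a =
      ((EvS m).filter (fun j => InU S j ∧ StairP m a j)).val.map a +
      ((EvS m).filter (fun j => ¬ InU S j)).val.map a := by
    have e1 : (EvS m).filter (fun j => ¬ (InU S j ∧ ¬ StairP m a j) ∧ InU S j) =
        (EvS m).filter (fun j => InU S j ∧ StairP m a j) := by
      apply Finset.filter_congr
      intro j _
      constructor
      · rintro ⟨h1, h2⟩
        refine ⟨h2, ?_⟩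
        by_contra hst
        exact h1 ⟨h2, hst⟩
      · rintro ⟨h1, h2⟩
        exact ⟨fun hh => hh.2 h2, h1⟩
    have e2 : (EvS m).filter (fun j => ¬ (InU S j ∧ ¬ StairP m a j) ∧ ¬ InU S j) =
        (EvS m).filter (fun j => ¬ InU S j) := by
      apply Finset.filter_congr
      intro j _
      constructor
      · rintro ⟨-, h2⟩
        exact h2
      · intro h
        exact ⟨fun hh => absurd hh.1 h, h⟩
    rw [map_split ((EvS m).filter (fun j => ¬ (InU S j ∧ ¬ StairP m a j))) (InU S) a,
      Finset.filter_filter, Finset.filter_filter, e1, e2]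
  rw [hsplitE, stair_swap hc hS]
  rw [add_assoc, add_assoc]
  congr 1
  rw [add_comm]

/-- row O of the twisted symbol, u-level -/
lemma rows_c0_O (hc : Ctx m a) (hS : ∀ p ∈ S, IsBlockC m a p.1 p.2)
    (hS' : ∀ p ∈ S, 0 < p.1) :
    rowOC m (fun j => a (sigC S j)) =
      (rowOC m a).filter (fun v => v ∉ (ladderIdxSetC m a S).image a) +
      (rowEC m a).filter (fun v => v ∈ (ladderIdxSetC m a S).image a) := by
  have hR1 : (rowOC m a).filter (fun v => v ∉ (ladderIdxSetC m a S).image a) =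
      ((OdS m).filter (fun j => ¬ (InU S j ∧ ¬ StairP m a j))).val.map a := by
    rw [rowO_eq]
    apply row_filter_eq
    intro j hj
    have hj2 := (ods_mem.1 hj).1
    rw [mu_val_mem hc hj2, hmu_iff hc hS hj2]
  have hR2 : (rowEC m a).filter (fun v => v ∈ (ladderIdxSetC m a S).image a) =
      ((EvS m).filter (fun j => InU S j ∧ ¬ StairP m a j)).val.map a := by
    rw [rowE_eq]
    apply row_filter_eq
    intro j hj
    have hj2 := (evs_mem.1 hj).1
    rw [mu_val_mem hc hj2, hmu_iff hc hS hj2]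
  rw [hR1, hR2]
  have hL : rowOC m (fun j => a (sigC S j)) =
      ((EvS m).filter (fun j => InU S j)).val.map a +
      ((OdS m).filter (fun j => ¬ InU S j)).val.map a := by
    rw [rowO_eq, map_split (OdS m) (InU S)]
    congr 1
    · rw [← sig_swap' hc hS hS' a]
      apply Multiset.map_congr rfl
      intro j hj
      rw [Finset.filter_val, Multiset.mem_filter] at hj
      rw [sig_odd hj.2 ((ods_mem.1 (Finset.mem_val.mp hj.1)).2)]
    · apply Multiset.map_congr rfl
      intro j hj
      rw [Finset.filter_val, Multiset.mem_filter] at hj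
      rw [sig_notin hj.2]
  rw [hL]
  rw [map_split ((EvS m).filter (fun j => InU S j)) (StairP m a) a,
    Finset.filter_filter, Finset.filter_filter]
  have hsplitO : ((OdS m).filter (fun j => ¬ (InU S j ∧ ¬ StairP m a j))).val.map a =
      ((OdS m).filter (fun j => InU S j ∧ StairP m a j)).val.map a +
      ((OdS m).filter (fun j => ¬ InU S j)).val.map a := by
    have e1 : (OdS m).filter (fun j => ¬ (InU S j ∧ ¬ StairP m a j) ∧ InU S j) =
        (OdS m).filter (fun j => InU S j ∧ StairP m a j) := by
      apply Finset.filter_congr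
      intro j _
      constructor
      · rintro ⟨h1, h2⟩
        refine ⟨h2, ?_⟩
        by_contra hst
        exact h1 ⟨h2, hst⟩
      · rintro ⟨h1, h2⟩
        exact ⟨fun hh => hh.2 h2, h1⟩
    have e2 : (OdS m).filter (fun j => ¬ (InU S j ∧ ¬ StairP m a j) ∧ ¬ InU S j) =
        (OdS m).filter (fun j => ¬ InU S j) := by
      apply Finset.filter_congr
      intro j _
      constructor
      · rintro ⟨-, h2⟩
        exact h2
      · intro h
        exact ⟨fun hh => absurd hh.1 h, h⟩
    rw [map_split ((OdS m).filter (fun j => ¬ (InU S j ∧ ¬ StairP m a j))) (InU S) a,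
      Finset.filter_filter, Finset.filter_filter, e1, e2]
  rw [hsplitO, stair_swap hc hS]
  rw [add_assoc, add_assoc]
  congr 1
  rw [add_comm]

end C0
end St13

namespace St13
section ILevel
variable {m : ℕ} {a : ℕ → ℕ} {S : Finset (ℕ × ℕ)}

lemma lam_val_mem (hc : Ctx m a) {j : ℕ} (hj : j ≤ 2*m) :
    mapC a j ∈ ((Finset.range (2*m+1)).filter
        (fun i => IsIsolC m a i ∧ InU S i)).image (mapC a) ↔
      IsIsolC m a j ∧ InU S j := by
  constructor
  · intro h
    obtain ⟨q, hq, he⟩ := Finset.mem_image.1 h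
    simp only [Finset.mem_filter, Finset.mem_range] at hq
    by_cases hqj : q = j
    · subst hqj
      exact hq.2
    · exact absurd he.symm (hq.2.1.2 j hj (fun hh => hqj hh.symm))
  · intro h
    apply Finset.mem_image_of_mem
    simp only [Finset.mem_filter, Finset.mem_range]
    exact ⟨by omega, h⟩

lemma mapc0_eq {j : ℕ} : mapC (fun i => a (sigC S i)) j = mapC a (sigC S j) := by
  simp only [mapC]
  rcases Nat.lt_or_ge 0 j with hj | hj
  · by_cases h : InU S j
    · rcases Nat.mod_two_eq_zero_or_one j with hp | hp
      · rw [sig_even h hp]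
        have : (j - 1 + 1)/2 = (j+1)/2 := by omega
        rw [this]
      · rw [sig_odd h hp]
        have : (j + 1 + 1)/2 = (j+1)/2 := by omega
        rw [this]
    · rw [sig_notin h]
  · have hj0 : j = 0 := by omega
    subst hj0
    by_cases h : InU S 0
    · rw [sigC, if_pos h]
      norm_num
    · rw [sig_notin h]

/-- row E of the twisted symbol, i-level -/
lemma rows_c0imap_E (hc : Ctx m a) (hS : ∀ p ∈ S, IsBlockC m a p.1 p.2)
    (hS' : ∀ p ∈ S, 0 < p.1) :
    rowEC m (fun j => mapC a (sigC S j)) =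
      (rowEC m (mapC a)).filter (fun v => v ∉ ((Finset.range (2*m+1)).filter
        (fun i => IsIsolC m a i ∧ InU S i)).image (mapC a)) +
      (rowOC m (mapC a)).filter (fun v => v ∈ ((Finset.range (2*m+1)).filter
        (fun i => IsIsolC m a i ∧ InU S i)).image (mapC a)) := by
  have hR1 : (rowEC m (mapC a)).filter (fun v => v ∉ ((Finset.range (2*m+1)).filter
        (fun i => IsIsolC m a i ∧ InU S i)).image (mapC a)) =
      ((EvS m).filter (fun j => ¬ (IsIsolC m a j ∧ InU S j))).val.map (mapC a) := by
    rw [rowE_eq]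
    apply row_filter_eq
    intro j hj
    have hj2 := (evs_mem.1 hj).1
    rw [lam_val_mem hc hj2]
  have hR2 : (rowOC m (mapC a)).filter (fun v => v ∈ ((Finset.range (2*m+1)).filter
        (fun i => IsIsolC m a i ∧ InU S i)).image (mapC a)) =
      ((OdS m).filter (fun j => IsIsolC m a j ∧ InU S j)).val.map (mapC a) := by
    rw [rowO_eq]
    apply row_filter_eq
    intro j hj
    have hj2 := (ods_mem.1 hj).1
    rw [lam_val_mem hc hj2]
  rw [hR1, hR2]
  have eflip : (OdS m).filter (fun j => IsIsolC m a j ∧ InU S j) =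
      (OdS m).filter (fun j => InU S j ∧ IsIsolC m a j) := by
    apply Finset.filter_congr
    intro j _
    constructor
    · rintro ⟨x, y⟩; exact ⟨y, x⟩
    · rintro ⟨x, y⟩; exact ⟨y, x⟩
  rw [eflip]
  have hL : rowEC m (fun j => mapC a (sigC S j)) =
      ((OdS m).filter (fun j => InU S j)).val.map (mapC a) +
      ((EvS m).filter (fun j => ¬ InU S j)).val.map (mapC a) := by
    rw [rowE_eq, map_split (EvS m) (InU S)]
    congr 1
    · rw [← sig_swap hc hS hS' (mapC a)]
      apply Multiset.map_congr rfl
      intro j hj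
      rw [Finset.filter_val, Multiset.mem_filter] at hj
      rw [sig_even hj.2 ((evs_mem.1 (Finset.mem_val.mp hj.1)).2)]
    · apply Multiset.map_congr rfl
      intro j hj
      rw [Finset.filter_val, Multiset.mem_filter] at hj
      rw [sig_notin hj.2]
  rw [hL]
  rw [map_split ((OdS m).filter (fun j => InU S j)) (IsIsolC m a) (mapC a),
    Finset.filter_filter, Finset.filter_filter]
  have hsplitE : ((EvS m).filter (fun j => ¬ (IsIsolC m a j ∧ InU S j))).val.map (mapC a) =
      ((EvS m).filter (fun j => InU S j ∧ ¬ IsIsolC m a j)).val.map (mapC a) +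
      ((EvS m).filter (fun j => ¬ InU S j)).val.map (mapC a) := by
    have e1 : (EvS m).filter (fun j => ¬ (IsIsolC m a j ∧ InU S j) ∧ InU S j) =
        (EvS m).filter (fun j => InU S j ∧ ¬ IsIsolC m a j) := by
      apply Finset.filter_congr
      intro j _
      constructor
      · rintro ⟨h1, h2⟩
        exact ⟨h2, fun hi => h1 ⟨hi, h2⟩⟩
      · rintro ⟨h1, h2⟩
        exact ⟨fun hh => h2 hh.1, h1⟩
    have e2 : (EvS m).filter (fun j => ¬ (IsIsolC m a j ∧ InU S j) ∧ ¬ InU S j) =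
        (EvS m).filter (fun j => ¬ InU S j) := by
      apply Finset.filter_congr
      intro j _
      constructor
      · rintro ⟨-, h2⟩
        exact h2
      · intro h
        exact ⟨fun hh => absurd hh.2 h, h⟩
    rw [map_split ((EvS m).filter (fun j => ¬ (IsIsolC m a j ∧ InU S j))) (InU S) (mapC a),
      Finset.filter_filter, Finset.filter_filter, e1, e2]
  rw [hsplitE]
  have hsw : ((OdS m).filter (fun j => InU S j ∧ ¬ IsIsolC m a j)).val.map (mapC a) =
      ((EvS m).filter (fun j => InU S j ∧ ¬ IsIsolC m a j)).val.map (mapC a) :=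
    partner_swap hc hS
  rw [hsw]
  rw [add_comm (((OdS m).filter (fun j => InU S j ∧ IsIsolC m a j)).val.map (mapC a))]
  rw [add_assoc, add_assoc]
  congr 1
  rw [add_comm]

/-- row O of the twisted symbol, i-level -/
lemma rows_c0imap_O (hc : Ctx m a) (hS : ∀ p ∈ S, IsBlockC m a p.1 p.2)
    (hS' : ∀ p ∈ S, 0 < p.1) :
    rowOC m (fun j => mapC a (sigC S j)) =
      (rowOC m (mapC a)).filter (fun v => v ∉ ((Finset.range (2*m+1)).filter
        (fun i => IsIsolC m a i ∧ InU S i)).image (mapC a)) +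
      (rowEC m (mapC a)).filter (fun v => v ∈ ((Finset.range (2*m+1)).filter
        (fun i => IsIsolC m a i ∧ InU S i)).image (mapC a)) := by
  have hR1 : (rowOC m (mapC a)).filter (fun v => v ∉ ((Finset.range (2*m+1)).filter
        (fun i => IsIsolC m a i ∧ InU S i)).image (mapC a)) =
      ((OdS m).filter (fun j => ¬ (IsIsolC m a j ∧ InU S j))).val.map (mapC a) := by
    rw [rowO_eq]
    apply row_filter_eq
    intro j hj
    have hj2 := (ods_mem.1 hj).1
    rw [lam_val_mem hc hj2]
  have hR2 : (rowEC m (mapC a)).filter (fun v => v ∈ ((Finset.range (2*m+1)).filter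
        (fun i => IsIsolC m a i ∧ InU S i)).image (mapC a)) =
      ((EvS m).filter (fun j => IsIsolC m a j ∧ InU S j)).val.map (mapC a) := by
    rw [rowE_eq]
    apply row_filter_eq
    intro j hj
    have hj2 := (evs_mem.1 hj).1
    rw [lam_val_mem hc hj2]
  rw [hR1, hR2]
  have eflip : (EvS m).filter (fun j => IsIsolC m a j ∧ InU S j) =
      (EvS m).filter (fun j => InU S j ∧ IsIsolC m a j) := by
    apply Finset.filter_congr
    intro j _
    constructor
    · rintro ⟨x, y⟩; exact ⟨y, x⟩
    · rintro ⟨x, y⟩; exact ⟨y, x⟩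
  rw [eflip]
  have hL : rowOC m (fun j => mapC a (sigC S j)) =
      ((EvS m).filter (fun j => InU S j)).val.map (mapC a) +
      ((OdS m).filter (fun j => ¬ InU S j)).val.map (mapC a) := by
    rw [rowO_eq, map_split (OdS m) (InU S)]
    congr 1
    · rw [← sig_swap' hc hS hS' (mapC a)]
      apply Multiset.map_congr rfl
      intro j hj
      rw [Finset.filter_val, Multiset.mem_filter] at hj
      rw [sig_odd hj.2 ((ods_mem.1 (Finset.mem_val.mp hj.1)).2)]
    · apply Multiset.map_congr rfl
      intro j hj
      rw [Finset.filter_val, Multiset.mem_filter] at hj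
      rw [sig_notin hj.2]
  rw [hL]
  rw [map_split ((EvS m).filter (fun j => InU S j)) (IsIsolC m a) (mapC a),
    Finset.filter_filter, Finset.filter_filter]
  have hsplitO : ((OdS m).filter (fun j => ¬ (IsIsolC m a j ∧ InU S j))).val.map (mapC a) =
      ((OdS m).filter (fun j => InU S j ∧ ¬ IsIsolC m a j)).val.map (mapC a) +
      ((OdS m).filter (fun j => ¬ InU S j)).val.map (mapC a) := by
    have e1 : (OdS m).filter (fun j => ¬ (IsIsolC m a j ∧ InU S j) ∧ InU S j) =
        (OdS m).filter (fun j => InU S j ∧ ¬ IsIsolC m a j) := by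
      apply Finset.filter_congr
      intro j _
      constructor
      · rintro ⟨h1, h2⟩
        exact ⟨h2, fun hi => h1 ⟨hi, h2⟩⟩
      · rintro ⟨h1, h2⟩
        exact ⟨fun hh => h2 hh.1, h1⟩
    have e2 : (OdS m).filter (fun j => ¬ (IsIsolC m a j ∧ InU S j) ∧ ¬ InU S j) =
        (OdS m).filter (fun j => ¬ InU S j) := by
      apply Finset.filter_congr
      intro j _
      constructor
      · rintro ⟨-, h2⟩
        exact h2
      · intro h
        exact ⟨fun hh => absurd hh.2 h, h⟩
    rw [map_split ((OdS m).filter (fun j => ¬ (IsIsolC m a j ∧ InU S j))) (InU S) (mapC a),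
      Finset.filter_filter, Finset.filter_filter, e1, e2]
  rw [hsplitO]
  have hsw : ((OdS m).filter (fun j => InU S j ∧ ¬ IsIsolC m a j)).val.map (mapC a) =
      ((EvS m).filter (fun j => InU S j ∧ ¬ IsIsolC m a j)).val.map (mapC a) :=
    partner_swap hc hS
  rw [← hsw]
  rw [add_comm (((EvS m).filter (fun j => InU S j ∧ IsIsolC m a j)).val.map (mapC a))]
  rw [add_assoc, add_assoc]
  congr 1
  rw [add_comm]

end ILevel
end St13

namespace St13
section Mono
variable {m : ℕ} {a : ℕ → ℕ} {S : Finset (ℕ × ℕ)}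

lemma bdry_low (hc : Ctx m a) (hS : ∀ p ∈ S, IsBlockC m a p.1 p.2)
    (hS' : ∀ p ∈ S, 0 < p.1) {j : ℕ} (h1 : ¬ InU S j) (h2 : InU S (j+1)) :
    a j + 2 ≤ a (j+1) := by
  obtain ⟨p, hp, hp1, hp2⟩ := h2
  have hk : p.1 = j + 1 := by
    by_contra hne
    exact h1 ⟨p, hp, by omega, by omega⟩
  obtain ⟨-, -, -, -, hgapb, -, -, -⟩ := blk_struct hc (hS p hp)
  have := hgapb (hS' p hp)
  rw [hk] at this
  simpa using this

lemma bdry_high (hc : Ctx m a) (hS : ∀ p ∈ S, IsBlockC m a p.1 p.2)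
    {j : ℕ} (h1 : InU S j) (h2 : ¬ InU S (j+1)) (hj : j + 1 ≤ 2*m) :
    a j + 2 ≤ a (j+1) := by
  obtain ⟨p, hp, hp1, hp2⟩ := h1
  have hl : p.2 = j := by
    by_contra hne
    exact h2 ⟨p, hp, by omega, by omega⟩
  obtain ⟨-, -, -, -, -, hgapt, -, -⟩ := blk_struct hc (hS p hp)
  have := hgapt (by omega)
  rw [hl] at this
  exact this

lemma c0_mono (hc : Ctx m a) (hS : ∀ p ∈ S, IsBlockC m a p.1 p.2)
    (hS' : ∀ p ∈ S, 0 < p.1) : ∀ j, j + 2 ≤ 2*m →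
    a (sigC S j) < a (sigC S (j+2)) ∧ mapC a (sigC S j) < mapC a (sigC S (j+2)) := by
  intro j hj
  rcases Nat.mod_two_eq_zero_or_one j with hp | hp
  · by_cases h1 : InU S j <;> by_cases h2 : InU S (j+2)
    · -- both in U : compare a (j-1) and a (j+1)
      rw [sig_even h1 hp, sig_even h2 (by omega)]
      have h0 : 0 < j := u_even_pos hc hS hS' hp h1
      have hg : a (j-1) + 2 ≤ a (j+1) := by
        have := hc.2.1 (j-1) (by omega)
        have e : j - 1 + 2 = j + 1 := by omega
        rwa [e] at this
      have e1 := hc.mapC_add (j-1) (by omega)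
      have e2 := hc.mapC_add (j+1) (by omega)
      have e3 : j + 2 - 1 = j + 1 := by omega
      rw [e3]
      constructor
      · omega
      · omega
    · rw [sig_even h1 hp, sig_notin h2]
      have h0 : 0 < j := u_even_pos hc hS hS' hp h1
      have hm1 : a (j-1) ≤ a j := by
        have := hc.1 (j-1) (by omega)
        have e : j - 1 + 1 = j := by omega
        rwa [e] at this
      have hg := hc.2.1 j (by omega)
      have e1 := hc.mapC_add (j-1) (by omega)
      have e2 := hc.mapC_add (j+2) (by omega)
      constructor
      · omega
      · omega
    · rw [sig_notin h1, sig_even h2 (by omega)]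
      have hu1 : InU S (j+1) := by
        have := u_even_shift hc hS (by omega : (j+2) % 2 = 0) (by omega) h2
        simpa using this
      have hg := bdry_low hc hS hS' h1 hu1
      have e1 := hc.mapC_add j (by omega)
      have e2 := hc.mapC_add (j+1) (by omega)
      have e3 : j + 2 - 1 = j + 1 := by omega
      rw [e3]
      constructor
      · omega
      · omega
    · rw [sig_notin h1, sig_notin h2]
      have hg := hc.2.1 j (by omega)
      have e1 := hc.mapC_add j (by omega)
      have e2 := hc.mapC_add (j+2) (by omega)
      constructor
      · omega
      · omega
  · by_cases h1 : InU S j <;> by_cases h2 : InU S (j+2)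
    · rw [sig_odd h1 hp, sig_odd h2 (by omega)]
      have hu3 : InU S (j+3) := by
        have := u_odd_shift hc hS (by omega : (j+2) % 2 = 1) h2
        simpa using this
      have h3m : j + 3 ≤ 2*m := inU_le2m hc hS hu3
      have hg : a (j+1) + 2 ≤ a (j+3) := by
        have := hc.2.1 (j+1) (by omega)
        have e : j + 1 + 2 = j + 3 := by omega
        rwa [e] at this
      have e1 := hc.mapC_add (j+1) (by omega)
      have e2 := hc.mapC_add (j+3) (by omega)
      have e3 : j + 2 + 1 = j + 3 := by omega
      rw [e3]
      constructor
      · omega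
      · omega
    · rw [sig_odd h1 hp, sig_notin h2]
      have hu1 : InU S (j+1) := u_odd_shift hc hS hp h1
      have hg := bdry_high hc hS hu1 (by simpa using h2) (by omega)
      have e0 : j + 1 + 1 = j + 2 := by omega
      rw [e0] at hg
      have e1 := hc.mapC_add (j+1) (by omega)
      have e2 := hc.mapC_add (j+2) (by omega)
      constructor
      · omega
      · omega
    · rw [sig_notin h1, sig_odd h2 (by omega)]
      have hu3 : InU S (j+3) := by
        have := u_odd_shift hc hS (by omega : (j+2) % 2 = 1) h2
        simpa using this
      have h3m : j + 3 ≤ 2*m := inU_le2m hc hS hu3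
      have hg := hc.2.1 j (by omega)
      have hm3 : a (j+2) ≤ a (j+3) := by
        have := hc.1 (j+2) (by omega)
        have e : j + 2 + 1 = j + 3 := by omega
        rwa [e] at this
      have e1 := hc.mapC_add j (by omega)
      have e2 := hc.mapC_add (j+3) (by omega)
      have e3 : j + 2 + 1 = j + 3 := by omega
      rw [e3]
      constructor
      · omega
      · omega
    · rw [sig_notin h1, sig_notin h2]
      have hg := hc.2.1 j (by omega)
      have e1 := hc.mapC_add j (by omega)
      have e2 := hc.mapC_add (j+2) (by omega)
      constructor
      · omega
      · omega

end Mono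

section Count
variable {m : ℕ} {a : ℕ → ℕ} {S : Finset (ℕ × ℕ)}

lemma count_st (hc : Ctx m a) (hS : ∀ p ∈ S, IsBlockC m a p.1 p.2) :
    ((EvS m).filter (fun j => InU S j ∧ StairP m a j)).card =
    ((OdS m).filter (fun j => InU S j ∧ StairP m a j)).card := by
  refine Finset.card_bij' (fun j _ => j + 1) (fun j _ => j - 1) ?hi ?hj ?li ?ri
  case hi =>
    intro j hj
    simp only [Finset.mem_filter, evs_mem] at hj
    obtain ⟨⟨hj1, hj2⟩, hu, hst⟩ := hj
    obtain ⟨hv, hu', hst', hp'⟩ := stair_pair_even hc hS hj2 hu hst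
    simp only [Finset.mem_filter, ods_mem]
    exact ⟨⟨inU_le2m hc hS hu', hp'⟩, hu', hst'⟩
  case hj =>
    intro j hj
    simp only [Finset.mem_filter, ods_mem] at hj
    obtain ⟨⟨hj1, hj2⟩, hu, hst⟩ := hj
    obtain ⟨hv, hu', hst', hp', hge⟩ := stair_pair_odd hc hS hj2 hu hst
    simp only [Finset.mem_filter, evs_mem]
    exact ⟨⟨by omega, hp'⟩, hu', hst'⟩
  case li =>
    intro j hj
    show j + 1 - 1 = j
    omega
  case ri =>
    intro j hj
    simp only [Finset.mem_filter, ods_mem] at hj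
    show j - 1 + 1 = j
    omega

lemma count_U0 (hc : Ctx m a) (hS : ∀ p ∈ S, IsBlockC m a p.1 p.2) (h0 : InU S 0) :
    ((EvS m).filter (fun j => InU S j)).card =
    ((OdS m).filter (fun j => InU S j)).card + 1 := by
  have h0mem : 0 ∈ (EvS m).filter (fun j => InU S j) := by
    exact Finset.mem_filter.2 ⟨evs_mem.2 ⟨by omega, by omega⟩, h0⟩
  rw [← Finset.card_erase_add_one h0mem]
  congr 1
  refine Finset.card_bij' (fun j _ => j - 1) (fun j _ => j + 1) ?hi ?hj ?li ?ri
  case hi =>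
    intro j hj
    simp only [Finset.mem_erase, Finset.mem_filter, evs_mem] at hj
    obtain ⟨hne, ⟨hj1, hj2⟩, hu⟩ := hj
    have hu' := u_even_shift hc hS hj2 (by omega) hu
    simp only [Finset.mem_filter, ods_mem]
    exact ⟨⟨by omega, by omega⟩, hu'⟩
  case hj =>
    intro j hj
    simp only [Finset.mem_filter, ods_mem] at hj
    obtain ⟨⟨hj1, hj2⟩, hu⟩ := hj
    have hu' := u_odd_shift hc hS hj2 hu
    simp only [Finset.mem_erase, Finset.mem_filter, evs_mem]
    exact ⟨by omega, ⟨inU_le2m hc hS hu', by omega⟩, hu'⟩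
  case li =>
    intro j hj
    simp only [Finset.mem_erase, Finset.mem_filter, evs_mem] at hj
    show j - 1 + 1 = j
    omega
  case ri =>
    intro j hj
    show j + 1 - 1 = j
    omega

lemma no_twist (hc : Ctx m a) (hS : ∀ p ∈ S, IsBlockC m a p.1 p.2) (h0 : InU S 0) :
    ∀ c', ¬ IsTwistC m a (ladderIdxSetC m a S) c' := by
  intro c' htw
  have hE := htw.2.2.2.1
  have hcard : Multiset.card (rowEC m c') = m + 1 := by
    rw [rowEC, Multiset.card_map, Multiset.card_range]
  have hR1 : (rowEC m a).filter (fun v => v ∉ (ladderIdxSetC m a S).image a) =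
      ((EvS m).filter (fun j => ¬ (InU S j ∧ ¬ StairP m a j))).val.map a := by
    rw [rowE_eq]
    apply row_filter_eq
    intro j hj
    have hj2 := (evs_mem.1 hj).1
    rw [mu_val_mem hc hj2, hmu_iff hc hS hj2]
  have hR2 : (rowOC m a).filter (fun v => v ∈ (ladderIdxSetC m a S).image a) =
      ((OdS m).filter (fun j => InU S j ∧ ¬ StairP m a j)).val.map a := by
    rw [rowO_eq]
    apply row_filter_eq
    intro j hj
    have hj2 := (ods_mem.1 hj).1
    rw [mu_val_mem hc hj2, hmu_iff hc hS hj2]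
  rw [hE, hR1, hR2] at hcard
  rw [Multiset.card_add, Multiset.card_map, Multiset.card_map] at hcard
  -- now pure counting
  have hEcard : (EvS m).card = m + 1 := by
    rw [evs_image, Finset.card_image_of_injective _ (fun x y h => by omega),
      Finset.card_range]
  have hOcard : (OdS m).card = m := by
    rw [ods_image, Finset.card_image_of_injective _ (fun x y h => by omega),
      Finset.card_range]
  have hsE := Finset.card_filter_add_card_filter_not
    (s := EvS m) (p := fun j => InU S j ∧ ¬ StairP m a j)
  have hsO := Finset.card_filter_add_card_filter_not
    (s := OdS m) (p := fun j => InU S j ∧ ¬ StairP m a j)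
  -- split (InU) into (InU ∧ ¬St) + (InU ∧ St) on both parities
  have hsE2 := Finset.card_filter_add_card_filter_not
    (s := (EvS m).filter (fun j => InU S j)) (p := fun j => StairP m a j)
  have hsO2 := Finset.card_filter_add_card_filter_not
    (s := (OdS m).filter (fun j => InU S j)) (p := fun j => StairP m a j)
  rw [Finset.filter_filter, Finset.filter_filter] at hsE2 hsO2
  have hcu := count_U0 hc hS h0
  have hcs := count_st hc hS
  have hfc : (Finset.filter (fun j => InU S j ∧ ¬ StairP m a j) (EvS m)).card =
      (Finset.filter (fun j => InU S j ∧ ¬ (fun j => StairP m a j) j) (EvS m)).card := rfl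
  have hfc2 : (Finset.filter (fun j => InU S j ∧ ¬ StairP m a j) (OdS m)).card =
      (Finset.filter (fun j => InU S j ∧ ¬ (fun j => StairP m a j) j) (OdS m)).card := rfl
  have hb1 : Multiset.card ((Finset.filter (fun j => ¬ (InU S j ∧ ¬ StairP m a j)) (EvS m)).val) =
      (Finset.filter (fun j => ¬ (InU S j ∧ ¬ StairP m a j)) (EvS m)).card := rfl
  have hb2 : Multiset.card ((Finset.filter (fun j => InU S j ∧ ¬ StairP m a j) (OdS m)).val) =
      (Finset.filter (fun j => InU S j ∧ ¬ StairP m a j) (OdS m)).card := rfl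
  omega

end Count
end St13


/-- Let `a` be a distinguished type-C u-symbol.  Then `a` has exactly one
bottomless block `b₀ = [0, l₀]`, and for a set `S` of blocks of `a` the twist
`a^S` is defined if and only if `b₀ ∉ S`; moreover for every such `S`,
`i(a^S) = (i(a))^{λ_S}`. -/
theorem stmt13 (n m : ℕ) (hn : 1 ≤ n) (hm : 1 ≤ m) (a : ℕ → ℕ)
    (ha : IsUSymC n m a) (hdist : DistC m a) :
    (∃! l₀, IsBlockTopC m a l₀) ∧
    ∀ S ⊆ blocksC m a,
      ((∃ c', IsTwistC m a (ladderIdxSetC m a S) c') ↔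
        ∀ l₀, IsBlockTopC m a l₀ → (0, l₀) ∉ S) ∧
      (∀ c', IsTwistC m a (ladderIdxSetC m a S) c' →
        IsTwistC m (mapC a) (lamSetC m a S) (mapC c')) := by
  
  have hc : St13.Ctx m a := ⟨hdist, ha.2.1, ha.1⟩
  obtain ⟨l₀, hl₀⟩ := St13.exists_blocktop hc hm
  have huniq : ∀ l, IsBlockTopC m a l → l = l₀ :=
    fun l h => St13.blocktop_unique hc h hl₀
  constructor
  · exact ⟨l₀, hl₀, fun l h => huniq l h⟩
  intro S hSsub
  have hSblk : ∀ p ∈ S, IsBlockC m a p.1 p.2 := by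
    intro p hp
    have := hSsub hp
    simp only [blocksC, Finset.mem_filter] at this
    exact this.2
  have hnb0 : ∀ l, ¬ IsBlockBotC m a 0 l := by
    intro l hbot
    obtain ⟨r, P, hr, h0, -, -, -, -, -, -, hbots⟩ := hbot
    have hodd := (hbots 0 hr).2 rfl
    rw [h0, Nat.odd_iff] at hodd
    omega
  by_cases h0S : St13.InU S 0
  · have hnt := St13.no_twist hc hSblk h0S
    have hcond : ¬ ∀ l, IsBlockTopC m a l → (0, l) ∉ S := by
      intro hcond
      obtain ⟨p, hp, hp1, hp2⟩ := h0S
      have hp10 : p.1 = 0 := by omega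
      have hblk := hSblk p hp
      rw [hp10] at hblk
      rcases hblk with hbot | ⟨-, htop⟩
      · exact hnb0 p.2 hbot
      · apply hcond p.2 htop
        have he : p = (0, p.2) := Prod.ext hp10 rfl
        rwa [← he]
    refine ⟨⟨?_, ?_⟩, ?_⟩
    · rintro ⟨c', hc'⟩
      exact absurd hc' (hnt c')
    · intro h
      exact absurd h hcond
    · intro c' hc'
      exact absurd hc' (hnt c')
  · have hS' : ∀ p ∈ S, 0 < p.1 := by
      intro p hp
      by_contra hcon
      exact h0S ⟨p, hp, by omega, by omega⟩
    have htwist0 : IsTwistC m a (ladderIdxSetC m a S) (fun j => a (St13.sigC S j)) := by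
      refine ⟨?_, ?_, ?_, St13.rows_c0_E hc hSblk hS', St13.rows_c0_O hc hSblk hS'⟩
      · intro i hi
        simp only [ladderIdxSetC, Finset.mem_filter, Finset.mem_range] at hi
        omega
      · intro i hi j hj hne
        exact St13.mu_sep hc hi j hj hne
      · intro j hj
        exact (St13.c0_mono hc hSblk hS' j hj).1
    refine ⟨⟨?_, ?_⟩, ?_⟩
    · intro _ l htop hmem
      have := hS' (0, l) hmem
      simp at this
    · intro _
      exact ⟨_, htwist0⟩
    · intro c' htw
      have hslotE : ∀ t, t < m + 1 → c' (2*t) = a (St13.sigC S (2*t)) := by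
        apply St13.sorted_unique (m+1) (fun t => c' (2*t)) (fun t => a (St13.sigC S (2*t)))
        · intro t ht
          have h2 := htw.2.2.1 (2*t) (by omega)
          have e : 2*t+2 = 2*(t+1) := by ring
          rwa [e] at h2
        · intro t ht
          have h2 := (St13.c0_mono hc hSblk hS' (2*t) (by omega)).1
          have e : 2*t+2 = 2*(t+1) := by ring
          rwa [e] at h2
        · exact htw.2.2.2.1.trans (St13.rows_c0_E hc hSblk hS').symm
      have hslotO : ∀ t, t < m → c' (2*t+1) = a (St13.sigC S (2*t+1)) := by
        apply St13.sorted_unique m (fun t => c' (2*t+1)) (fun t => a (St13.sigC S (2*t+1)))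
        · intro t ht
          have h2 := htw.2.2.1 (2*t+1) (by omega)
          have e : 2*t+1+2 = 2*(t+1)+1 := by ring
          rwa [e] at h2
        · intro t ht
          have h2 := (St13.c0_mono hc hSblk hS' (2*t+1) (by omega)).1
          have e : 2*t+1+2 = 2*(t+1)+1 := by ring
          rwa [e] at h2
        · exact htw.2.2.2.2.trans (St13.rows_c0_O hc hSblk hS').symm
      have hceq : ∀ j, j ≤ 2*m → c' j = a (St13.sigC S j) := by
        intro j hj
        rcases Nat.mod_two_eq_zero_or_one j with hp | hp
        · have h2 := hslotE (j/2) (by omega)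
          have e : 2*(j/2) = j := by omega
          rwa [e] at h2
        · have h2 := hslotO (j/2) (by omega)
          have e : 2*(j/2)+1 = j := by omega
          rwa [e] at h2
      rw [St13.lam_eq hc hSblk hS']
      have hmapeq : ∀ j, j ≤ 2*m → mapC c' j = mapC a (St13.sigC S j) := by
        intro j hj
        rw [← St13.mapc0_eq]
        simp only [mapC]
        rw [hceq j hj]
      refine ⟨?_, ?_, ?_, ?_, ?_⟩
      · intro i hi
        simp only [Finset.mem_filter, Finset.mem_range] at hi
        omega
      · intro i hi j hj hne
        simp only [Finset.mem_filter, Finset.mem_range] at hi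
        exact hi.2.1.2 j hj hne
      · intro j hj
        rw [hmapeq j (by omega), hmapeq (j+2) (by omega)]
        exact (St13.c0_mono hc hSblk hS' j hj).2
      · have hcongr : rowEC m (mapC c') = rowEC m (fun j => mapC a (St13.sigC S j)) := by
          rw [rowEC, rowEC]
          apply Multiset.map_congr rfl
          intro t ht
          rw [Multiset.mem_range] at ht
          exact hmapeq (2*t) (by omega)
        rw [hcongr]
        exact St13.rows_c0imap_E hc hSblk hS'
      · have hcongr : rowOC m (mapC c') = rowOC m (fun j => mapC a (St13.sigC S j)) := by
          rw [rowOC, rowOC]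
          apply Multiset.map_congr rfl
          intro t ht
          rw [Multiset.mem_range] at ht
          exact hmapeq (2*t+1) (by omega)
        rw [hcongr]
        exact St13.rows_c0imap_O hc hSblk hS'
end

section
/- Let λ = (λ_0 ≤ λ_1 ≤ ⋯ ≤ λ_{2m}) be a nondecreasing sequence of nonnegative integers with λ_0 + ⋯ + λ_{2m} = 2n in which every odd value occurs an even number of times. Define a = (a_0, …, a_{2m}) by: a_i = λ_i/2 + i if λ_i is even; a_i = (λ_i − 1)/2 + i if λ_i is odd and the number of indices j > i with λ_j odd is even; and a_i = (λ_i + 1)/2 + i if λ_i is odd and the number of indices j > i with λ_j odd is odd. Then a is a distinguished type-C u-symbol of rank n, and for every maximal constant run [k,l] of λ (i.e. λ_k = ⋯ = λ_l = p, with λ_{k−1} < p if k > 0 and λ_{l+1} > p if l < 2m): if p is even then [k,l] is a ladder of a, and if p is odd then [k,l] is a staircase of a. -/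
open scoped Classical

/-- The u-symbol associated to a partition `λ` (indexed `0,…,2m`):
`a i = λ i / 2 + i` if `λ i` is even; `a i = (λ i - 1)/2 + i` if `λ i` is odd and
the number of indices `j > i` with `λ j` odd is even; and
`a i = (λ i + 1)/2 + i` if `λ i` is odd and that number is odd. -/
def aOfC (m : ℕ) (lam : ℕ → ℕ) : ℕ → ℕ := fun i =>
  if Even (lam i) then lam i / 2 + i
  else if Even (((Finset.range (2 * m + 1)).filter fun j => i < j ∧ ¬ Even (lam j)).card)
    then (lam i - 1) / 2 + i
    else (lam i + 1) / 2 + i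



/-- count of odd entries of `lam` with index in `[i, 2m]`. -/
def uCg (m : ℕ) (lam : ℕ → ℕ) (i : ℕ) : ℕ :=
  ((Finset.Ico i (2 * m + 1)).filter fun j => ¬ Even (lam j)).card

lemma uCg_aux (m : ℕ) (lam : ℕ → ℕ) (i : ℕ) :
    ((Finset.range (2 * m + 1)).filter fun j => i < j ∧ ¬ Even (lam j)).card
      = uCg m lam (i + 1) := by
  unfold uCg
  congr 1
  ext j
  simp only [Finset.mem_filter, Finset.mem_range, Finset.mem_Ico]
  constructor
  · rintro ⟨h1, h2, h3⟩; exact ⟨⟨by omega, h1⟩, h3⟩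
  · rintro ⟨⟨h1, h2⟩, h3⟩; exact ⟨h2, by omega, h3⟩

lemma aOfC_eq (m : ℕ) (lam : ℕ → ℕ) (i : ℕ) :
    aOfC m lam i = i + lam i / 2 +
      (if ¬ Even (lam i) ∧ ¬ Even (uCg m lam (i + 1)) then 1 else 0) := by
  unfold aOfC
  rw [uCg_aux m lam i]
  by_cases h : Even (lam i)
  · simp [h]; omega
  · have h1 : lam i % 2 = 1 := Nat.not_even_iff.mp h
    by_cases h2 : Even (uCg m lam (i + 1)) <;> simp [h, h2] <;> omega

lemma aOfC_lb (m : ℕ) (lam : ℕ → ℕ) (i : ℕ) : i + lam i / 2 ≤ aOfC m lam i := by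
  rw [aOfC_eq]; split <;> omega

lemma aOfC_ub (m : ℕ) (lam : ℕ → ℕ) (i : ℕ) : aOfC m lam i ≤ i + (lam i + 1) / 2 := by
  rw [aOfC_eq]
  split_ifs with h
  · have := Nat.not_even_iff.mp h.1; omega
  · omega

lemma filter_Ico_card_step (M i : ℕ) (P : ℕ → Prop) [DecidablePred P] (hi : i < M) :
    ((Finset.Ico i M).filter P).card
      = ((Finset.Ico (i + 1) M).filter P).card + (if P i then 1 else 0) := by
  rw [← Finset.insert_Ico_add_one_left_eq_Ico hi, Finset.filter_insert]
  have hnm : i ∉ (Finset.Ico (i + 1) M).filter P := by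
    simp [Finset.mem_Ico]
  split_ifs with h
  · rw [Finset.card_insert_of_notMem hnm]
  · rfl

lemma gC_step (m : ℕ) (lam : ℕ → ℕ) (i : ℕ) (hi : i < 2 * m + 1) :
    uCg m lam i = uCg m lam (i + 1) + (if ¬ Even (lam i) then 1 else 0) :=
  filter_Ico_card_step (2 * m + 1) i _ hi

lemma gC_split (m : ℕ) (lam : ℕ → ℕ) (i j : ℕ) (hij : i ≤ j) (hj : j ≤ 2 * m + 1) :
    uCg m lam i = ((Finset.Ico i j).filter fun t => ¬ Even (lam t)).card + uCg m lam j := by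
  unfold uCg
  rw [← Finset.card_union_of_disjoint
    (Finset.disjoint_filter_filter (Finset.Ico_disjoint_Ico_consecutive i j (2 * m + 1))),
    ← Finset.filter_union, Finset.Ico_union_Ico_eq_Ico hij hj]

/-- The number of odd entries with value above any threshold is even. -/
lemma even_card_gt (m : ℕ) (lam : ℕ → ℕ)
    (hodd : ∀ p, Odd p →
      Even (((Finset.range (2 * m + 1)).filter fun j => lam j = p).card)) (t : ℕ) :
    Even (((Finset.range (2 * m + 1)).filter fun j => ¬ Even (lam j) ∧ t < lam j).card) := by
  classical
  set S := (Finset.range (2 * m + 1)).filter fun j => ¬ Even (lam j) ∧ t < lam j with hS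
  rw [Finset.card_eq_sum_card_image lam S, Nat.even_iff, Finset.sum_nat_mod]
  have hz : ∀ q ∈ S.image lam, (S.filter fun a => lam a = q).card % 2 = 0 := by
    intro q hq
    obtain ⟨j0, hj0, hj0q⟩ := Finset.mem_image.mp hq
    rw [hS, Finset.mem_filter] at hj0
    have hqodd : ¬ Even q := hj0q ▸ hj0.2.1
    have hqt : t < q := hj0q ▸ hj0.2.2
    have hfe : (S.filter fun a => lam a = q)
        = (Finset.range (2 * m + 1)).filter fun j => lam j = q := by
      rw [hS, Finset.filter_filter]
      apply Finset.filter_congr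
      intro x _
      constructor
      · rintro ⟨_, h⟩; exact h
      · intro h; exact ⟨⟨h ▸ hqodd, h ▸ hqt⟩, h⟩
    rw [hfe, ← Nat.even_iff]
    exact hodd q (Nat.odd_iff.mpr (Nat.not_even_iff.mp hqodd))
  rw [Finset.sum_congr rfl hz]
  simp

lemma lam_mono (m : ℕ) (lam : ℕ → ℕ) (hmono : ∀ i, i + 1 ≤ 2 * m → lam i ≤ lam (i + 1)) :
    ∀ i j, i ≤ j → j ≤ 2 * m → lam i ≤ lam j := by
  intro i j hij
  induction hij with
  | refl => intro _; exact le_rfl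
  | step h ih => intro hj; exact le_trans (ih (by omega)) (hmono _ hj)

/-- `Even (uCg m lam (l+1))` when `lam l = p` and everything after `l` is `> p`. -/
lemma gC_tail_even (m : ℕ) (lam : ℕ → ℕ)
    (hodd : ∀ p, Odd p →
      Even (((Finset.range (2 * m + 1)).filter fun j => lam j = p).card))
    (hmono' : ∀ i j, i ≤ j → j ≤ 2 * m → lam i ≤ lam j)
    (l p : ℕ) (hl : l ≤ 2 * m) (hlp : lam l = p) (hgt : l < 2 * m → p < lam (l + 1)) :
    Even (uCg m lam (l + 1)) := by
  rcases Nat.eq_or_lt_of_le hl with rfl | hlt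
  · unfold uCg
    rw [show 2 * m + 1 = 2 * m + 1 from rfl]
    have : Finset.Ico (2 * m + 1) (2 * m + 1) = ∅ := Finset.Ico_self _
    rw [this]
    simp
  · have key : ((Finset.Ico (l + 1) (2 * m + 1)).filter fun j => ¬ Even (lam j))
        = (Finset.range (2 * m + 1)).filter fun j => ¬ Even (lam j) ∧ p < lam j := by
      ext j
      simp only [Finset.mem_filter, Finset.mem_Ico, Finset.mem_range]
      constructor
      · rintro ⟨⟨h1, h2⟩, h3⟩
        exact ⟨h2, h3, lt_of_lt_of_le (hgt hlt) (hmono' (l + 1) j h1 (by omega))⟩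
      · rintro ⟨h1, h2, h3⟩
        refine ⟨⟨?_, h1⟩, h2⟩
        by_contra hc
        push_neg at hc
        have := hmono' j l (by omega) hl
        omega
    unfold uCg
    rw [key]
    exact even_card_gt m lam hodd p

/-- In a constant odd run `[k,l]`, `uCg (j+1) = (l - j) + uCg (l+1)`. -/
lemma gC_in_run (m : ℕ) (lam : ℕ → ℕ) (k l p : ℕ) (hl : l ≤ 2 * m)
    (hconst : ∀ j, k ≤ j → j ≤ l → lam j = p) (hp : ¬ Even p)
    (j : ℕ) (hj1 : k ≤ j) (hj2 : j ≤ l) :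
    uCg m lam (j + 1) = (l - j) + uCg m lam (l + 1) := by
  rw [gC_split m lam (j + 1) (l + 1) (by omega) (by omega)]
  congr 1
  rw [Finset.filter_true_of_mem, Nat.card_Ico]
  · omega
  · intro t ht
    rw [Finset.mem_Ico] at ht
    rw [hconst t (by omega) (by omega)]
    exact hp

/-- In a constant even run `[k,l]`, `uCg k = uCg (l+1)`. -/
lemma gC_run_even (m : ℕ) (lam : ℕ → ℕ) (k l p : ℕ) (hkl : k ≤ l) (hl : l ≤ 2 * m)
    (hconst : ∀ j, k ≤ j → j ≤ l → lam j = p) (hp : Even p) :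
    uCg m lam k = uCg m lam (l + 1) := by
  rw [gC_split m lam k (l + 1) (by omega) (by omega), Finset.filter_false_of_mem,
    Finset.card_empty, Nat.zero_add]
  intro t ht
  rw [Finset.mem_Ico] at ht
  rw [hconst t (by omega) (by omega), not_not]
  exact hp

def uCc (m : ℕ) (lam : ℕ → ℕ) (i : ℕ) : ℕ :=
  ((Finset.Ico i (2 * m + 1)).filter fun j => ¬ Even (lam j) ∧ ¬ Even (uCg m lam (j + 1))).card

lemma cC_step (m : ℕ) (lam : ℕ → ℕ) (i : ℕ) (hi : i < 2 * m + 1) :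
    uCc m lam i = uCc m lam (i + 1)
      + (if ¬ Even (lam i) ∧ ¬ Even (uCg m lam (i + 1)) then 1 else 0) :=
  filter_Ico_card_step (2 * m + 1) i _ hi

lemma cC_eq_half (m : ℕ) (lam : ℕ → ℕ) :
    ∀ d i, 2 * m + 1 ≤ i + d → uCc m lam i = uCg m lam i / 2 := by
  intro d
  induction d with
  | zero =>
    intro i hi
    unfold uCc uCg
    rw [Finset.Ico_eq_empty (by omega)]
    simp
  | succ d ih =>
    intro i hi
    by_cases hlt : i < 2 * m + 1
    · have ihc := ih (i + 1) (by omega)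
      rw [cC_step m lam i hlt, gC_step m lam i hlt, ihc]
      by_cases h1 : Even (lam i)
      · simp [h1]
      · by_cases h2 : Even (uCg m lam (i + 1))
        · have := Nat.even_iff.mp h2
          simp only [h1, h2, not_false_iff, not_true, and_false, if_false, if_true,
            true_and, and_true]
          omega
        · have := Nat.not_even_iff.mp h2
          simp only [h1, h2, not_false_iff, not_true, and_false, if_false, if_true,
            true_and, and_true]
          omega
    · unfold uCc uCg
      rw [Finset.Ico_eq_empty (by omega)]
      simp




/-- Let `λ = (λ 0 ≤ ⋯ ≤ λ (2m))` be a partition of `2n` in which every odd value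
occurs an even number of times.  Then the associated sequence `a` is a
distinguished type-C u-symbol of rank `n`, and every maximal constant run
`[k,l]` of `λ` with common value `p` is a ladder of `a` if `p` is even and a
staircase of `a` if `p` is odd. -/
theorem stmt14 (n m : ℕ) (hn : 1 ≤ n) (hm : 1 ≤ m) (lam : ℕ → ℕ)
    (hmono : ∀ i, i + 1 ≤ 2 * m → lam i ≤ lam (i + 1))
    (hsum : (∑ j ∈ Finset.range (2 * m + 1), lam j) = 2 * n)
    (hodd : ∀ p, Odd p →
      Even (((Finset.range (2 * m + 1)).filter fun j => lam j = p).card)) :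
    IsUSymC n m (aOfC m lam) ∧ DistC m (aOfC m lam) ∧
    ∀ k l p, k ≤ l → l ≤ 2 * m → (∀ j, k ≤ j → j ≤ l → lam j = p) →
      (0 < k → lam (k - 1) < p) → (l < 2 * m → p < lam (l + 1)) →
      (Even p → IsLadderC m (aOfC m lam) k l) ∧
      (Odd p → IsStairC m (aOfC m lam) k l) := by
  classical
  have hmono' := lam_mono m lam hmono
  -- the sum
  have hsuma : (∑ j ∈ Finset.range (2 * m + 1), aOfC m lam j) = n + 2 * m ^ 2 + m := by
    have hA : ∀ j ∈ Finset.range (2 * m + 1), aOfC m lam j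
        = j + lam j / 2 + (if ¬ Even (lam j) ∧ ¬ Even (uCg m lam (j + 1)) then 1 else 0) :=
      fun j _ => aOfC_eq m lam j
    rw [Finset.sum_congr rfl hA, Finset.sum_add_distrib, Finset.sum_add_distrib]
    have hS1 : (∑ j ∈ Finset.range (2 * m + 1), j) = 2 * m ^ 2 + m := by
      have h2 := Finset.sum_range_id_mul_two (2 * m + 1)
      have h3 : (2 * m + 1) * (2 * m + 1 - 1) = (2 * m ^ 2 + m) * 2 := by
        rw [Nat.add_sub_cancel]; ring
      exact Nat.eq_of_mul_eq_mul_right (by norm_num) (h2.trans h3)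
    have hS3 : (∑ j ∈ Finset.range (2 * m + 1),
        (if ¬ Even (lam j) ∧ ¬ Even (uCg m lam (j + 1)) then 1 else 0))
        = uCc m lam 0 := by
      unfold uCc
      rw [← Finset.range_eq_Ico, Finset.card_filter]
    have hg0 : (∑ j ∈ Finset.range (2 * m + 1), lam j)
        = 2 * (∑ j ∈ Finset.range (2 * m + 1), lam j / 2) + uCg m lam 0 := by
      unfold uCg
      rw [← Finset.range_eq_Ico, Finset.card_filter, Finset.mul_sum, ← Finset.sum_add_distrib]
      apply Finset.sum_congr rfl
      intro j _
      by_cases h : Even (lam j)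
      · have := Nat.even_iff.mp h; simp only [h, not_true, if_false, if_neg (not_not_intro h)]
        omega
      · have := Nat.not_even_iff.mp h; rw [if_pos h]
        omega
    have hge : Even (uCg m lam 0) := by
      have h := even_card_gt m lam hodd 0
      have hfe : ((Finset.Ico 0 (2 * m + 1)).filter fun j => ¬ Even (lam j))
          = (Finset.range (2 * m + 1)).filter fun j => ¬ Even (lam j) ∧ 0 < lam j := by
        rw [← Finset.range_eq_Ico]
        apply Finset.filter_congr
        intro x _
        constructor
        · intro hx
          refine ⟨hx, ?_⟩
          rcases Nat.eq_zero_or_pos (lam x) with h0 | h0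
          · exact absurd (h0 ▸ Even.zero) hx
          · exact h0
        · exact fun hx => hx.1
      unfold uCg
      rw [hfe]
      exact h
    have hc0 : uCc m lam 0 = uCg m lam 0 / 2 := cC_eq_half m lam (2 * m + 1) 0 (by omega)
    rw [hS1, hS3, hc0]
    have hkey : (∑ j ∈ Finset.range (2 * m + 1), lam j / 2) + uCg m lam 0 / 2 = n := by
      obtain ⟨r, hr⟩ := hge
      omega
    linarith [hkey]
  -- monotone
  have hdist : DistC m (aOfC m lam) := by
    intro i hi
    rcases Nat.lt_or_ge (lam i) (lam (i + 1)) with h | h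
    · have hub := aOfC_ub m lam i
      have hlb := aOfC_lb m lam (i + 1)
      omega
    · have heq : lam i = lam (i + 1) := le_antisymm (hmono i hi) h
      have e0 := aOfC_eq m lam i
      have e1 := aOfC_eq m lam (i + 1)
      by_cases hp : Even (lam i)
      · have hp1 : Even (lam (i + 1)) := heq ▸ hp
        rw [e0, e1, if_neg (fun hc => hc.1 hp), if_neg (fun hc => hc.1 hp1)]
        omega
      · have hp1 : ¬ Even (lam (i + 1)) := heq ▸ hp
        have hgc : uCg m lam (i + 1) = uCg m lam (i + 2) + 1 := by
          rw [gC_step m lam (i + 1) (by omega), if_pos hp1]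
        rcases Nat.even_or_odd (uCg m lam (i + 2)) with hge | hgo
        · have hg2 : uCg m lam (i + 2) % 2 = 0 := Nat.even_iff.mp hge
          have c0 : ¬ Even (lam i) ∧ ¬ Even (uCg m lam (i + 1)) :=
            ⟨hp, Nat.not_even_iff.mpr (by omega)⟩
          have c1 : ¬ (¬ Even (lam (i + 1)) ∧ ¬ Even (uCg m lam (i + 1 + 1))) := by
            intro hc
            exact hc.2 (by show Even (uCg m lam (i + 2)); exact hge)
          rw [e0, e1, if_pos c0, if_neg c1]
          omega
        · have hg2 : uCg m lam (i + 2) % 2 = 1 := Nat.odd_iff.mp hgo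
          have c0 : ¬ (¬ Even (lam i) ∧ ¬ Even (uCg m lam (i + 1))) := by
            intro hc
            exact hc.2 (Nat.even_iff.mpr (by omega))
          have c1 : ¬ Even (lam (i + 1)) ∧ ¬ Even (uCg m lam (i + 1 + 1)) :=
            ⟨hp1, by show ¬ Even (uCg m lam (i + 2)); exact Nat.not_even_iff.mpr hg2⟩
          rw [e0, e1, if_neg c0, if_pos c1]
          omega
  -- the step-2 condition
  have hstep2 : ∀ i, i + 2 ≤ 2 * m → aOfC m lam i + 2 ≤ aOfC m lam (i + 2) := by
    intro i hi
    have h01 : lam i ≤ lam (i + 1) := hmono i (by omega)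
    have h12 : lam (i + 1) ≤ lam (i + 2) := hmono (i + 1) (by omega)
    rcases Nat.lt_or_ge (lam i) (lam (i + 2)) with h | h
    · have hub := aOfC_ub m lam i
      have hlb := aOfC_lb m lam (i + 2)
      omega
    · have heq : lam (i + 2) = lam i := le_antisymm h (le_trans h01 h12)
      have heq1 : lam (i + 1) = lam i := le_antisymm (heq ▸ h12) h01
      have e0 := aOfC_eq m lam i
      have e2 := aOfC_eq m lam (i + 2)
      by_cases hp : Even (lam i)
      · have n0 : ¬ (¬ Even (lam i) ∧ ¬ Even (uCg m lam (i + 1))) := fun hc => hc.1 hp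
        have n2 : ¬ (¬ Even (lam (i + 2)) ∧ ¬ Even (uCg m lam (i + 2 + 1))) :=
          fun hc => hc.1 (heq ▸ hp)
        rw [e0, e2, if_neg n0, if_neg n2]
        omega
      · have hp1 : ¬ Even (lam (i + 1)) := by rw [heq1]; exact hp
        have hp2 : ¬ Even (lam (i + 2)) := by rw [heq]; exact hp
        have hgc1 : uCg m lam (i + 1) = uCg m lam (i + 2) + 1 := by
          rw [gC_step m lam (i + 1) (by omega), if_pos hp1]
        have hgc2 : uCg m lam (i + 2) = uCg m lam (i + 3) + 1 := by
          rw [gC_step m lam (i + 2) (by omega), if_pos hp2]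
        rcases Nat.even_or_odd (uCg m lam (i + 3)) with hge | hgo
        · have hg2 : uCg m lam (i + 3) % 2 = 0 := Nat.even_iff.mp hge
          have n0 : ¬ (¬ Even (lam i) ∧ ¬ Even (uCg m lam (i + 1))) := by
            intro hc
            exact hc.2 (Nat.even_iff.mpr (by omega))
          have n2 : ¬ (¬ Even (lam (i + 2)) ∧ ¬ Even (uCg m lam (i + 2 + 1))) := by
            intro hc
            exact hc.2 (by show Even (uCg m lam (i + 3)); exact hge)
          rw [e0, e2, if_neg n0, if_neg n2]
          omega
        · have hg2 : uCg m lam (i + 3) % 2 = 1 := Nat.odd_iff.mp hgo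
          have c0 : ¬ Even (lam i) ∧ ¬ Even (uCg m lam (i + 1)) :=
            ⟨hp, Nat.not_even_iff.mpr (by omega)⟩
          have c2 : ¬ Even (lam (i + 2)) ∧ ¬ Even (uCg m lam (i + 2 + 1)) :=
            ⟨hp2, by show ¬ Even (uCg m lam (i + 3)); exact Nat.not_even_iff.mpr hg2⟩
          rw [e0, e2, if_pos c0, if_pos c2]
          omega
  refine ⟨⟨?_, hstep2, hsuma⟩, hdist, ?_⟩
  · have := aOfC_lb m lam 1
    omega
  · intro k l p hkl hl hconst hlo hhi
    have hGe : Even (uCg m lam (l + 1)) :=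
      gC_tail_even m lam hodd hmono' l p hl (hconst l hkl le_rfl) hhi
    have hG : uCg m lam (l + 1) % 2 = 0 := Nat.even_iff.mp hGe
    constructor
    · -- ladder (p even)
      intro hpe
      have hp2 : p % 2 = 0 := Nat.even_iff.mp hpe
      refine ⟨hkl, hl, ?_, ?_, ?_⟩
      · intro j hj1 hj2
        have hcj := hconst j hj1 hj2
        have hck := hconst k le_rfl hkl
        have nj : ¬ (¬ Even (lam j) ∧ ¬ Even (uCg m lam (j + 1))) :=
          fun hc => hc.1 (by rw [hcj]; exact hpe)
        have nk : ¬ (¬ Even (lam k) ∧ ¬ Even (uCg m lam (k + 1))) :=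
          fun hc => hc.1 (by rw [hck]; exact hpe)
        rw [aOfC_eq m lam j, aOfC_eq m lam k, if_neg nj, if_neg nk]
        omega
      · intro hk0
        have hlo' := hlo hk0
        have hck := hconst k le_rfl hkl
        have nk : ¬ (¬ Even (lam k) ∧ ¬ Even (uCg m lam (k + 1))) :=
          fun hc => hc.1 (by rw [hck]; exact hpe)
        rw [aOfC_eq m lam (k - 1), aOfC_eq m lam k, if_neg nk]
        have hk' : k - 1 + 1 = k := by omega
        rw [hk']
        by_cases hq : Even (lam (k - 1))
        · have nq : ¬ (¬ Even (lam (k - 1)) ∧ ¬ Even (uCg m lam k)) := fun hc => hc.1 hq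
          rw [if_neg nq]
          have := Nat.even_iff.mp hq
          omega
        · have hgk : uCg m lam k = uCg m lam (l + 1) := gC_run_even m lam k l p hkl hl hconst hpe
          have nq : ¬ (¬ Even (lam (k - 1)) ∧ ¬ Even (uCg m lam k)) := by
            intro hc
            exact hc.2 (by rw [hgk]; exact hGe)
          rw [if_neg nq]
          have := Nat.not_even_iff.mp hq
          omega
      · intro hl2m
        have hhi' := hhi hl2m
        have hcl := hconst l hkl le_rfl
        have nl : ¬ (¬ Even (lam l) ∧ ¬ Even (uCg m lam (l + 1))) :=
          fun hc => hc.1 (by rw [hcl]; exact hpe)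
        rw [aOfC_eq m lam l, aOfC_eq m lam (l + 1), if_neg nl]
        by_cases hq : Even (lam (l + 1))
        · have nq : ¬ (¬ Even (lam (l + 1)) ∧ ¬ Even (uCg m lam (l + 1 + 1))) :=
            fun hc => hc.1 hq
          rw [if_neg nq]
          have := Nat.even_iff.mp hq
          omega
        · have hgl : uCg m lam (l + 1) = uCg m lam (l + 2) + 1 := by
            rw [gC_step m lam (l + 1) (by omega), if_pos hq]
          have hg2 : uCg m lam (l + 2) % 2 = 1 := by omega
          have cq : ¬ Even (lam (l + 1)) ∧ ¬ Even (uCg m lam (l + 1 + 1)) :=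
            ⟨hq, by show ¬ Even (uCg m lam (l + 2)); exact Nat.not_even_iff.mpr hg2⟩
          rw [if_pos cq]
          have := Nat.not_even_iff.mp hq
          omega
    · -- staircase (p odd)
      intro hpo
      have hp2 : p % 2 = 1 := Nat.odd_iff.mp hpo
      have hpne : ¬ Even p := Nat.not_even_iff.mpr hp2
      have hrun : ((Finset.range (2 * m + 1)).filter fun j => lam j = p)
          = Finset.Ico k (l + 1) := by
        ext j
        simp only [Finset.mem_filter, Finset.mem_range, Finset.mem_Ico]
        constructor
        · rintro ⟨hj, hjp⟩
          constructor
          · by_contra hc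
            push_neg at hc
            have h2 : lam j ≤ lam (k - 1) := hmono' j (k - 1) (by omega) (by omega)
            have h3 := hlo (by omega)
            omega
          · by_contra hc
            push_neg at hc
            have h2 : lam (l + 1) ≤ lam j := hmono' (l + 1) j (by omega) (by omega)
            have h3 := hhi (by omega)
            omega
        · rintro ⟨h1, h2⟩
          exact ⟨by omega, hconst j h1 (by omega)⟩
      have hcard : Even (l + 1 - k) := by
        have h := hodd p hpo
        rw [hrun, Nat.card_Ico] at h
        exact h
      have hlk : (l - k) % 2 = 1 := by
        rw [Nat.even_iff] at hcard
        omega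
      have gk : uCg m lam (k + 1) = (l - k) + uCg m lam (l + 1) :=
        gC_in_run m lam k l p hl hconst hpne k le_rfl hkl
      have ck : ¬ Even (lam k) ∧ ¬ Even (uCg m lam (k + 1)) :=
        ⟨by rw [hconst k le_rfl hkl]; exact hpne,
         by rw [gk]; exact Nat.not_even_iff.mpr (by omega)⟩
      refine ⟨hkl, hl, hlk, ?_, ?_, ?_⟩
      · intro j hj1 hj2
        have hcj := hconst j hj1 hj2
        have hck := hconst k le_rfl hkl
        have gj : uCg m lam (j + 1) = (l - j) + uCg m lam (l + 1) :=
          gC_in_run m lam k l p hl hconst hpne j hj1 hj2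
        rw [aOfC_eq m lam j, aOfC_eq m lam k, if_pos ck]
        rcases Nat.even_or_odd (l - j) with hlj | hlj
        · have hlj2 := Nat.even_iff.mp hlj
          have nj : ¬ (¬ Even (lam j) ∧ ¬ Even (uCg m lam (j + 1))) := by
            intro hc
            exact hc.2 (by rw [gj]; exact Nat.even_iff.mpr (by omega))
          rw [if_neg nj]
          omega
        · have hlj2 := Nat.odd_iff.mp hlj
          have cj : ¬ Even (lam j) ∧ ¬ Even (uCg m lam (j + 1)) :=
            ⟨by rw [hcj]; exact hpne, by rw [gj]; exact Nat.not_even_iff.mpr (by omega)⟩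
          rw [if_pos cj]
          omega
      · intro hk1
        have hck := hconst k le_rfl hkl
        have hub := aOfC_ub m lam (k - 2)
        have hmono2 : lam (k - 2) ≤ lam (k - 1) := hmono' (k - 2) (k - 1) (by omega) (by omega)
        have hlo' := hlo (by omega)
        rw [aOfC_eq m lam k, if_pos ck]
        omega
      · intro hl2
        have hcl := hconst l hkl le_rfl
        have nl : ¬ (¬ Even (lam l) ∧ ¬ Even (uCg m lam (l + 1))) := fun hc => hc.2 hGe
        rw [aOfC_eq m lam l, if_neg nl]
        have hlb := aOfC_lb m lam (l + 2)
        have h1 : lam (l + 1) ≤ lam (l + 2) := hmono' (l + 1) (l + 2) (by omega) (by omega)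
        have h2 := hhi (by omega)
        omega
end
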